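/- arXiv:2109.08816 — 8 statements merged into one kernel-verified Lean document; each statement's English description precedes it below -/
import Mathlib

section
/- For every x ∈ ℝ, ∫_{−π}^{π}∫_{−π}^{π} cos²θ₁·cos²θ₂·exp(i·x·sin(θ₁−θ₂)) dθ₁ dθ₂ = π²·(J₀(x) + J₂(x)/2). (This is the angular integral arising in the long-wavelength two-body graviton-gap computation.) -/
open intervalIntegral Real

/-- Bessel function of the first kind of integer order `m`:
`J_m(x) = (1/(2π)) ∫_{−π}^{π} e^{i(x sinθ − mθ)} dθ`. -/
noncomputable def besselJ (m : ℤ) (x : ℝ) : ℂ :=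
  (1 / (2 * Real.pi) : ℂ) *
    ∫ θ in (-Real.pi)..Real.pi, Complex.exp (Complex.I * ((x * Real.sin θ - m * θ : ℝ) : ℂ))

noncomputable section TBAhelpers
namespace TBA

def E (x : ℝ) (u : ℝ) : ℂ := Complex.exp (Complex.I * ((x * Real.sin u : ℝ) : ℂ))

lemma contE (x : ℝ) : Continuous (E x) := by unfold E; fun_prop

def A (x : ℝ) : ℂ := ∫ u in (-Real.pi)..Real.pi, ((Real.cos u ^ 2 : ℝ) : ℂ) * E x u
def B (x : ℝ) : ℂ := ∫ u in (-Real.pi)..Real.pi, ((Real.cos u * Real.sin u : ℝ) : ℂ) * E x u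
def C (x : ℝ) : ℂ := ∫ u in (-Real.pi)..Real.pi, ((Real.sin u ^ 2 : ℝ) : ℂ) * E x u

lemma hπ : (Real.pi : ℂ) ≠ 0 := by exact_mod_cast Real.pi_ne_zero

lemma intA (x : ℝ) (a b : ℝ) :
    IntervalIntegrable (fun u => ((Real.cos u ^ 2 : ℝ) : ℂ) * E x u) MeasureTheory.volume a b :=
  Continuous.intervalIntegrable (by unfold E; fun_prop) a b

lemma intB (x : ℝ) (a b : ℝ) :
    IntervalIntegrable (fun u => ((Real.cos u * Real.sin u : ℝ) : ℂ) * E x u)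
      MeasureTheory.volume a b :=
  Continuous.intervalIntegrable (by unfold E; fun_prop) a b

lemma intC (x : ℝ) (a b : ℝ) :
    IntervalIntegrable (fun u => ((Real.sin u ^ 2 : ℝ) : ℂ) * E x u) MeasureTheory.volume a b :=
  Continuous.intervalIntegrable (by unfold E; fun_prop) a b

/- ### Real trigonometric integrals -/

lemma hd2 (u : ℝ) : HasDerivAt (fun u : ℝ => 2*u) 2 u := by
  simpa using (hasDerivAt_id u).const_mul (2:ℝ)

lemma hd4 (u : ℝ) : HasDerivAt (fun u : ℝ => 4*u) 4 u := by
  simpa using (hasDerivAt_id u).const_mul (4:ℝ)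

lemma sin4pi : Real.sin (4*Real.pi) = 0 := by
  rw [show (4:ℝ)*Real.pi = 2*Real.pi + 2*Real.pi by ring, Real.sin_add, Real.sin_two_pi,
    Real.cos_two_pi]; ring

lemma int_cos4 : (∫ u in (-Real.pi)..Real.pi, Real.cos u ^ 4) = 3 * Real.pi / 4 := by
  have h : ∀ u ∈ Set.uIcc (-Real.pi) Real.pi,
      HasDerivAt (fun u : ℝ => (3/8)*u + (1/4)*Real.sin (2*u) + (1/32)*Real.sin (4*u))
        (Real.cos u ^ 4) u := by
    intro u _
    have h1 := (((hasDerivAt_id u).const_mul (3/8:ℝ)).add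
        (((hd2 u).sin).const_mul (1/4:ℝ))).add (((hd4 u).sin).const_mul (1/32:ℝ))
    have c4 : Real.cos (4*u) = 2*Real.cos (2*u)^2 - 1 := by
      rw [show (4:ℝ)*u = 2*(2*u) by ring]; exact Real.cos_two_mul _
    have hv : (3/8:ℝ) * 1 + (1/4) * (Real.cos (2*u) * 2) + (1/32) * (Real.cos (4*u) * 4)
        = Real.cos u ^ 4 := by
      rw [c4, Real.cos_two_mul]; ring
    rwa [hv] at h1
  rw [intervalIntegral.integral_eq_sub_of_hasDerivAt h
    ((Continuous.intervalIntegrable (by fun_prop) _ _))]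
  simp [Real.sin_two_pi, sin4pi, Real.sin_neg,
    show (2:ℝ)*(-Real.pi) = -(2*Real.pi) by ring, show (4:ℝ)*(-Real.pi) = -(4*Real.pi) by ring]
  ring

lemma int_cos3sin : (∫ u in (-Real.pi)..Real.pi, Real.cos u ^ 3 * Real.sin u) = 0 := by
  have h : ∀ u ∈ Set.uIcc (-Real.pi) Real.pi,
      HasDerivAt (fun u : ℝ => -(1/4)*Real.cos u ^ 4) (Real.cos u ^ 3 * Real.sin u) u := by
    intro u _
    have h1 := (((Real.hasDerivAt_cos u).pow 4)).const_mul (-(1/4):ℝ)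
    norm_num at h1
    have e1 : (fun u : ℝ => -(1/4)*Real.cos u ^ 4) = fun y => -(1 / 4 * Real.cos y ^ 4) := by
      funext y; ring
    have e2 : Real.cos u ^ 3 * Real.sin u = 1 / 4 * (4 * Real.cos u ^ 3 * Real.sin u) := by ring
    rw [e1, e2]; exact h1
  rw [intervalIntegral.integral_eq_sub_of_hasDerivAt h
    ((Continuous.intervalIntegrable (by fun_prop) _ _))]
  simp [Real.cos_neg]

lemma int_cos2sin2 :
    (∫ u in (-Real.pi)..Real.pi, Real.cos u ^ 2 * Real.sin u ^ 2) = Real.pi / 4 := by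
  have h : ∀ u ∈ Set.uIcc (-Real.pi) Real.pi,
      HasDerivAt (fun u : ℝ => (1/8)*u - (1/32)*Real.sin (4*u))
        (Real.cos u ^ 2 * Real.sin u ^ 2) u := by
    intro u _
    have h1 := (((hasDerivAt_id u).const_mul (1/8:ℝ)).sub
        (((hd4 u).sin).const_mul (1/32:ℝ)))
    have c4 : Real.cos (4*u) = 2*Real.cos (2*u)^2 - 1 := by
      rw [show (4:ℝ)*u = 2*(2*u) by ring]; exact Real.cos_two_mul _
    have hv : (1/8:ℝ) * 1 - (1/32) * (Real.cos (4*u) * 4) = Real.cos u ^ 2 * Real.sin u ^ 2 := by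
      rw [c4, Real.cos_two_mul]
      linear_combination (-(Real.cos u^2)) * Real.sin_sq_add_cos_sq u
    rwa [hv] at h1
  rw [intervalIntegral.integral_eq_sub_of_hasDerivAt h
    ((Continuous.intervalIntegrable (by fun_prop) _ _))]
  simp [sin4pi, Real.sin_neg, show (4:ℝ)*(-Real.pi) = -(4*Real.pi) by ring]
  ring

/- ### The vanishing odd integral -/

lemma intZ (x : ℝ) :
    (∫ u in (-Real.pi)..Real.pi, E x u * ((Real.sin (2*u) : ℝ) : ℂ)) = 0 := by
  set f : ℝ → ℂ := fun u => E x u * ((Real.sin (2*u) : ℝ) : ℂ) with hf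
  have hc : Continuous f := by rw [hf]; unfold E; fun_prop
  have hrefl : ∀ c v : ℝ, Real.sin c = 0 → Real.cos c = -1 → f (c - v) = - f v := by
    intro c v hs hcc
    have h1 : Real.sin (c - v) = Real.sin v := by rw [Real.sin_sub, hs, hcc]; ring
    have hs2 : Real.sin (2*c) = 0 := by rw [Real.sin_two_mul, hs]; ring
    have hc2 : Real.cos (2*c) = 1 := by rw [Real.cos_two_mul, hcc]; ring
    have h2 : Real.sin (2*(c - v)) = -Real.sin (2*v) := by
      rw [show 2*(c-v) = 2*c - 2*v by ring, Real.sin_sub, hs2, hc2]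
      ring
    rw [hf]
    simp only [E, h1, h2]
    push_cast
    ring
  have half : ∀ a b : ℝ, (∀ v : ℝ, f ((a + b) - v) = - f v) →
      (∫ u in a..b, f u) = 0 := by
    intro a b hab
    have k1 : (∫ v in a..b, f ((a+b) - v)) = ∫ u in a..b, f u := by
      have := intervalIntegral.integral_comp_sub_left f (a+b) (a := a) (b := b)
      simpa using this
    have k2 : (∫ v in a..b, f ((a+b) - v)) = -∫ u in a..b, f u := by
      simp_rw [hab]
      exact intervalIntegral.integral_neg
    have : (∫ u in a..b, f u) + (∫ u in a..b, f u) = 0 := by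
      nth_rewrite 1 [← k1]; rw [k2]; ring
    exact add_self_eq_zero.mp this
  have hz1 : (∫ u in (0:ℝ)..Real.pi, f u) = 0 := by
    apply half
    intro v
    have := hrefl Real.pi v Real.sin_pi Real.cos_pi
    simpa using this
  have hz2 : (∫ u in (-Real.pi)..(0:ℝ), f u) = 0 := by
    apply half
    intro v
    have := hrefl (-Real.pi) v (by simp) (by simp)
    simpa using this
  rw [← intervalIntegral.integral_add_adjacent_intervals
    (hc.intervalIntegrable (-Real.pi) 0) (hc.intervalIntegrable 0 Real.pi), hz1, hz2, add_zero]

/- ### Bessel function identities -/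

lemma twopi_J0 (x : ℝ) : (2 * (Real.pi : ℂ)) * besselJ 0 x = A x + C x := by
  have h1 : (2 * (Real.pi : ℂ)) * besselJ 0 x = ∫ u in (-Real.pi)..Real.pi, E x u := by
    unfold besselJ E
    norm_num
    rw [← mul_assoc]
    field_simp
  rw [h1]
  unfold A C
  rw [← intervalIntegral.integral_add (intA x _ _) (intC x _ _)]
  apply intervalIntegral.integral_congr
  intro u _
  have : ((Real.cos u ^ 2 : ℝ) : ℂ) + ((Real.sin u ^ 2 : ℝ) : ℂ) = 1 := by
    push_cast
    exact_mod_cast congrArg (Complex.ofReal) (by rw [add_comm]; exact Real.sin_sq_add_cos_sq u)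
  calc E x u = (((Real.cos u ^ 2 : ℝ) : ℂ) + ((Real.sin u ^ 2 : ℝ) : ℂ)) * E x u := by
        rw [this, one_mul]
    _ = ((Real.cos u ^ 2 : ℝ) : ℂ) * E x u + ((Real.sin u ^ 2 : ℝ) : ℂ) * E x u := by ring

lemma hpt2 (x u : ℝ) :
    Complex.exp (Complex.I * ((x * Real.sin u - 2 * u : ℝ) : ℂ))
      = E x u * ((Real.cos (2*u) : ℝ) : ℂ) - (E x u * ((Real.sin (2*u) : ℝ) : ℂ)) * Complex.I := by
  have h : Complex.I * ((x * Real.sin u - 2 * u : ℝ) : ℂ)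
      = Complex.I * ((x * Real.sin u : ℝ) : ℂ) + ((-(2*u) : ℝ) : ℂ) * Complex.I := by
    push_cast; ring
  rw [h, Complex.exp_add, Complex.exp_mul_I, ← Complex.ofReal_cos, ← Complex.ofReal_sin,
    Real.cos_neg, Real.sin_neg]
  unfold E
  push_cast
  ring

lemma twopi_J2 (x : ℝ) : (2 * (Real.pi : ℂ)) * besselJ 2 x = A x - C x := by
  have h1 : (2 * (Real.pi : ℂ)) * besselJ 2 x
      = ∫ u in (-Real.pi)..Real.pi,
          Complex.exp (Complex.I * ((x * Real.sin u - 2 * u : ℝ) : ℂ)) := by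
    unfold besselJ
    norm_num
    rw [← mul_assoc]
    field_simp
  rw [h1]
  have h2 : (∫ u in (-Real.pi)..Real.pi,
        Complex.exp (Complex.I * ((x * Real.sin u - 2 * u : ℝ) : ℂ)))
      = (∫ u in (-Real.pi)..Real.pi, E x u * ((Real.cos (2*u) : ℝ) : ℂ))
        - (∫ u in (-Real.pi)..Real.pi, E x u * ((Real.sin (2*u) : ℝ) : ℂ)) * Complex.I := by
    rw [← intervalIntegral.integral_mul_const, ← intervalIntegral.integral_sub
      (Continuous.intervalIntegrable (by unfold E; fun_prop) _ _)
      (Continuous.intervalIntegrable (by unfold E; fun_prop) _ _)]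
    exact intervalIntegral.integral_congr fun u _ => hpt2 x u
  rw [h2, intZ x, zero_mul, sub_zero]
  unfold A C
  rw [← intervalIntegral.integral_sub (intA x _ _) (intC x _ _)]
  apply intervalIntegral.integral_congr
  intro u _
  simp only [Real.cos_two_mul]
  push_cast
  linear_combination (E x u) * Complex.sin_sq_add_cos_sq (u : ℂ)

/- ### The inner integral -/

lemma inner_eq (x θ₁ : ℝ) :
    (∫ θ₂ in (-Real.pi)..Real.pi,
        ((Real.cos θ₂ ^ 2 : ℝ) : ℂ) * Complex.exp (Complex.I * ((x * Real.sin (θ₁ - θ₂) : ℝ) : ℂ)))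
      = ((Real.cos θ₁ ^ 2 : ℝ) : ℂ) * A x + ((2 * Real.cos θ₁ * Real.sin θ₁ : ℝ) : ℂ) * B x
        + ((Real.sin θ₁ ^ 2 : ℝ) : ℂ) * C x := by
  set g : ℝ → ℂ := fun u => ((Real.cos (θ₁ - u) ^ 2 : ℝ) : ℂ) * E x u with hg
  have hper : Function.Periodic g (2 * Real.pi) := by
    intro u
    simp only [hg, E]
    rw [show θ₁ - (u + 2*Real.pi) = (θ₁ - u) - 2*Real.pi by ring, Real.cos_sub_two_pi,
      Real.sin_add_two_pi]
  have h1 : (∫ θ₂ in (-Real.pi)..Real.pi,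
        ((Real.cos θ₂ ^ 2 : ℝ) : ℂ) * Complex.exp (Complex.I * ((x * Real.sin (θ₁ - θ₂) : ℝ) : ℂ)))
      = ∫ θ₂ in (-Real.pi)..Real.pi, g (θ₁ - θ₂) := by
    apply intervalIntegral.integral_congr
    intro θ₂ _
    simp only [hg, E, sub_sub_cancel]
  have h2 : (∫ θ₂ in (-Real.pi)..Real.pi, g (θ₁ - θ₂))
      = ∫ u in (θ₁ - Real.pi)..(θ₁ + Real.pi), g u := by
    simpa [sub_neg_eq_add] using intervalIntegral.integral_comp_sub_left g θ₁
      (a := -Real.pi) (b := Real.pi)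
  have h3 : (∫ u in (θ₁ - Real.pi)..(θ₁ + Real.pi), g u) = ∫ u in (-Real.pi)..Real.pi, g u := by
    have h := hper.intervalIntegral_add_eq (θ₁ - Real.pi) (-Real.pi)
    rw [show θ₁ - Real.pi + 2*Real.pi = θ₁ + Real.pi by ring,
      show -Real.pi + 2*Real.pi = Real.pi by ring] at h
    exact h
  rw [h1, h2, h3]
  have hsplit : Set.EqOn g (fun u =>
      ((Real.cos θ₁ ^ 2 : ℝ) : ℂ) * (((Real.cos u ^ 2 : ℝ) : ℂ) * E x u)
        + ((2 * Real.cos θ₁ * Real.sin θ₁ : ℝ) : ℂ) * (((Real.cos u * Real.sin u : ℝ) : ℂ) * E x u)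
        + ((Real.sin θ₁ ^ 2 : ℝ) : ℂ) * (((Real.sin u ^ 2 : ℝ) : ℂ) * E x u))
      (Set.uIcc (-Real.pi) Real.pi) := by
    intro u _
    simp only [hg]
    rw [Real.cos_sub]
    push_cast
    ring
  rw [intervalIntegral.integral_congr hsplit,
    intervalIntegral.integral_add (((intA x _ _).const_mul _).add ((intB x _ _).const_mul _))
      ((intC x _ _).const_mul _),
    intervalIntegral.integral_add ((intA x _ _).const_mul _) ((intB x _ _).const_mul _),
    intervalIntegral.integral_const_mul, intervalIntegral.integral_const_mul,
    intervalIntegral.integral_const_mul]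
  rfl

end TBA
end TBAhelpers

open TBA in
/-- `∫_{−π}^{π}∫_{−π}^{π} cos²θ₁·cos²θ₂·exp(i·x·sin(θ₁−θ₂)) dθ₁ dθ₂
= π²·(J₀(x) + J₂(x)/2)`. -/
theorem twobody_angular_integral (x : ℝ) :
    (∫ θ₁ in (-Real.pi)..Real.pi, ∫ θ₂ in (-Real.pi)..Real.pi,
        ((Real.cos θ₁ ^ 2 * Real.cos θ₂ ^ 2 : ℝ) : ℂ) *
          Complex.exp (Complex.I * ((x * Real.sin (θ₁ - θ₂) : ℝ) : ℂ)))
      = (Real.pi : ℂ) ^ 2 * (besselJ 0 x + besselJ 2 x / 2) := by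
  have houter : ∀ θ₁ : ℝ, (∫ θ₂ in (-Real.pi)..Real.pi,
        ((Real.cos θ₁ ^ 2 * Real.cos θ₂ ^ 2 : ℝ) : ℂ) *
          Complex.exp (Complex.I * ((x * Real.sin (θ₁ - θ₂) : ℝ) : ℂ)))
      = ((Real.cos θ₁ ^ 4 : ℝ) : ℂ) * A x + ((2 * Real.cos θ₁ ^ 3 * Real.sin θ₁ : ℝ) : ℂ) * B x
        + ((Real.cos θ₁ ^ 2 * Real.sin θ₁ ^ 2 : ℝ) : ℂ) * C x := by
    intro θ₁
    have step : (∫ θ₂ in (-Real.pi)..Real.pi,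
        ((Real.cos θ₁ ^ 2 * Real.cos θ₂ ^ 2 : ℝ) : ℂ) *
          Complex.exp (Complex.I * ((x * Real.sin (θ₁ - θ₂) : ℝ) : ℂ)))
        = ((Real.cos θ₁ ^ 2 : ℝ) : ℂ) * ∫ θ₂ in (-Real.pi)..Real.pi,
            ((Real.cos θ₂ ^ 2 : ℝ) : ℂ) *
              Complex.exp (Complex.I * ((x * Real.sin (θ₁ - θ₂) : ℝ) : ℂ)) := by
      rw [← intervalIntegral.integral_const_mul]
      apply intervalIntegral.integral_congr
      intro θ₂ _
      push_cast
      ring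
    rw [step, inner_eq]
    push_cast
    ring
  rw [intervalIntegral.integral_congr (fun θ₁ _ => houter θ₁)]
  have c1 : Continuous fun θ₁ : ℝ => ((Real.cos θ₁ ^ 4 : ℝ) : ℂ) * A x := by fun_prop
  have c2 : Continuous fun θ₁ : ℝ => ((2 * Real.cos θ₁ ^ 3 * Real.sin θ₁ : ℝ) : ℂ) * B x := by
    fun_prop
  have c3 : Continuous fun θ₁ : ℝ => ((Real.cos θ₁ ^ 2 * Real.sin θ₁ ^ 2 : ℝ) : ℂ) * C x := by
    fun_prop
  rw [intervalIntegral.integral_add ((c1.intervalIntegrable _ _).add (c2.intervalIntegrable _ _))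
      (c3.intervalIntegrable _ _),
    intervalIntegral.integral_add (c1.intervalIntegrable _ _) (c2.intervalIntegrable _ _),
    intervalIntegral.integral_mul_const, intervalIntegral.integral_mul_const,
    intervalIntegral.integral_mul_const, intervalIntegral.integral_ofReal,
    intervalIntegral.integral_ofReal, intervalIntegral.integral_ofReal]
  have e2 : (∫ θ₁ in (-Real.pi)..Real.pi, 2 * Real.cos θ₁ ^ 3 * Real.sin θ₁) = 0 := by
    rw [show (fun θ₁ : ℝ => 2 * Real.cos θ₁ ^ 3 * Real.sin θ₁)
        = fun θ₁ : ℝ => (2:ℝ) * (Real.cos θ₁ ^ 3 * Real.sin θ₁) from funext fun θ₁ => by ring]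
    rw [intervalIntegral.integral_const_mul, int_cos3sin, mul_zero]
  rw [int_cos4, e2, int_cos2sin2]
  have h0 := twopi_J0 x
  have h2 := twopi_J2 x
  push_cast
  linear_combination (-(Real.pi : ℂ)/2) * h0 + (-(Real.pi : ℂ)/4) * h2
end

section
/- For all a, b ∈ ℝ, the four-fold angular integral ∫_{[−π,π]⁴} exp(−(i/2)[a·sin(θ₁−θ₃) + b·sin(θ₂−θ₄)])·cos²θ₁·cos²θ₃ dθ₁ dθ₂ dθ₃ dθ₄ equals 4π⁴·[J₀(a/2)·J₀(b/2) + (1/2)·J₂(a/2)·J₀(b/2)]. (This is the diagonal, Δn = 0, angular integral Θ⁽⁰⁾ of the three-body graviton-gap computation, with the radial weights stripped off.) -/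
open intervalIntegral Real

namespace ThreeBodyAux

open Complex

/-- Flipping the integration variable on a symmetric interval. -/
lemma flip_int (f : ℝ → ℂ) :
    (∫ θ in (-Real.pi)..Real.pi, f (-θ)) = ∫ θ in (-Real.pi)..Real.pi, f θ := by
  rw [intervalIntegral.integral_comp_neg, neg_neg]

/-- Shift-invariance for `2π`-periodic integrands. -/
lemma shift_int (f : ℝ → ℂ) (hf : Function.Periodic f (2 * Real.pi)) (x : ℝ) :
    (∫ θ in (-Real.pi)..Real.pi, f (x - θ)) = ∫ θ in (-Real.pi)..Real.pi, f θ := by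
  rw [intervalIntegral.integral_comp_sub_left]
  have h := hf.intervalIntegral_add_eq (x - Real.pi) (-Real.pi)
  rw [show x - Real.pi + 2 * Real.pi = x - -Real.pi by ring,
    show -Real.pi + 2 * Real.pi = Real.pi by ring] at h
  exact h

lemma besselJ_zero_int (x : ℝ) :
    (∫ θ in (-Real.pi)..Real.pi, Complex.exp (Complex.I * ((x * Real.sin θ : ℝ) : ℂ)))
      = 2 * Real.pi * besselJ 0 x := by
  rw [besselJ]
  have hπ : (Real.pi : ℂ) ≠ 0 := by exact_mod_cast Real.pi_ne_zero
  have h : ∀ θ : ℝ, ((x * Real.sin θ - ((0 : ℤ) : ℝ) * θ : ℝ) : ℂ)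
      = ((x * Real.sin θ : ℝ) : ℂ) := by intro θ; norm_num
  simp only [Int.cast_zero, zero_mul, sub_zero]
  field_simp

lemma sin2_vanish (c : ℝ) :
    (∫ θ in (-Real.pi)..Real.pi,
      Complex.exp (Complex.I * ((c * Real.sin θ : ℝ) : ℂ)) * ((Real.sin (2 * θ) : ℝ) : ℂ)) = 0 := by
  set g : ℝ → ℂ := fun θ =>
    Complex.exp (Complex.I * ((c * Real.sin θ : ℝ) : ℂ)) * ((Real.sin (2 * θ) : ℝ) : ℂ) with hg
  set S : ℂ := ∫ θ in (-Real.pi)..Real.pi, g θ with hS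
  have key : ∀ θ : ℝ, g (-θ)
      = -(Complex.exp (-(Complex.I * ((c * Real.sin θ : ℝ) : ℂ))) * ((Real.sin (2 * θ) : ℝ) : ℂ)) := by
    intro θ
    simp only [hg]
    have h1 : (Complex.I * ((c * Real.sin (-θ) : ℝ) : ℂ))
        = -(Complex.I * ((c * Real.sin θ : ℝ) : ℂ)) := by
      push_cast [Real.sin_neg]; ring
    rw [h1, show 2 * -θ = -(2 * θ) by ring, Real.sin_neg]
    push_cast
    ring
  have hA : (∫ θ in (-Real.pi)..Real.pi,
      Complex.exp (-(Complex.I * ((c * Real.sin θ : ℝ) : ℂ))) * ((Real.sin (2 * θ) : ℝ) : ℂ)) = -S := by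
    have h1 := flip_int g
    rw [intervalIntegral.integral_congr (g := fun θ =>
      -(Complex.exp (-(Complex.I * ((c * Real.sin θ : ℝ) : ℂ))) * ((Real.sin (2 * θ) : ℝ) : ℂ)))
      (fun θ _ => key θ), intervalIntegral.integral_neg] at h1
    rw [← hS] at h1
    linear_combination -h1
  have hper : Function.Periodic g (2 * Real.pi) := by
    intro θ
    simp only [hg]
    rw [Real.sin_add_two_pi, show 2 * (θ + 2 * Real.pi) = (2 * θ + 2 * Real.pi) + 2 * Real.pi by ring,
      Real.sin_add_two_pi, Real.sin_add_two_pi]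
  have hB : (∫ θ in (-Real.pi)..Real.pi,
      Complex.exp (-(Complex.I * ((c * Real.sin θ : ℝ) : ℂ))) * ((Real.sin (2 * θ) : ℝ) : ℂ)) = S := by
    have e1 : S = ∫ θ in (0:ℝ)..(2 * Real.pi), g θ := by
      have h := hper.intervalIntegral_add_eq (-Real.pi) 0
      rw [show -Real.pi + 2 * Real.pi = Real.pi by ring, zero_add] at h
      exact h
    have e2 : (∫ θ in (-Real.pi)..Real.pi, g (θ + Real.pi)) = ∫ θ in (0:ℝ)..(2 * Real.pi), g θ := by
      rw [intervalIntegral.integral_comp_add_right,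
        show -Real.pi + Real.pi = (0:ℝ) by ring, show Real.pi + Real.pi = 2 * Real.pi by ring]
    have key2 : ∀ θ : ℝ, g (θ + Real.pi)
        = Complex.exp (-(Complex.I * ((c * Real.sin θ : ℝ) : ℂ))) * ((Real.sin (2 * θ) : ℝ) : ℂ) := by
      intro θ
      simp only [hg]
      rw [Real.sin_add_pi, show 2 * (θ + Real.pi) = 2 * θ + 2 * Real.pi by ring,
        Real.sin_add_two_pi,
        show (Complex.I * ((c * -Real.sin θ : ℝ) : ℂ)) = -(Complex.I * ((c * Real.sin θ : ℝ) : ℂ)) by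
          push_cast; ring]
    rw [← intervalIntegral.integral_congr (fun θ _ => key2 θ), e2, ← e1]
  have h2S : S = -S := hB.symm.trans hA
  have : (2 : ℂ) * S = 0 := by linear_combination h2S
  have hS0 : S = 0 := by
    rcases mul_eq_zero.mp this with h | h
    · norm_num at h
    · exact h
  exact hS0

lemma besselJ_two_int (x : ℝ) :
    (∫ θ in (-Real.pi)..Real.pi,
      Complex.exp (Complex.I * ((x * Real.sin θ : ℝ) : ℂ)) * ((Real.cos (2 * θ) : ℝ) : ℂ))
      = 2 * Real.pi * besselJ 2 x := by
  have hπ : (Real.pi : ℂ) ≠ 0 := by exact_mod_cast Real.pi_ne_zero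
  have key : ∀ θ : ℝ, Complex.exp (Complex.I * ((x * Real.sin θ - ((2:ℤ) : ℝ) * θ : ℝ) : ℂ))
      = Complex.exp (Complex.I * ((x * Real.sin θ : ℝ) : ℂ)) * ((Real.cos (2 * θ) : ℝ) : ℂ)
        - (Complex.exp (Complex.I * ((x * Real.sin θ : ℝ) : ℂ)) * ((Real.sin (2 * θ) : ℝ) : ℂ)) * Complex.I := by
    intro θ
    rw [show (Complex.I * ((x * Real.sin θ - ((2:ℤ) : ℝ) * θ : ℝ) : ℂ))
        = Complex.I * ((x * Real.sin θ : ℝ) : ℂ) + ((-(2 * θ) : ℝ) : ℂ) * Complex.I by push_cast; ring,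
      Complex.exp_add, Complex.exp_mul_I, ← Complex.ofReal_cos, ← Complex.ofReal_sin,
      Real.cos_neg, Real.sin_neg]
    push_cast
    ring
  have hc1 : Continuous fun θ : ℝ => Complex.exp (Complex.I * ((x * Real.sin θ : ℝ) : ℂ)) := by
    fun_prop
  have hi1 : IntervalIntegrable
      (fun θ : ℝ => Complex.exp (Complex.I * ((x * Real.sin θ : ℝ) : ℂ)) * ((Real.cos (2 * θ) : ℝ) : ℂ))
      MeasureTheory.volume (-Real.pi) Real.pi := by
    apply Continuous.intervalIntegrable; fun_prop
  have hi2 : IntervalIntegrable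
      (fun θ : ℝ => (Complex.exp (Complex.I * ((x * Real.sin θ : ℝ) : ℂ)) * ((Real.sin (2 * θ) : ℝ) : ℂ)) * Complex.I)
      MeasureTheory.volume (-Real.pi) Real.pi := by
    apply Continuous.intervalIntegrable; fun_prop
  rw [besselJ]
  have hrw : (∫ θ in (-Real.pi)..Real.pi,
      Complex.exp (Complex.I * ((x * Real.sin θ - ((2:ℤ) : ℝ) * θ : ℝ) : ℂ)))
      = ∫ θ in (-Real.pi)..Real.pi,
        (Complex.exp (Complex.I * ((x * Real.sin θ : ℝ) : ℂ)) * ((Real.cos (2 * θ) : ℝ) : ℂ)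
          - (Complex.exp (Complex.I * ((x * Real.sin θ : ℝ) : ℂ)) * ((Real.sin (2 * θ) : ℝ) : ℂ)) * Complex.I) :=
    intervalIntegral.integral_congr (fun θ _ => key θ)
  rw [hrw, intervalIntegral.integral_sub hi1 hi2, intervalIntegral.integral_mul_const,
    sin2_vanish x, zero_mul, sub_zero]
  field_simp

/-- `∫ exp(-(i/2) a sin θ) dθ = 2π J₀(a/2)`. -/
lemma T0 (a : ℝ) :
    (∫ θ in (-Real.pi)..Real.pi, Complex.exp (-(Complex.I / 2) * ((a * Real.sin θ : ℝ) : ℂ)))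
      = 2 * Real.pi * besselJ 0 (a / 2) := by
  rw [← besselJ_zero_int (a / 2),
    ← flip_int (fun θ => Complex.exp (Complex.I * ((a / 2 * Real.sin θ : ℝ) : ℂ)))]
  apply intervalIntegral.integral_congr
  intro θ _
  show Complex.exp (-(Complex.I / 2) * ((a * Real.sin θ : ℝ) : ℂ))
      = Complex.exp (Complex.I * ((a / 2 * Real.sin (-θ) : ℝ) : ℂ))
  congr 1
  push_cast [Real.sin_neg]
  ring

/-- `∫ exp(-(i/2) a sin θ) cos 2θ dθ = 2π J₂(a/2)`. -/
lemma T2c (a : ℝ) :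
    (∫ θ in (-Real.pi)..Real.pi,
      Complex.exp (-(Complex.I / 2) * ((a * Real.sin θ : ℝ) : ℂ)) * ((Real.cos (2 * θ) : ℝ) : ℂ))
      = 2 * Real.pi * besselJ 2 (a / 2) := by
  rw [← besselJ_two_int (a / 2),
    ← flip_int (fun θ => Complex.exp (Complex.I * ((a / 2 * Real.sin θ : ℝ) : ℂ)) * ((Real.cos (2 * θ) : ℝ) : ℂ))]
  apply intervalIntegral.integral_congr
  intro θ _
  show Complex.exp (-(Complex.I / 2) * ((a * Real.sin θ : ℝ) : ℂ)) * ((Real.cos (2 * θ) : ℝ) : ℂ)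
      = Complex.exp (Complex.I * ((a / 2 * Real.sin (-θ) : ℝ) : ℂ)) * ((Real.cos (2 * -θ) : ℝ) : ℂ)
  rw [show 2 * -θ = -(2 * θ) by ring, Real.cos_neg]
  congr 2
  push_cast [Real.sin_neg]
  ring

/-- `∫ exp(-(i/2) a sin θ) sin 2θ dθ = 0`. -/
lemma T2s (a : ℝ) :
    (∫ θ in (-Real.pi)..Real.pi,
      Complex.exp (-(Complex.I / 2) * ((a * Real.sin θ : ℝ) : ℂ)) * ((Real.sin (2 * θ) : ℝ) : ℂ)) = 0 := by
  have key : ∀ θ : ℝ,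
      -(Complex.exp (-(Complex.I / 2) * ((a * Real.sin θ : ℝ) : ℂ)) * ((Real.sin (2 * θ) : ℝ) : ℂ))
      = (fun θ => Complex.exp (Complex.I * ((a / 2 * Real.sin θ : ℝ) : ℂ)) * ((Real.sin (2 * θ) : ℝ) : ℂ)) (-θ) := by
    intro θ
    show _ = Complex.exp (Complex.I * ((a / 2 * Real.sin (-θ) : ℝ) : ℂ)) * ((Real.sin (2 * -θ) : ℝ) : ℂ)
    have h1 : (Complex.I * ((a / 2 * Real.sin (-θ) : ℝ) : ℂ))
        = -(Complex.I / 2) * ((a * Real.sin θ : ℝ) : ℂ) := by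
      push_cast [Real.sin_neg]; ring
    rw [h1, show 2 * -θ = -(2 * θ) by ring, Real.sin_neg]
    push_cast
    ring
  have h1 : (∫ θ in (-Real.pi)..Real.pi,
      -(Complex.exp (-(Complex.I / 2) * ((a * Real.sin θ : ℝ) : ℂ)) * ((Real.sin (2 * θ) : ℝ) : ℂ))) = 0 := by
    rw [intervalIntegral.integral_congr (fun θ _ => key θ),
      flip_int (fun θ => Complex.exp (Complex.I * ((a / 2 * Real.sin θ : ℝ) : ℂ)) * ((Real.sin (2 * θ) : ℝ) : ℂ)),
      sin2_vanish (a / 2)]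
  rw [intervalIntegral.integral_neg] at h1
  exact neg_eq_zero.mp h1

/-- The key `a`-dependent inner integral. -/
lemma Fa (a x : ℝ) :
    (∫ θ in (-Real.pi)..Real.pi,
      Complex.exp (-(Complex.I / 2) * ((a * Real.sin (x - θ) : ℝ) : ℂ)) * ((Real.cos θ ^ 2 : ℝ) : ℂ))
      = (Real.pi : ℂ) * besselJ 0 (a / 2)
        + (Real.pi : ℂ) * ((Real.cos (2 * x) : ℝ) : ℂ) * besselJ 2 (a / 2) := by
  set F : ℝ → ℂ := fun u =>
    Complex.exp (-(Complex.I / 2) * ((a * Real.sin u : ℝ) : ℂ)) * ((Real.cos (x - u) ^ 2 : ℝ) : ℂ) with hF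
  have hper : Function.Periodic F (2 * Real.pi) := by
    intro u
    simp only [hF]
    rw [Real.sin_add_two_pi, show x - (u + 2 * Real.pi) = (x - u) - 2 * Real.pi by ring,
      Real.cos_sub_two_pi]
  have hcongr : ∀ θ : ℝ,
      Complex.exp (-(Complex.I / 2) * ((a * Real.sin (x - θ) : ℝ) : ℂ)) * ((Real.cos θ ^ 2 : ℝ) : ℂ)
        = F (x - θ) := by
    intro θ
    simp only [hF]
    rw [show x - (x - θ) = θ by ring]
  rw [intervalIntegral.integral_congr (fun θ _ => hcongr θ), shift_int F hper x]
  have hcos : ∀ u : ℝ, Real.cos (x - u) ^ 2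
      = 1 / 2 + Real.cos (2 * x) / 2 * Real.cos (2 * u) + Real.sin (2 * x) / 2 * Real.sin (2 * u) := by
    intro u
    rw [Real.cos_sq, show 2 * (x - u) = 2 * x - 2 * u by ring, Real.cos_sub]
    ring
  have hsplit : ∀ u : ℝ, F u
      = (1 / 2 : ℂ) * Complex.exp (-(Complex.I / 2) * ((a * Real.sin u : ℝ) : ℂ))
        + (((Real.cos (2 * x) : ℝ) : ℂ) / 2) *
            (Complex.exp (-(Complex.I / 2) * ((a * Real.sin u : ℝ) : ℂ)) * ((Real.cos (2 * u) : ℝ) : ℂ))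
        + (((Real.sin (2 * x) : ℝ) : ℂ) / 2) *
            (Complex.exp (-(Complex.I / 2) * ((a * Real.sin u : ℝ) : ℂ)) * ((Real.sin (2 * u) : ℝ) : ℂ)) := by
    intro u
    simp only [hF]
    rw [hcos u]
    push_cast
    ring
  have hiexp : IntervalIntegrable (fun u : ℝ => Complex.exp (-(Complex.I / 2) * ((a * Real.sin u : ℝ) : ℂ)))
      MeasureTheory.volume (-Real.pi) Real.pi := by
    apply Continuous.intervalIntegrable; fun_prop
  have hicos : IntervalIntegrable (fun u : ℝ =>
      Complex.exp (-(Complex.I / 2) * ((a * Real.sin u : ℝ) : ℂ)) * ((Real.cos (2 * u) : ℝ) : ℂ))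
      MeasureTheory.volume (-Real.pi) Real.pi := by
    apply Continuous.intervalIntegrable; fun_prop
  have hisin : IntervalIntegrable (fun u : ℝ =>
      Complex.exp (-(Complex.I / 2) * ((a * Real.sin u : ℝ) : ℂ)) * ((Real.sin (2 * u) : ℝ) : ℂ))
      MeasureTheory.volume (-Real.pi) Real.pi := by
    apply Continuous.intervalIntegrable; fun_prop
  rw [intervalIntegral.integral_congr (fun u _ => hsplit u),
    intervalIntegral.integral_add ((hiexp.const_mul _).add (hicos.const_mul _)) (hisin.const_mul _),
    intervalIntegral.integral_add (hiexp.const_mul _) (hicos.const_mul _),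
    intervalIntegral.integral_const_mul, intervalIntegral.integral_const_mul,
    intervalIntegral.integral_const_mul, T0, T2c, T2s]
  push_cast
  ring

lemma moment0 : (∫ θ in (-Real.pi)..Real.pi, ((Real.cos θ ^ 2 : ℝ) : ℂ)) = (Real.pi : ℂ) := by
  rw [intervalIntegral.integral_ofReal, integral_cos_sq]
  norm_num [Real.sin_pi, Real.sin_neg, Real.cos_neg]

lemma moment2 : (∫ θ in (-Real.pi)..Real.pi, ((Real.cos θ ^ 2 * Real.cos (2 * θ) : ℝ) : ℂ))
    = (Real.pi : ℂ) / 2 := by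
  rw [intervalIntegral.integral_ofReal]
  have hid : ∀ θ : ℝ, Real.cos θ ^ 2 * Real.cos (2 * θ)
      = 1 / 4 + Real.cos (2 * θ) / 2 + Real.cos (4 * θ) / 4 := by
    intro θ
    have h2 := Real.cos_two_mul θ
    have h4 : Real.cos (4 * θ) = 2 * Real.cos (2 * θ) ^ 2 - 1 := by
      rw [show (4 : ℝ) * θ = 2 * (2 * θ) by ring, Real.cos_two_mul]
    rw [h4, h2]
    ring
  have hc2 : (∫ θ in (-Real.pi)..Real.pi, Real.cos (2 * θ)) = 0 := by
    rw [intervalIntegral.integral_comp_mul_left Real.cos (by norm_num : (2:ℝ) ≠ 0), integral_cos]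
    rw [show (2:ℝ) * Real.pi = 2 * Real.pi by ring]
    simp [Real.sin_neg, Real.sin_two_pi]
  have hc4 : (∫ θ in (-Real.pi)..Real.pi, Real.cos (4 * θ)) = 0 := by
    rw [intervalIntegral.integral_comp_mul_left Real.cos (by norm_num : (4:ℝ) ≠ 0), integral_cos]
    have : Real.sin (4 * Real.pi) = 0 := by
      rw [show (4:ℝ) * Real.pi = 2 * Real.pi + 2 * Real.pi by ring, Real.sin_add_two_pi,
        Real.sin_two_pi]
    simp [Real.sin_neg, this]
  have hi1 : IntervalIntegrable (fun θ : ℝ => (1:ℝ) / 4) MeasureTheory.volume (-Real.pi) Real.pi :=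
    intervalIntegrable_const
  have hi2 : IntervalIntegrable (fun θ : ℝ => Real.cos (2 * θ) / 2) MeasureTheory.volume (-Real.pi) Real.pi := by
    apply Continuous.intervalIntegrable; fun_prop
  have hi3 : IntervalIntegrable (fun θ : ℝ => Real.cos (4 * θ) / 4) MeasureTheory.volume (-Real.pi) Real.pi := by
    apply Continuous.intervalIntegrable; fun_prop
  rw [intervalIntegral.integral_congr (fun θ _ => hid θ),
    intervalIntegral.integral_add (hi1.add hi2) hi3, intervalIntegral.integral_add hi1 hi2,
    intervalIntegral.integral_const, intervalIntegral.integral_div, intervalIntegral.integral_div,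
    hc2, hc4]
  rw [smul_eq_mul]
  push_cast
  ring

end ThreeBodyAux

open ThreeBodyAux Complex

/-- the diagonal (Δn = 0) angular integral `Θ⁽⁰⁾` of the three-body
graviton-gap computation equals `4π⁴·[J₀(a/2)·J₀(b/2) + (1/2)·J₂(a/2)·J₀(b/2)]`. -/
theorem threebody_diagonal_angular_integral (a b : ℝ) :
    (∫ θ₁ in (-Real.pi)..Real.pi, ∫ θ₂ in (-Real.pi)..Real.pi,
      ∫ θ₃ in (-Real.pi)..Real.pi, ∫ θ₄ in (-Real.pi)..Real.pi,
        Complex.exp (-(Complex.I / 2) *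
            ((a * Real.sin (θ₁ - θ₃) + b * Real.sin (θ₂ - θ₄) : ℝ) : ℂ)) *
          ((Real.cos θ₁ ^ 2 * Real.cos θ₃ ^ 2 : ℝ) : ℂ))
      = 4 * (Real.pi : ℂ) ^ 4 *
          (besselJ 0 (a / 2) * besselJ 0 (b / 2) +
            (1 / 2) * besselJ 2 (a / 2) * besselJ 0 (b / 2)) := by
  have hb : ∀ θ₂ : ℝ, (∫ θ₄ in (-Real.pi)..Real.pi,
      Complex.exp (-(Complex.I / 2) * ((b * Real.sin (θ₂ - θ₄) : ℝ) : ℂ)))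
        = 2 * Real.pi * besselJ 0 (b / 2) := by
    intro θ₂
    have hper : Function.Periodic
        (fun u : ℝ => Complex.exp (-(Complex.I / 2) * ((b * Real.sin u : ℝ) : ℂ))) (2 * Real.pi) := by
      intro u; simp [Real.sin_add_two_pi]
    rw [shift_int _ hper θ₂, T0]
  -- Step 1: innermost integral over θ₄
  have h4 : ∀ θ₁ θ₂ θ₃ : ℝ, (∫ θ₄ in (-Real.pi)..Real.pi,
      Complex.exp (-(Complex.I / 2) * ((a * Real.sin (θ₁ - θ₃) + b * Real.sin (θ₂ - θ₄) : ℝ) : ℂ)) *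
        ((Real.cos θ₁ ^ 2 * Real.cos θ₃ ^ 2 : ℝ) : ℂ))
      = (2 * Real.pi * besselJ 0 (b / 2)) *
          (Complex.exp (-(Complex.I / 2) * ((a * Real.sin (θ₁ - θ₃) : ℝ) : ℂ)) *
            ((Real.cos θ₁ ^ 2 * Real.cos θ₃ ^ 2 : ℝ) : ℂ)) := by
    intro θ₁ θ₂ θ₃
    have hsplit : ∀ θ₄ : ℝ,
        Complex.exp (-(Complex.I / 2) * ((a * Real.sin (θ₁ - θ₃) + b * Real.sin (θ₂ - θ₄) : ℝ) : ℂ)) *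
          ((Real.cos θ₁ ^ 2 * Real.cos θ₃ ^ 2 : ℝ) : ℂ)
        = (Complex.exp (-(Complex.I / 2) * ((a * Real.sin (θ₁ - θ₃) : ℝ) : ℂ)) *
            ((Real.cos θ₁ ^ 2 * Real.cos θ₃ ^ 2 : ℝ) : ℂ)) *
            Complex.exp (-(Complex.I / 2) * ((b * Real.sin (θ₂ - θ₄) : ℝ) : ℂ)) := by
      intro θ₄
      rw [show (-(Complex.I / 2) * ((a * Real.sin (θ₁ - θ₃) + b * Real.sin (θ₂ - θ₄) : ℝ) : ℂ))
          = -(Complex.I / 2) * ((a * Real.sin (θ₁ - θ₃) : ℝ) : ℂ)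
            + -(Complex.I / 2) * ((b * Real.sin (θ₂ - θ₄) : ℝ) : ℂ) by push_cast; ring,
        Complex.exp_add]
      ring
    rw [intervalIntegral.integral_congr (fun θ₄ _ => hsplit θ₄),
      intervalIntegral.integral_const_mul, hb θ₂]
    ring
  -- Step 2: integral over θ₃
  have h3 : ∀ θ₁ : ℝ, (∫ θ₃ in (-Real.pi)..Real.pi,
      (2 * Real.pi * besselJ 0 (b / 2)) *
        (Complex.exp (-(Complex.I / 2) * ((a * Real.sin (θ₁ - θ₃) : ℝ) : ℂ)) *
          ((Real.cos θ₁ ^ 2 * Real.cos θ₃ ^ 2 : ℝ) : ℂ)))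
      = (2 * Real.pi * besselJ 0 (b / 2)) * ((Real.cos θ₁ ^ 2 : ℝ) : ℂ) *
          ((Real.pi : ℂ) * besselJ 0 (a / 2)
            + (Real.pi : ℂ) * ((Real.cos (2 * θ₁) : ℝ) : ℂ) * besselJ 2 (a / 2)) := by
    intro θ₁
    have hsplit : ∀ θ₃ : ℝ,
        (2 * Real.pi * besselJ 0 (b / 2)) *
          (Complex.exp (-(Complex.I / 2) * ((a * Real.sin (θ₁ - θ₃) : ℝ) : ℂ)) *
            ((Real.cos θ₁ ^ 2 * Real.cos θ₃ ^ 2 : ℝ) : ℂ))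
        = ((2 * Real.pi * besselJ 0 (b / 2)) * ((Real.cos θ₁ ^ 2 : ℝ) : ℂ)) *
            (Complex.exp (-(Complex.I / 2) * ((a * Real.sin (θ₁ - θ₃) : ℝ) : ℂ)) *
              ((Real.cos θ₃ ^ 2 : ℝ) : ℂ)) := by
      intro θ₃
      push_cast
      ring
    rw [intervalIntegral.integral_congr (fun θ₃ _ => hsplit θ₃),
      intervalIntegral.integral_const_mul, Fa a θ₁]
  -- Step 3 and 4: integrals over θ₂ and θ₁
  have h2 : ∀ θ₁ : ℝ, (∫ θ₂ in (-Real.pi)..Real.pi, ∫ θ₃ in (-Real.pi)..Real.pi,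
      ∫ θ₄ in (-Real.pi)..Real.pi,
        Complex.exp (-(Complex.I / 2) *
            ((a * Real.sin (θ₁ - θ₃) + b * Real.sin (θ₂ - θ₄) : ℝ) : ℂ)) *
          ((Real.cos θ₁ ^ 2 * Real.cos θ₃ ^ 2 : ℝ) : ℂ))
      = (2 * Real.pi : ℝ) • ((2 * Real.pi * besselJ 0 (b / 2)) * ((Real.cos θ₁ ^ 2 : ℝ) : ℂ) *
          ((Real.pi : ℂ) * besselJ 0 (a / 2)
            + (Real.pi : ℂ) * ((Real.cos (2 * θ₁) : ℝ) : ℂ) * besselJ 2 (a / 2))) := by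
    intro θ₁
    have : ∀ θ₂ : ℝ, (∫ θ₃ in (-Real.pi)..Real.pi, ∫ θ₄ in (-Real.pi)..Real.pi,
        Complex.exp (-(Complex.I / 2) *
            ((a * Real.sin (θ₁ - θ₃) + b * Real.sin (θ₂ - θ₄) : ℝ) : ℂ)) *
          ((Real.cos θ₁ ^ 2 * Real.cos θ₃ ^ 2 : ℝ) : ℂ))
        = (2 * Real.pi * besselJ 0 (b / 2)) * ((Real.cos θ₁ ^ 2 : ℝ) : ℂ) *
            ((Real.pi : ℂ) * besselJ 0 (a / 2)
              + (Real.pi : ℂ) * ((Real.cos (2 * θ₁) : ℝ) : ℂ) * besselJ 2 (a / 2)) := by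
      intro θ₂
      rw [intervalIntegral.integral_congr (fun θ₃ _ => h4 θ₁ θ₂ θ₃), h3 θ₁]
    rw [intervalIntegral.integral_congr (fun θ₂ _ => this θ₂), intervalIntegral.integral_const]
    rw [show Real.pi - -Real.pi = 2 * Real.pi by ring]
  rw [intervalIntegral.integral_congr (fun θ₁ _ => h2 θ₁)]
  have hfin : ∀ θ₁ : ℝ, (2 * Real.pi : ℝ) • ((2 * Real.pi * besselJ 0 (b / 2)) * ((Real.cos θ₁ ^ 2 : ℝ) : ℂ) *
      ((Real.pi : ℂ) * besselJ 0 (a / 2)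
        + (Real.pi : ℂ) * ((Real.cos (2 * θ₁) : ℝ) : ℂ) * besselJ 2 (a / 2)))
      = (4 * (Real.pi : ℂ) ^ 3 * besselJ 0 (b / 2) * besselJ 0 (a / 2)) * ((Real.cos θ₁ ^ 2 : ℝ) : ℂ)
        + (4 * (Real.pi : ℂ) ^ 3 * besselJ 0 (b / 2) * besselJ 2 (a / 2)) *
            ((Real.cos θ₁ ^ 2 * Real.cos (2 * θ₁) : ℝ) : ℂ) := by
    intro θ₁
    rw [Complex.real_smul]
    push_cast
    ring
  have hj1 : IntervalIntegrable (fun θ₁ : ℝ =>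
      (4 * (Real.pi : ℂ) ^ 3 * besselJ 0 (b / 2) * besselJ 0 (a / 2)) * ((Real.cos θ₁ ^ 2 : ℝ) : ℂ))
      MeasureTheory.volume (-Real.pi) Real.pi := by
    apply Continuous.intervalIntegrable; fun_prop
  have hj2 : IntervalIntegrable (fun θ₁ : ℝ =>
      (4 * (Real.pi : ℂ) ^ 3 * besselJ 0 (b / 2) * besselJ 2 (a / 2)) *
        ((Real.cos θ₁ ^ 2 * Real.cos (2 * θ₁) : ℝ) : ℂ))
      MeasureTheory.volume (-Real.pi) Real.pi := by
    apply Continuous.intervalIntegrable; fun_prop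
  rw [intervalIntegral.integral_congr (fun θ₁ _ => hfin θ₁),
    intervalIntegral.integral_add hj1 hj2,
    intervalIntegral.integral_const_mul, intervalIntegral.integral_const_mul,
    moment0, moment2]
  ring
end

section
/- For all a, b, u, v ∈ ℝ and every integer Δ with Δ ∉ {−2, 0, 2}, the four-fold angular integral ∫_{[−π,π]⁴} exp(−(i/2)[a·sin(θ₁−θ₃) + b·sin(θ₂−θ₄)])·exp(iΔ(θ₃−θ₄))·(u·cosθ₁·cosθ₃ + v·cosθ₂·cosθ₄)² dθ₁ dθ₂ dθ₃ dθ₄ equals 0. (This is the statement that only the relative-quantum-number differences Δn₁ = −Δn₂ ∈ {−2, 0, 2} contribute to the three-body graviton gap.) -/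
open intervalIntegral Real Function

noncomputable section ThreeBodyAux

namespace ThreeBodyGap

/-! ### exponential helpers -/

/-- `ce x = exp(I x)` -/
def ce (x : ℝ) : ℂ := Complex.exp (Complex.I * x)

lemma ce_ne (x : ℝ) : ce x ≠ 0 := Complex.exp_ne_zero _

lemma ce_add (x y : ℝ) : ce (x + y) = ce x * ce y := by
  unfold ce; rw [← Complex.exp_add]; congr 1; push_cast; ring

lemma cos_ce (x : ℝ) : ((Real.cos x : ℝ) : ℂ) = (ce x + (ce x)⁻¹) / 2 := by
  rw [Complex.ofReal_cos]
  show (Complex.exp (↑x * Complex.I) + Complex.exp (-↑x * Complex.I)) / 2 = _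
  unfold ce
  rw [← Complex.exp_neg]
  ring_nf

lemma ce_inv (x : ℝ) : (ce x)⁻¹ = ce (-x) := by
  unfold ce; rw [← Complex.exp_neg]; congr 1; push_cast; ring

lemma ce_rel (x : ℝ) : ce x * ce (-x) = 1 := by
  rw [← ce_add]; simp [ce]

lemma cos_ce' (x : ℝ) : ((Real.cos x : ℝ) : ℂ) = (ce x + ce (-x)) / 2 := by
  rw [cos_ce, ce_inv]

/-- integral of a nontrivial character over a period vanishes -/
lemma intexp_ne (k : ℤ) (hk : k ≠ 0) :
    (∫ t in (-π : ℝ)..π, Complex.exp (Complex.I * (k : ℂ) * (t : ℝ))) = 0 := by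
  have hc : (Complex.I * (k : ℂ)) ≠ 0 := by
    simp [Complex.I_ne_zero, hk, Complex.ext_iff]
  have h := integral_exp_mul_complex (a := (-π : ℝ)) (b := π) hc
  simp only [mul_assoc] at h ⊢
  rw [h]
  have : Complex.exp (Complex.I * ((k : ℂ) * (π : ℝ))) =
      Complex.exp (Complex.I * ((k : ℂ) * ((-π : ℝ) : ℝ))) := by
    rw [show Complex.I * ((k : ℂ) * ((π : ℝ) : ℂ)) =
        Complex.I * ((k : ℂ) * (((-π : ℝ) : ℝ) : ℂ)) + (k : ℂ) * (2 * (π:ℝ) * Complex.I) by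
      push_cast; ring]
    rw [Complex.exp_add]
    rw [show ((2:ℂ) * (π:ℝ) * Complex.I) = ((2:ℝ) * π * Complex.I : ℂ) by push_cast; ring]
    rw [show ((k:ℂ) * ((2:ℝ) * π * Complex.I : ℂ)) = ((k:ℤ):ℂ) * (2 * (π:ℂ) * Complex.I) by
      push_cast; ring]
    rw [Complex.exp_int_mul_two_pi_mul_I]
    simp
  rw [this, sub_self, zero_div]

/-- shifting a `2π`-periodic function doesn't change its integral over `[-π, π]` -/
lemma shift_per (f : ℝ → ℂ) (hf : ∀ x, f (x + 2 * π) = f x) (c : ℝ) :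
    (∫ x in (-π : ℝ)..π, f (x + c)) = ∫ x in (-π : ℝ)..π, f x := by
  have hper : Periodic f (2 * π) := hf
  rw [intervalIntegral.integral_comp_add_right]
  have h := hper.intervalIntegral_add_eq (-π + c) (-π)
  rw [show -π + c + 2 * π = π + c by ring, show -π + 2 * π = π by ring] at h
  exact h

/-! ### the quadruple integral -/

def quadI (f : ℝ → ℝ → ℝ → ℝ → ℂ) : ℂ :=
  ∫ θ₁ in (-π : ℝ)..π, ∫ θ₂ in (-π : ℝ)..π, ∫ θ₃ in (-π : ℝ)..π, ∫ θ₄ in (-π : ℝ)..π,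
    f θ₁ θ₂ θ₃ θ₄

lemma quad_finset_sum {ι : Type} (F : Finset ι) (f : ι → ℝ → ℝ → ℝ → ℝ → ℂ)
    (hf : ∀ j ∈ F, Continuous fun p : ℝ × ℝ × ℝ × ℝ => f j p.1 p.2.1 p.2.2.1 p.2.2.2) :
    quadI (fun θ₁ θ₂ θ₃ θ₄ => ∑ j ∈ F, f j θ₁ θ₂ θ₃ θ₄) = ∑ j ∈ F, quadI (f j) := by
  have c4 : ∀ j ∈ F, ∀ θ₁ θ₂ θ₃ : ℝ, Continuous fun θ₄ => f j θ₁ θ₂ θ₃ θ₄ := by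
    intro j hj θ₁ θ₂ θ₃
    exact (hf j hj).comp (continuous_const.prodMk (continuous_const.prodMk
      (continuous_const.prodMk continuous_id)))
  have c3 : ∀ j ∈ F, ∀ θ₁ θ₂ : ℝ,
      Continuous fun θ₃ => ∫ θ₄ in (-π : ℝ)..π, f j θ₁ θ₂ θ₃ θ₄ := by
    intro j hj θ₁ θ₂
    apply intervalIntegral.continuous_parametric_intervalIntegral_of_continuous'
    exact (hf j hj).comp (continuous_const.prodMk (continuous_const.prodMk
      (continuous_fst.prodMk continuous_snd)))
  have c2 : ∀ j ∈ F, ∀ θ₁ : ℝ,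
      Continuous fun θ₂ => ∫ θ₃ in (-π : ℝ)..π, ∫ θ₄ in (-π : ℝ)..π, f j θ₁ θ₂ θ₃ θ₄ := by
    intro j hj θ₁
    apply intervalIntegral.continuous_parametric_intervalIntegral_of_continuous'
      (f := fun θ₂ θ₃ => ∫ θ₄ in (-π : ℝ)..π, f j θ₁ θ₂ θ₃ θ₄)
    apply intervalIntegral.continuous_parametric_intervalIntegral_of_continuous'
      (f := fun (p : ℝ × ℝ) θ₄ => f j θ₁ p.1 p.2 θ₄)
    exact (hf j hj).comp (continuous_const.prodMk
      ((continuous_fst.comp continuous_fst).prodMk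
        ((continuous_snd.comp continuous_fst).prodMk continuous_snd)))
  have h4 : ∀ θ₁ θ₂ θ₃ : ℝ,
      (∫ θ₄ in (-π : ℝ)..π, ∑ j ∈ F, f j θ₁ θ₂ θ₃ θ₄)
        = ∑ j ∈ F, ∫ θ₄ in (-π : ℝ)..π, f j θ₁ θ₂ θ₃ θ₄ := by
    intro θ₁ θ₂ θ₃
    exact intervalIntegral.integral_finset_sum fun j hj =>
      ((c4 j hj θ₁ θ₂ θ₃).intervalIntegrable _ _)
  have h3 : ∀ θ₁ θ₂ : ℝ,
      (∫ θ₃ in (-π : ℝ)..π, ∑ j ∈ F, ∫ θ₄ in (-π : ℝ)..π, f j θ₁ θ₂ θ₃ θ₄)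
        = ∑ j ∈ F, ∫ θ₃ in (-π : ℝ)..π, ∫ θ₄ in (-π : ℝ)..π, f j θ₁ θ₂ θ₃ θ₄ := by
    intro θ₁ θ₂
    exact intervalIntegral.integral_finset_sum fun j hj =>
      ((c3 j hj θ₁ θ₂).intervalIntegrable _ _)
  have h2 : ∀ θ₁ : ℝ,
      (∫ θ₂ in (-π : ℝ)..π, ∑ j ∈ F,
          ∫ θ₃ in (-π : ℝ)..π, ∫ θ₄ in (-π : ℝ)..π, f j θ₁ θ₂ θ₃ θ₄)
        = ∑ j ∈ F, ∫ θ₂ in (-π : ℝ)..π,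
            ∫ θ₃ in (-π : ℝ)..π, ∫ θ₄ in (-π : ℝ)..π, f j θ₁ θ₂ θ₃ θ₄ := by
    intro θ₁
    exact intervalIntegral.integral_finset_sum fun j hj =>
      ((c2 j hj θ₁).intervalIntegrable _ _)
  unfold quadI
  simp only [h4, h3, h2]
  apply intervalIntegral.integral_finset_sum
  intro j hj
  apply Continuous.intervalIntegrable
  apply intervalIntegral.continuous_parametric_intervalIntegral_of_continuous'
    (f := fun θ₁ θ₂ => ∫ θ₃ in (-π : ℝ)..π, ∫ θ₄ in (-π : ℝ)..π, f j θ₁ θ₂ θ₃ θ₄)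
  apply intervalIntegral.continuous_parametric_intervalIntegral_of_continuous'
    (f := fun (p : ℝ × ℝ) θ₃ => ∫ θ₄ in (-π : ℝ)..π, f j p.1 p.2 θ₃ θ₄)
  apply intervalIntegral.continuous_parametric_intervalIntegral_of_continuous'
    (f := fun (p : (ℝ × ℝ) × ℝ) θ₄ => f j p.1.1 p.1.2 p.2 θ₄)
  exact (hf j hj).comp (((continuous_fst.comp (continuous_fst.comp continuous_fst)).prodMk
    ((continuous_snd.comp (continuous_fst.comp continuous_fst)).prodMk
      ((continuous_snd.comp continuous_fst).prodMk continuous_snd))))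

lemma quad_const_mul (c : ℂ) (f : ℝ → ℝ → ℝ → ℝ → ℂ) :
    quadI (fun θ₁ θ₂ θ₃ θ₄ => c * f θ₁ θ₂ θ₃ θ₄) = c * quadI f := by
  unfold quadI
  simp only [intervalIntegral.integral_const_mul]

/-! ### the Fourier decomposition of the shifted cosine factor -/

def Pset : Finset (ℤ × ℤ) := {(0,0), (2,0), (-2,0), (0,2), (0,-2)}

def wco (u v : ℝ) (p : ℤ × ℤ) (θ₁ θ₂ θ₃ θ₄ : ℝ) : ℂ :=
  if p = (0,0) then ((u/2) * Real.cos (θ₁ - θ₃) + (v/2) * Real.cos (θ₂ - θ₄) : ℝ)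
  else if p = (2,0) then (u/4 : ℝ) * (ce θ₁ * ce θ₃)
  else if p = (-2,0) then (u/4 : ℝ) * ce (-(θ₁ + θ₃))
  else if p = (0,2) then (v/4 : ℝ) * (ce θ₂ * ce θ₄)
  else if p = (0,-2) then (v/4 : ℝ) * ce (-(θ₂ + θ₄))
  else 0

lemma wco_continuous (u v : ℝ) (p : ℤ × ℤ) :
    Continuous fun q : ℝ × ℝ × ℝ × ℝ => wco u v p q.1 q.2.1 q.2.2.1 q.2.2.2 := by
  unfold wco ce
  split_ifs <;> fun_prop

lemma key_pair (x y σ : ℝ) :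
    ((Real.cos (x + σ) : ℝ) : ℂ) * ((Real.cos (y + σ) : ℝ) : ℂ)
      = ((Real.cos (x - y) : ℝ) : ℂ) / 2
        + (ce x * ce y) * ce σ ^ 2 / 4
        + (ce (-x) * ce (-y)) * ce (-σ) ^ 2 / 4 := by
  rw [cos_ce' (x + σ), cos_ce' (y + σ), cos_ce' (x - y)]
  rw [show x - y = x + (-y) by ring]
  simp only [neg_add, neg_neg, ce_add]
  linear_combination ((ce x * ce (-y) + ce (-x) * ce y) / 4) * ce_rel σ

set_option maxHeartbeats 1000000 in
lemma XY_expand (u v s r θ₁ θ₂ θ₃ θ₄ : ℝ) :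
    ((u * Real.cos (θ₁ + s) * Real.cos (θ₃ + s)
        + v * Real.cos (θ₂ + r) * Real.cos (θ₄ + r) : ℝ) : ℂ)
      = ∑ p ∈ Pset, Complex.exp (Complex.I * (p.1 : ℂ) * s)
          * Complex.exp (Complex.I * (p.2 : ℂ) * r) * wco u v p θ₁ θ₂ θ₃ θ₄ := by
  have e2 : ∀ x : ℝ, Complex.exp (Complex.I * (2 : ℂ) * x) = ce x ^ 2 := by
    intro x; unfold ce; rw [pow_two, ← Complex.exp_add]; congr 1; push_cast; ring
  have em2 : ∀ x : ℝ, Complex.exp (-(Complex.I * (2 : ℂ) * x)) = ce (-x) ^ 2 := by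
    intro x; unfold ce; rw [pow_two, ← Complex.exp_add]; congr 1; push_cast; ring
  have cc : ∀ x y : ℝ, Complex.cos ((x:ℂ) + y) = ((Real.cos (x + y) : ℝ) : ℂ) := by
    intro x y; rw [← Complex.ofReal_add, Complex.ofReal_cos]
  have cs : ∀ x y : ℝ, Complex.cos ((x:ℂ) - y) = ((Real.cos (x - y) : ℝ) : ℂ) := by
    intro x y; rw [← Complex.ofReal_sub, Complex.ofReal_cos]
  rw [show Pset = {((0:ℤ),(0:ℤ)), (2,0), (-2,0), (0,2), (0,-2)} from rfl]
  rw [Finset.sum_insert (by decide), Finset.sum_insert (by decide),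
    Finset.sum_insert (by decide), Finset.sum_insert (by decide), Finset.sum_singleton]
  simp only [wco]
  norm_num
  simp only [cc, cs]
  rw [mul_assoc (u:ℂ), mul_assoc (v:ℂ), key_pair θ₁ θ₃ s, key_pair θ₂ θ₄ r]
  simp only [e2, em2]
  rw [show -θ₃ + -θ₁ = (-θ₃) + (-θ₁) by ring, show -θ₄ + -θ₂ = (-θ₄) + (-θ₂) by ring]
  simp only [ce_add]
  ring

/-! ### the integrand and its periodicity -/

def Eker (a b : ℝ) (Δ : ℤ) (θ₁ θ₂ θ₃ θ₄ : ℝ) : ℂ :=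
  Complex.exp (-(Complex.I / 2) *
      ((a * Real.sin (θ₁ - θ₃) + b * Real.sin (θ₂ - θ₄) : ℝ) : ℂ)) *
    Complex.exp (Complex.I * (Δ : ℂ) * ((θ₃ - θ₄ : ℝ) : ℂ))

def Forig (a b u v : ℝ) (Δ : ℤ) (θ₁ θ₂ θ₃ θ₄ : ℝ) : ℂ :=
  Eker a b Δ θ₁ θ₂ θ₃ θ₄ *
    (((u * Real.cos θ₁ * Real.cos θ₃ + v * Real.cos θ₂ * Real.cos θ₄) ^ 2 : ℝ) : ℂ)

lemma exp_two_pi_term (k : ℤ) : Complex.exp ((k : ℂ) * (2 * (π:ℝ) * Complex.I)) = 1 := by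
  rw [show ((k:ℂ) * (2 * (π:ℝ) * Complex.I)) = ((k:ℤ):ℂ) * (2 * (π:ℂ) * Complex.I) by
    push_cast; ring]
  exact Complex.exp_int_mul_two_pi_mul_I k

lemma F_per1 (a b u v : ℝ) (Δ : ℤ) (θ₁ θ₂ θ₃ θ₄ : ℝ) :
    Forig a b u v Δ (θ₁ + 2*π) θ₂ θ₃ θ₄ = Forig a b u v Δ θ₁ θ₂ θ₃ θ₄ := by
  unfold Forig Eker
  rw [show θ₁ + 2*π - θ₃ = (θ₁ - θ₃) + 2*π by ring, Real.sin_add_two_pi,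
    Real.cos_add_two_pi]

lemma F_per2 (a b u v : ℝ) (Δ : ℤ) (θ₁ θ₂ θ₃ θ₄ : ℝ) :
    Forig a b u v Δ θ₁ (θ₂ + 2*π) θ₃ θ₄ = Forig a b u v Δ θ₁ θ₂ θ₃ θ₄ := by
  unfold Forig Eker
  rw [show θ₂ + 2*π - θ₄ = (θ₂ - θ₄) + 2*π by ring, Real.sin_add_two_pi,
    Real.cos_add_two_pi]

lemma F_per3 (a b u v : ℝ) (Δ : ℤ) (θ₁ θ₂ θ₃ θ₄ : ℝ) :
    Forig a b u v Δ θ₁ θ₂ (θ₃ + 2*π) θ₄ = Forig a b u v Δ θ₁ θ₂ θ₃ θ₄ := by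
  unfold Forig Eker
  rw [show θ₁ - (θ₃ + 2*π) = (θ₁ - θ₃) - 2*π by ring, Real.sin_sub_two_pi,
    Real.cos_add_two_pi]
  rw [show Complex.I * (Δ : ℂ) * ((θ₃ + 2*π - θ₄ : ℝ) : ℂ)
      = Complex.I * (Δ : ℂ) * ((θ₃ - θ₄ : ℝ) : ℂ) + (Δ : ℂ) * (2 * (π:ℝ) * Complex.I) by
    push_cast; ring]
  rw [Complex.exp_add, exp_two_pi_term, mul_one]

lemma F_per4 (a b u v : ℝ) (Δ : ℤ) (θ₁ θ₂ θ₃ θ₄ : ℝ) :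
    Forig a b u v Δ θ₁ θ₂ θ₃ (θ₄ + 2*π) = Forig a b u v Δ θ₁ θ₂ θ₃ θ₄ := by
  unfold Forig Eker
  rw [show θ₂ - (θ₄ + 2*π) = (θ₂ - θ₄) - 2*π by ring, Real.sin_sub_two_pi,
    Real.cos_add_two_pi]
  rw [show Complex.I * (Δ : ℂ) * ((θ₃ - (θ₄ + 2*π) : ℝ) : ℂ)
      = Complex.I * (Δ : ℂ) * ((θ₃ - θ₄ : ℝ) : ℂ) + ((-Δ : ℤ) : ℂ) * (2 * (π:ℝ) * Complex.I) by
    push_cast; ring]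
  rw [Complex.exp_add, exp_two_pi_term, mul_one]

/-! ### the shift identity -/

lemma quad_shift (a b u v : ℝ) (Δ : ℤ) (s r : ℝ) :
    quadI (Forig a b u v Δ)
      = quadI (fun θ₁ θ₂ θ₃ θ₄ => Forig a b u v Δ (θ₁ + s) (θ₂ + r) (θ₃ + s) (θ₄ + r)) := by
  unfold quadI
  have h4 : ∀ θ₁ θ₂ θ₃ : ℝ,
      (∫ θ₄ in (-π:ℝ)..π, Forig a b u v Δ θ₁ θ₂ θ₃ θ₄)
        = ∫ θ₄ in (-π:ℝ)..π, Forig a b u v Δ θ₁ θ₂ θ₃ (θ₄ + r) := by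
    intro θ₁ θ₂ θ₃
    exact (shift_per (fun θ₄ => Forig a b u v Δ θ₁ θ₂ θ₃ θ₄)
      (fun x => F_per4 a b u v Δ θ₁ θ₂ θ₃ x) r).symm
  simp only [h4]
  have h3 : ∀ θ₁ θ₂ : ℝ,
      (∫ θ₃ in (-π:ℝ)..π, ∫ θ₄ in (-π:ℝ)..π, Forig a b u v Δ θ₁ θ₂ θ₃ (θ₄ + r))
        = ∫ θ₃ in (-π:ℝ)..π, ∫ θ₄ in (-π:ℝ)..π, Forig a b u v Δ θ₁ θ₂ (θ₃ + s) (θ₄ + r) := by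
    intro θ₁ θ₂
    refine (shift_per (fun θ₃ => ∫ θ₄ in (-π:ℝ)..π, Forig a b u v Δ θ₁ θ₂ θ₃ (θ₄ + r))
      (fun x => ?_) s).symm
    simp only [F_per3]
  simp only [h3]
  have h2 : ∀ θ₁ : ℝ,
      (∫ θ₂ in (-π:ℝ)..π, ∫ θ₃ in (-π:ℝ)..π, ∫ θ₄ in (-π:ℝ)..π,
          Forig a b u v Δ θ₁ θ₂ (θ₃ + s) (θ₄ + r))
        = ∫ θ₂ in (-π:ℝ)..π, ∫ θ₃ in (-π:ℝ)..π, ∫ θ₄ in (-π:ℝ)..π,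
            Forig a b u v Δ θ₁ (θ₂ + r) (θ₃ + s) (θ₄ + r) := by
    intro θ₁
    refine (shift_per (fun θ₂ => ∫ θ₃ in (-π:ℝ)..π, ∫ θ₄ in (-π:ℝ)..π,
      Forig a b u v Δ θ₁ θ₂ (θ₃ + s) (θ₄ + r)) (fun x => ?_) r).symm
    simp only [F_per2]
  simp only [h2]
  refine (shift_per (fun θ₁ => ∫ θ₂ in (-π:ℝ)..π, ∫ θ₃ in (-π:ℝ)..π, ∫ θ₄ in (-π:ℝ)..π,
    Forig a b u v Δ θ₁ (θ₂ + r) (θ₃ + s) (θ₄ + r)) (fun x => ?_) s).symm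
  simp only [F_per1]

/-! ### Fourier expansion of the shifted integrand -/

def csr (j : (ℤ × ℤ) × (ℤ × ℤ)) (s r : ℝ) : ℂ :=
  Complex.exp (Complex.I * (j.1.1 : ℂ) * s) * Complex.exp (Complex.I * (j.1.2 : ℂ) * r) *
    (Complex.exp (Complex.I * (j.2.1 : ℂ) * s) * Complex.exp (Complex.I * (j.2.2 : ℂ) * r))

def gg (a b u v : ℝ) (Δ : ℤ) (j : (ℤ × ℤ) × (ℤ × ℤ)) (θ₁ θ₂ θ₃ θ₄ : ℝ) : ℂ :=
  Eker a b Δ θ₁ θ₂ θ₃ θ₄ *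
    (wco u v j.1 θ₁ θ₂ θ₃ θ₄ * wco u v j.2 θ₁ θ₂ θ₃ θ₄)

lemma gg_continuous (a b u v : ℝ) (Δ : ℤ) (j : (ℤ × ℤ) × (ℤ × ℤ)) :
    Continuous fun p : ℝ × ℝ × ℝ × ℝ => gg a b u v Δ j p.1 p.2.1 p.2.2.1 p.2.2.2 := by
  apply Continuous.mul
  · unfold Eker
    fun_prop
  · exact (wco_continuous u v j.1).mul (wco_continuous u v j.2)

lemma sq_expand (u v s r θ₁ θ₂ θ₃ θ₄ : ℝ) :
    (((u * Real.cos (θ₁ + s) * Real.cos (θ₃ + s)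
        + v * Real.cos (θ₂ + r) * Real.cos (θ₄ + r)) ^ 2 : ℝ) : ℂ)
      = ∑ j ∈ Pset ×ˢ Pset, csr j s r *
          (wco u v j.1 θ₁ θ₂ θ₃ θ₄ * wco u v j.2 θ₁ θ₂ θ₃ θ₄) := by
  rw [Complex.ofReal_pow, pow_two, XY_expand, Finset.sum_mul_sum]
  rw [Finset.sum_product]
  apply Finset.sum_congr rfl
  intro p hp
  apply Finset.sum_congr rfl
  intro q hq
  simp only [csr]
  ring

lemma shifted_point (a b u v : ℝ) (Δ : ℤ) (s r θ₁ θ₂ θ₃ θ₄ : ℝ) :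
    Forig a b u v Δ (θ₁ + s) (θ₂ + r) (θ₃ + s) (θ₄ + r)
      = Complex.exp (Complex.I * (Δ : ℂ) * ((s - r : ℝ) : ℂ)) *
          ∑ j ∈ Pset ×ˢ Pset, csr j s r * gg a b u v Δ j θ₁ θ₂ θ₃ θ₄ := by
  unfold Forig Eker
  rw [show θ₁ + s - (θ₃ + s) = θ₁ - θ₃ by ring, show θ₂ + r - (θ₄ + r) = θ₂ - θ₄ by ring]
  rw [show Complex.I * (Δ : ℂ) * ((θ₃ + s - (θ₄ + r) : ℝ) : ℂ)
      = Complex.I * (Δ : ℂ) * ((θ₃ - θ₄ : ℝ) : ℂ)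
        + Complex.I * (Δ : ℂ) * ((s - r : ℝ) : ℂ) by push_cast; ring]
  rw [Complex.exp_add, sq_expand u v s r θ₁ θ₂ θ₃ θ₄, Finset.mul_sum, Finset.mul_sum]
  apply Finset.sum_congr rfl
  intro j hj
  unfold gg Eker
  ring

lemma exp_combine (Δ m₁ n₁ m₂ n₂ : ℤ) (s r : ℝ) (K : ℂ) :
    Complex.exp (Complex.I * (Δ : ℂ) * ((s - r : ℝ) : ℂ)) *
        ((Complex.exp (Complex.I * (m₁ : ℂ) * s) * Complex.exp (Complex.I * (n₁ : ℂ) * r) *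
          (Complex.exp (Complex.I * (m₂ : ℂ) * s) * Complex.exp (Complex.I * (n₂ : ℂ) * r))) * K)
      = Complex.exp (Complex.I * ((Δ + m₁ + m₂ : ℤ) : ℂ) * s) *
          (K * Complex.exp (Complex.I * ((n₁ + n₂ - Δ : ℤ) : ℂ) * r)) := by
  have h : Complex.exp (Complex.I * (Δ : ℂ) * ((s - r : ℝ) : ℂ)) *
        (Complex.exp (Complex.I * (m₁ : ℂ) * s) * Complex.exp (Complex.I * (n₁ : ℂ) * r) *
          (Complex.exp (Complex.I * (m₂ : ℂ) * s) * Complex.exp (Complex.I * (n₂ : ℂ) * r)))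
      = Complex.exp (Complex.I * ((Δ + m₁ + m₂ : ℤ) : ℂ) * s) *
          Complex.exp (Complex.I * ((n₁ + n₂ - Δ : ℤ) : ℂ) * r) := by
    simp only [← Complex.exp_add]
    congr 1
    push_cast
    ring
  linear_combination K * h

end ThreeBodyGap

end ThreeBodyAux

open ThreeBodyGap in
/-- only the relative-quantum-number differences Δ ∈ {−2, 0, 2}
contribute to the three-body graviton gap: for `Δ ∉ {−2, 0, 2}` the angular
integral vanishes. -/
theorem threebody_angular_integral_vanishes_of_delta (a b u v : ℝ) (Δ : ℤ)
    (hΔ : Δ ∉ ({-2, 0, 2} : Set ℤ)) :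
    (∫ θ₁ in (-Real.pi)..Real.pi, ∫ θ₂ in (-Real.pi)..Real.pi,
      ∫ θ₃ in (-Real.pi)..Real.pi, ∫ θ₄ in (-Real.pi)..Real.pi,
        Complex.exp (-(Complex.I / 2) *
            ((a * Real.sin (θ₁ - θ₃) + b * Real.sin (θ₂ - θ₄) : ℝ) : ℂ)) *
          Complex.exp (Complex.I * (Δ : ℂ) * ((θ₃ - θ₄ : ℝ) : ℂ)) *
          (((u * Real.cos θ₁ * Real.cos θ₃ + v * Real.cos θ₂ * Real.cos θ₄) ^ 2 : ℝ) : ℂ))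
      = 0 := by
  simp only [Set.mem_insert_iff, Set.mem_singleton_iff, not_or] at hΔ
  obtain ⟨hd1, hd2, hd3⟩ := hΔ
  show quadI (Forig a b u v Δ) = 0
  -- the master identity
  have hKey : ∀ s r : ℝ, quadI (Forig a b u v Δ)
      = ∑ j ∈ Pset ×ˢ Pset,
          Complex.exp (Complex.I * ((Δ + j.1.1 + j.2.1 : ℤ) : ℂ) * s) *
            (quadI (gg a b u v Δ j) *
              Complex.exp (Complex.I * ((j.1.2 + j.2.2 - Δ : ℤ) : ℂ) * r)) := by
    intro s r
    rw [quad_shift a b u v Δ s r]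
    have h1 : quadI (fun θ₁ θ₂ θ₃ θ₄ => Forig a b u v Δ (θ₁ + s) (θ₂ + r) (θ₃ + s) (θ₄ + r))
        = quadI (fun θ₁ θ₂ θ₃ θ₄ => Complex.exp (Complex.I * (Δ : ℂ) * ((s - r : ℝ) : ℂ)) *
            ∑ j ∈ Pset ×ˢ Pset, csr j s r * gg a b u v Δ j θ₁ θ₂ θ₃ θ₄) := by
      unfold quadI
      simp only [shifted_point]
    rw [h1, quad_const_mul]
    have h2 : quadI (fun θ₁ θ₂ θ₃ θ₄ =>
          ∑ j ∈ Pset ×ˢ Pset, csr j s r * gg a b u v Δ j θ₁ θ₂ θ₃ θ₄)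
        = ∑ j ∈ Pset ×ˢ Pset, csr j s r * quadI (gg a b u v Δ j) := by
      rw [quad_finset_sum (Pset ×ˢ Pset)
        (fun j θ₁ θ₂ θ₃ θ₄ => csr j s r * gg a b u v Δ j θ₁ θ₂ θ₃ θ₄)
        (fun j _ => continuous_const.mul (gg_continuous a b u v Δ j))]
      exact Finset.sum_congr rfl fun j _ => quad_const_mul (csr j s r) (gg a b u v Δ j)
    rw [h2, Finset.mul_sum]
    apply Finset.sum_congr rfl
    intro j hj
    exact exp_combine Δ j.1.1 j.1.2 j.2.1 j.2.2 s r (quadI (gg a b u v Δ j))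
  -- no surviving frequency
  have hNZ : ∀ j ∈ Pset ×ˢ Pset,
      (Δ + j.1.1 + j.2.1 ≠ 0) ∨ (j.1.2 + j.2.2 - Δ ≠ 0) := by
    intro j hj
    obtain ⟨⟨p1, p2⟩, q1, q2⟩ := j
    simp only [Pset, Finset.mem_product, Finset.mem_insert, Finset.mem_singleton,
      Prod.mk.injEq] at hj
    dsimp only
    omega
  -- integrate in r
  have hR : ∀ s : ℝ, ((2 * π : ℝ) : ℂ) * quadI (Forig a b u v Δ)
      = ∑ j ∈ Pset ×ˢ Pset,
          Complex.exp (Complex.I * ((Δ + j.1.1 + j.2.1 : ℤ) : ℂ) * s) *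
            (quadI (gg a b u v Δ j) *
              ∫ t in (-π : ℝ)..π, Complex.exp (Complex.I * ((j.1.2 + j.2.2 - Δ : ℤ) : ℂ) * t)) := by
    intro s
    have hconst : (∫ _t in (-π : ℝ)..π, quadI (Forig a b u v Δ))
        = ((2 * π : ℝ) : ℂ) * quadI (Forig a b u v Δ) := by
      rw [intervalIntegral.integral_const, show (π - -π : ℝ) = 2 * π by ring,
        ← Complex.real_smul]
    rw [← hconst]
    rw [intervalIntegral.integral_congr (g := fun r => ∑ j ∈ Pset ×ˢ Pset,
        Complex.exp (Complex.I * ((Δ + j.1.1 + j.2.1 : ℤ) : ℂ) * s) *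
          (quadI (gg a b u v Δ j) *
            Complex.exp (Complex.I * ((j.1.2 + j.2.2 - Δ : ℤ) : ℂ) * r)))
      (fun r _ => hKey s r)]
    rw [intervalIntegral.integral_finset_sum]
    · apply Finset.sum_congr rfl
      intro j hj
      rw [intervalIntegral.integral_const_mul, intervalIntegral.integral_const_mul]
    · intro j hj
      apply Continuous.intervalIntegrable
      fun_prop
  -- integrate in s
  have hS : ((2 * π : ℝ) : ℂ) * (((2 * π : ℝ) : ℂ) * quadI (Forig a b u v Δ))
      = ∑ j ∈ Pset ×ˢ Pset,
          (∫ t in (-π : ℝ)..π, Complex.exp (Complex.I * ((Δ + j.1.1 + j.2.1 : ℤ) : ℂ) * t)) *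
            (quadI (gg a b u v Δ j) *
              ∫ t in (-π : ℝ)..π, Complex.exp (Complex.I * ((j.1.2 + j.2.2 - Δ : ℤ) : ℂ) * t)) := by
    have hconst : (∫ _t in (-π : ℝ)..π, ((2 * π : ℝ) : ℂ) * quadI (Forig a b u v Δ))
        = ((2 * π : ℝ) : ℂ) * (((2 * π : ℝ) : ℂ) * quadI (Forig a b u v Δ)) := by
      rw [intervalIntegral.integral_const, show (π - -π : ℝ) = 2 * π by ring]
      simp [Complex.real_smul]
    rw [← hconst]
    rw [intervalIntegral.integral_congr (g := fun s => ∑ j ∈ Pset ×ˢ Pset,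
        Complex.exp (Complex.I * ((Δ + j.1.1 + j.2.1 : ℤ) : ℂ) * s) *
          (quadI (gg a b u v Δ j) *
            ∫ t in (-π : ℝ)..π, Complex.exp (Complex.I * ((j.1.2 + j.2.2 - Δ : ℤ) : ℂ) * t)))
      (fun s _ => hR s)]
    rw [intervalIntegral.integral_finset_sum]
    · apply Finset.sum_congr rfl
      intro j hj
      rw [intervalIntegral.integral_mul_const]
    · intro j hj
      apply Continuous.intervalIntegrable
      fun_prop
  have hzero : ((2 * π : ℝ) : ℂ) * (((2 * π : ℝ) : ℂ) * quadI (Forig a b u v Δ)) = 0 := by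
    rw [hS]
    apply Finset.sum_eq_zero
    intro j hj
    rcases hNZ j hj with h | h
    · rw [intexp_ne _ h, zero_mul]
    · rw [intexp_ne _ h, mul_zero, mul_zero]
  have h2pi : ((2 * π : ℝ) : ℂ) ≠ 0 := by
    simp [Real.pi_ne_zero]
  rcases mul_eq_zero.mp hzero with h | h
  · exact absurd h h2pi
  rcases mul_eq_zero.mp h with h' | h'
  · exact absurd h' h2pi
  exact h'
end

section
/- For all a, b ∈ ℝ, the four-fold angular integral ∫_{[−π,π]⁴} exp(−(i/2)[a·sin(θ₁−θ₃) + b·sin(θ₂−θ₄)])·exp(−2i(θ₃−θ₄))·cosθ₁·cosθ₂·cosθ₃·cosθ₄ dθ₁ dθ₂ dθ₃ dθ₄ equals −π⁴·J₁(a/2)·J₁(b/2). (This is the off-diagonal Δn₁ = −2 angular integral Θ⁽⁻²⁾ of the three-body graviton-gap computation, with the radial weights stripped off.) -/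
open intervalIntegral Real

namespace ThreeBodyAux

open Complex

noncomputable def fA (a θ₁ θ₃ : ℝ) : ℂ :=
  Complex.exp (-(Complex.I/2) * ((a * Real.sin (θ₁ - θ₃) : ℝ) : ℂ)) *
    Complex.exp (-2*Complex.I*(θ₃:ℂ)) * ((Real.cos θ₁ : ℝ):ℂ) * ((Real.cos θ₃ : ℝ):ℂ)

noncomputable def pA (a u : ℝ) : ℂ :=
  Complex.exp (-(Complex.I/2) * ((a * Real.sin u : ℝ):ℂ)) * Complex.exp (2*Complex.I*(u:ℂ))
    * ((Real.cos u : ℝ):ℂ)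

noncomputable def qA (a u : ℝ) : ℂ :=
  Complex.exp (-(Complex.I/2) * ((a * Real.sin u : ℝ):ℂ)) * Complex.exp (2*Complex.I*(u:ℂ))
    * ((Real.sin u : ℝ):ℂ)

lemma contII {f : ℝ → ℂ} (hf : Continuous f) :
    IntervalIntegrable f MeasureTheory.volume (-Real.pi) Real.pi :=
  hf.intervalIntegrable _ _

lemma pA_cont (a : ℝ) : Continuous (pA a) := by unfold pA; fun_prop
lemma qA_cont (a : ℝ) : Continuous (qA a) := by unfold qA; fun_prop

lemma innerA (a θ₁ : ℝ) :
    ∫ θ₃ in (-Real.pi)..Real.pi, fA a θ₁ θ₃ =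
      Complex.exp (-2*Complex.I*(θ₁:ℂ)) * ((Real.cos θ₁ : ℝ):ℂ) *
        (((Real.cos θ₁ : ℝ):ℂ) * ∫ u in (-Real.pi)..Real.pi, pA a u)
      + Complex.exp (-2*Complex.I*(θ₁:ℂ)) * ((Real.cos θ₁ : ℝ):ℂ) *
        (((Real.sin θ₁ : ℝ):ℂ) * ∫ u in (-Real.pi)..Real.pi, qA a u) := by
  set w : ℝ → ℂ := fun u =>
    Complex.exp (-(Complex.I/2) * ((a * Real.sin u : ℝ):ℂ)) *
      Complex.exp (-2*Complex.I*((θ₁:ℂ) - (u:ℂ))) * ((Real.cos θ₁ : ℝ):ℂ) *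
      ((Real.cos (θ₁ - u) : ℝ):ℂ) with hw
  have step1 : ∀ θ₃ : ℝ, fA a θ₁ θ₃ = w (θ₁ - θ₃) := by
    intro θ₃
    simp only [hw, fA, sub_sub_cancel]
    push_cast
    ring_nf
  have hper : Function.Periodic w (2*Real.pi) := by
    intro u
    simp only [hw]
    rw [Real.sin_add_two_pi,
      show θ₁ - (u + 2*Real.pi) = (θ₁ - u) - 2*Real.pi by ring, Real.cos_sub_two_pi,
      show -2*Complex.I*((θ₁:ℂ) - ((u + 2*Real.pi : ℝ):ℂ))
          = -2*Complex.I*((θ₁:ℂ) - (u:ℂ)) + ((2 : ℤ) : ℂ) * (2*(Real.pi:ℂ)*Complex.I)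
        by push_cast; ring,
      Complex.exp_add, Complex.exp_int_mul_two_pi_mul_I, mul_one]
  have step2 : (∫ θ₃ in (-Real.pi)..Real.pi, fA a θ₁ θ₃) = ∫ u in (-Real.pi)..Real.pi, w u := by
    rw [integral_congr (g := fun θ₃ => w (θ₁ - θ₃)) (fun θ₃ _ => step1 θ₃),
      integral_comp_sub_left w θ₁]
    have := hper.intervalIntegral_add_eq (θ₁ - Real.pi) (-Real.pi)
    rw [show θ₁ - Real.pi + 2*Real.pi = θ₁ - -Real.pi by ring,
      show -Real.pi + 2*Real.pi = Real.pi by ring] at this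
    exact this
  have step3 : ∀ u : ℝ, w u =
      Complex.exp (-2*Complex.I*(θ₁:ℂ)) * ((Real.cos θ₁ : ℝ):ℂ) *
        (((Real.cos θ₁ : ℝ):ℂ) * pA a u) +
      Complex.exp (-2*Complex.I*(θ₁:ℂ)) * ((Real.cos θ₁ : ℝ):ℂ) *
        (((Real.sin θ₁ : ℝ):ℂ) * qA a u) := by
    intro u
    simp only [hw, pA, qA]
    rw [show -2*Complex.I*((θ₁:ℂ) - (u:ℂ)) = (-2*Complex.I*(θ₁:ℂ)) + 2*Complex.I*(u:ℂ) by ring,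
      Complex.exp_add, Real.cos_sub]
    push_cast
    ring
  rw [integral_congr (g := fun u =>
      Complex.exp (-2*Complex.I*(θ₁:ℂ)) * ((Real.cos θ₁ : ℝ):ℂ) *
        (((Real.cos θ₁ : ℝ):ℂ) * pA a u) +
      Complex.exp (-2*Complex.I*(θ₁:ℂ)) * ((Real.cos θ₁ : ℝ):ℂ) *
        (((Real.sin θ₁ : ℝ):ℂ) * qA a u)) (fun u _ => step3 u)] at step2
  rw [step2, integral_add (contII (by have := pA_cont a; fun_prop))
      (contII (by have := qA_cont a; fun_prop))]
  simp only [integral_const_mul]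




lemma Km (m : ℤ) (hm : m ≠ 0) :
    ∫ θ : ℝ in (-Real.pi)..Real.pi, Complex.exp ((m:ℂ) * I * θ) = 0 := by
  have hc : (m:ℂ) * I ≠ 0 := by simp [Complex.ext_iff, hm]
  rw [integral_exp_mul_complex hc]
  have h1 : Complex.exp ((m:ℂ) * I * ((Real.pi : ℝ) : ℂ)) = (-1 : ℂ) ^ m := by
    rw [show ((m:ℂ) * I * ((Real.pi:ℝ):ℂ)) = (m:ℂ) * ((Real.pi:ℂ) * I) by ring,
      Complex.exp_int_mul, Complex.exp_pi_mul_I]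
  have h2 : Complex.exp ((m:ℂ) * I * ((-Real.pi : ℝ) : ℂ)) = (-1 : ℂ) ^ m := by
    rw [show ((m:ℂ) * I * ((-Real.pi:ℝ):ℂ)) = -((m:ℂ) * ((Real.pi:ℂ) * I)) by push_cast; ring,
      Complex.exp_neg, Complex.exp_int_mul, Complex.exp_pi_mul_I, ← inv_zpow, inv_neg, inv_one]
  rw [h1, h2, sub_self, zero_div]

lemma comboInt (a b c : ℂ) (m n : ℤ) (hm : m ≠ 0) (hn : n ≠ 0) :
    ∫ θ : ℝ in (-Real.pi)..Real.pi,
      (a * Complex.exp ((m:ℂ)*I*θ) + b * Complex.exp ((n:ℂ)*I*θ) + c) = c * (2*Real.pi) := by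
  have h1 : IntervalIntegrable (fun θ : ℝ => a * Complex.exp ((m:ℂ)*I*θ))
      MeasureTheory.volume (-Real.pi) Real.pi := contII (by fun_prop)
  have h2 : IntervalIntegrable (fun θ : ℝ => b * Complex.exp ((n:ℂ)*I*θ))
      MeasureTheory.volume (-Real.pi) Real.pi := contII (by fun_prop)
  have h3 : IntervalIntegrable (fun _ : ℝ => c)
      MeasureTheory.volume (-Real.pi) Real.pi := contII (by fun_prop)
  rw [integral_add (h1.add h2) h3, integral_add h1 h2, integral_const_mul, integral_const_mul,
    Km m hm, Km n hn, integral_const]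
  simp
  ring

lemma T1m : ∫ θ : ℝ in (-Real.pi)..Real.pi,
    ((Real.cos θ : ℝ):ℂ)^2 * Complex.exp (-2*I*(θ:ℂ)) = Real.pi/2 := by
  have key : ∀ θ : ℝ, ((Real.cos θ : ℝ):ℂ)^2 * Complex.exp (-2*I*(θ:ℂ)) =
      (1/4 : ℂ) * Complex.exp (((-4:ℤ):ℂ)*I*θ) + (1/2 : ℂ) * Complex.exp (((-2:ℤ):ℂ)*I*θ) + 1/4 := by
    intro θ
    have hx : Complex.exp (I * (θ:ℂ)) ≠ 0 := Complex.exp_ne_zero _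
    have h1 : Complex.exp ((θ:ℂ)*I) = Complex.exp (I * (θ:ℂ)) := by rw [mul_comm]
    have h2 : Complex.exp (-(θ:ℂ)*I) = (Complex.exp (I * (θ:ℂ)))⁻¹ := by
      rw [← Complex.exp_neg]; ring_nf
    have h3 : Complex.exp (-2*I*(θ:ℂ)) = ((Complex.exp (I * (θ:ℂ)))^2)⁻¹ := by
      rw [← Complex.exp_nat_mul, ← Complex.exp_neg]; ring_nf
    have h4 : Complex.exp (((-4:ℤ):ℂ)*I*(θ:ℂ)) = ((Complex.exp (I * (θ:ℂ)))^4)⁻¹ := by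
      rw [← Complex.exp_nat_mul, ← Complex.exp_neg]; push_cast; ring_nf
    have h5 : Complex.exp (((-2:ℤ):ℂ)*I*(θ:ℂ)) = ((Complex.exp (I * (θ:ℂ)))^2)⁻¹ := by
      rw [← Complex.exp_nat_mul, ← Complex.exp_neg]; push_cast; ring_nf
    rw [Complex.ofReal_cos, Complex.cos, h1, h2, h3, h4, h5]
    field_simp; ring
  rw [integral_congr (g := fun θ : ℝ => (1/4 : ℂ) * Complex.exp (((-4:ℤ):ℂ)*I*θ)
      + (1/2 : ℂ) * Complex.exp (((-2:ℤ):ℂ)*I*θ) + 1/4) (fun θ _ => key θ),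
    comboInt _ _ _ (-4) (-2) (by norm_num) (by norm_num)]
  push_cast; ring

lemma T2m : ∫ θ : ℝ in (-Real.pi)..Real.pi,
    ((Real.sin θ : ℝ):ℂ) * ((Real.cos θ : ℝ):ℂ) * Complex.exp (-2*I*(θ:ℂ)) = -I*Real.pi/2 := by
  have key : ∀ θ : ℝ, ((Real.sin θ : ℝ):ℂ) * ((Real.cos θ : ℝ):ℂ) * Complex.exp (-2*I*(θ:ℂ)) =
      (-1/(4*I) : ℂ) * Complex.exp (((-4:ℤ):ℂ)*I*θ) + (0 : ℂ) * Complex.exp (((-2:ℤ):ℂ)*I*θ)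
        + 1/(4*I) := by
    intro θ
    have hx : Complex.exp (I * (θ:ℂ)) ≠ 0 := Complex.exp_ne_zero _
    have h1 : Complex.exp ((θ:ℂ)*I) = Complex.exp (I * (θ:ℂ)) := by rw [mul_comm]
    have h2 : Complex.exp (-(θ:ℂ)*I) = (Complex.exp (I * (θ:ℂ)))⁻¹ := by
      rw [← Complex.exp_neg]; ring_nf
    have h3 : Complex.exp (-2*I*(θ:ℂ)) = ((Complex.exp (I * (θ:ℂ)))^2)⁻¹ := by
      rw [← Complex.exp_nat_mul, ← Complex.exp_neg]; ring_nf
    have h4 : Complex.exp (((-4:ℤ):ℂ)*I*(θ:ℂ)) = ((Complex.exp (I * (θ:ℂ)))^4)⁻¹ := by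
      rw [← Complex.exp_nat_mul, ← Complex.exp_neg]; push_cast; ring_nf
    rw [Complex.ofReal_sin, Complex.ofReal_cos, Complex.sin, Complex.cos, h1, h2, h3, h4]
    have hI : I^2 = -1 := Complex.I_sq
    field_simp
    linear_combination (4 - 4*(Complex.exp (I*(θ:ℂ)))^4)*hI
  rw [integral_congr (g := fun θ : ℝ => (-1/(4*I) : ℂ) * Complex.exp (((-4:ℤ):ℂ)*I*θ)
      + (0 : ℂ) * Complex.exp (((-2:ℤ):ℂ)*I*θ) + 1/(4*I)) (fun θ _ => key θ),
    comboInt _ _ _ (-4) (-2) (by norm_num) (by norm_num)]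
  have hI : I^2 = -1 := Complex.I_sq
  field_simp
  linear_combination (4:ℂ)*hI

lemma T1p : ∫ θ : ℝ in (-Real.pi)..Real.pi,
    ((Real.cos θ : ℝ):ℂ)^2 * Complex.exp (2*I*(θ:ℂ)) = Real.pi/2 := by
  have key : ∀ θ : ℝ, ((Real.cos θ : ℝ):ℂ)^2 * Complex.exp (2*I*(θ:ℂ)) =
      (1/4 : ℂ) * Complex.exp (((4:ℤ):ℂ)*I*θ) + (1/2 : ℂ) * Complex.exp (((2:ℤ):ℂ)*I*θ) + 1/4 := by
    intro θ
    have hx : Complex.exp (I * (θ:ℂ)) ≠ 0 := Complex.exp_ne_zero _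
    have h1 : Complex.exp ((θ:ℂ)*I) = Complex.exp (I * (θ:ℂ)) := by rw [mul_comm]
    have h2 : Complex.exp (-(θ:ℂ)*I) = (Complex.exp (I * (θ:ℂ)))⁻¹ := by
      rw [← Complex.exp_neg]; ring_nf
    have h3 : Complex.exp (2*I*(θ:ℂ)) = (Complex.exp (I * (θ:ℂ)))^2 := by
      rw [← Complex.exp_nat_mul]; ring_nf
    have h4 : Complex.exp (((4:ℤ):ℂ)*I*(θ:ℂ)) = (Complex.exp (I * (θ:ℂ)))^4 := by
      rw [← Complex.exp_nat_mul]; push_cast; ring_nf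
    have h5 : Complex.exp (((2:ℤ):ℂ)*I*(θ:ℂ)) = (Complex.exp (I * (θ:ℂ)))^2 := by
      rw [← Complex.exp_nat_mul]; push_cast; ring_nf
    rw [Complex.ofReal_cos, Complex.cos, h1, h2, h3, h4, h5]
    field_simp; ring
  rw [integral_congr (g := fun θ : ℝ => (1/4 : ℂ) * Complex.exp (((4:ℤ):ℂ)*I*θ)
      + (1/2 : ℂ) * Complex.exp (((2:ℤ):ℂ)*I*θ) + 1/4) (fun θ _ => key θ),
    comboInt _ _ _ 4 2 (by norm_num) (by norm_num)]
  push_cast; ring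

lemma T2p : ∫ θ : ℝ in (-Real.pi)..Real.pi,
    ((Real.sin θ : ℝ):ℂ) * ((Real.cos θ : ℝ):ℂ) * Complex.exp (2*I*(θ:ℂ)) = I*Real.pi/2 := by
  have key : ∀ θ : ℝ, ((Real.sin θ : ℝ):ℂ) * ((Real.cos θ : ℝ):ℂ) * Complex.exp (2*I*(θ:ℂ)) =
      (1/(4*I) : ℂ) * Complex.exp (((4:ℤ):ℂ)*I*θ) + (0 : ℂ) * Complex.exp (((2:ℤ):ℂ)*I*θ)
        + (-1)/(4*I) := by
    intro θ
    have hx : Complex.exp (I * (θ:ℂ)) ≠ 0 := Complex.exp_ne_zero _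
    have h1 : Complex.exp ((θ:ℂ)*I) = Complex.exp (I * (θ:ℂ)) := by rw [mul_comm]
    have h2 : Complex.exp (-(θ:ℂ)*I) = (Complex.exp (I * (θ:ℂ)))⁻¹ := by
      rw [← Complex.exp_neg]; ring_nf
    have h3 : Complex.exp (2*I*(θ:ℂ)) = (Complex.exp (I * (θ:ℂ)))^2 := by
      rw [← Complex.exp_nat_mul]; ring_nf
    have h4 : Complex.exp (((4:ℤ):ℂ)*I*(θ:ℂ)) = (Complex.exp (I * (θ:ℂ)))^4 := by
      rw [← Complex.exp_nat_mul]; push_cast; ring_nf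
    rw [Complex.ofReal_sin, Complex.ofReal_cos, Complex.sin, Complex.cos, h1, h2, h3, h4]
    have hI : I^2 = -1 := Complex.I_sq
    field_simp
    linear_combination (4 - 4*(Complex.exp (I*(θ:ℂ)))^4)*hI
  rw [integral_congr (g := fun θ : ℝ => (1/(4*I) : ℂ) * Complex.exp (((4:ℤ):ℂ)*I*θ)
      + (0 : ℂ) * Complex.exp (((2:ℤ):ℂ)*I*θ) + (-1)/(4*I)) (fun θ _ => key θ),
    comboInt _ _ _ 4 2 (by norm_num) (by norm_num)]
  have hI : I^2 = -1 := Complex.I_sq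
  field_simp
  linear_combination (-4:ℂ)*hI

lemma PQ_A (a : ℝ) :
    (∫ u in (-Real.pi)..Real.pi, pA a u) - Complex.I * ∫ u in (-Real.pi)..Real.pi, qA a u
      = 2 * Real.pi * besselJ 1 (a/2) := by
  set β : ℝ → ℂ := fun v => Complex.exp (Complex.I * ((a/2 * Real.sin v - ((1:ℤ):ℝ) * v : ℝ) : ℂ))
    with hβ
  have hbJ : besselJ 1 (a/2) = (1 / (2 * Real.pi) : ℂ) * ∫ v in (-Real.pi)..Real.pi, β v := rfl
  have key : ∀ u : ℝ, pA a u - Complex.I * qA a u = β (-u) := by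
    intro u
    have h1 : pA a u - Complex.I * qA a u =
        Complex.exp (-(Complex.I/2) * ((a * Real.sin u : ℝ):ℂ)) *
          Complex.exp (2*Complex.I*(u:ℂ)) * Complex.exp ((-(u:ℂ))*Complex.I) := by
      rw [Complex.exp_mul_I, Complex.cos_neg, Complex.sin_neg]
      simp only [pA, qA, ← Complex.ofReal_cos, ← Complex.ofReal_sin]
      ring
    rw [h1, hβ, mul_assoc, ← Complex.exp_add, ← Complex.exp_add]
    congr 1
    push_cast [Real.sin_neg]
    ring
  have h2 : (∫ u in (-Real.pi)..Real.pi, pA a u) - Complex.I * ∫ u in (-Real.pi)..Real.pi, qA a u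
      = ∫ u in (-Real.pi)..Real.pi, (pA a u - Complex.I * qA a u) := by
    rw [integral_sub (contII (pA_cont a)) (contII (by have := qA_cont a; fun_prop)),
      integral_const_mul]
  rw [h2, integral_congr (g := fun u => β (-u)) (fun u _ => key u), integral_comp_neg β,
    neg_neg, hbJ]
  have hπ : (Real.pi : ℂ) ≠ 0 := by
    simpa using Real.pi_ne_zero
  field_simp

lemma lemA (a : ℝ) :
    (∫ θ₁ in (-Real.pi)..Real.pi, ∫ θ₃ in (-Real.pi)..Real.pi, fA a θ₁ θ₃)
      = (Real.pi : ℂ)^2 * besselJ 1 (a/2) := by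
  set P := ∫ u in (-Real.pi)..Real.pi, pA a u with hP
  set Q := ∫ u in (-Real.pi)..Real.pi, qA a u with hQ
  have step : ∀ θ₁ : ℝ, (∫ θ₃ in (-Real.pi)..Real.pi, fA a θ₁ θ₃) =
      P * (((Real.cos θ₁ : ℝ):ℂ)^2 * Complex.exp (-2*Complex.I*(θ₁:ℂ))) +
      Q * (((Real.sin θ₁ : ℝ):ℂ) * ((Real.cos θ₁ : ℝ):ℂ) * Complex.exp (-2*Complex.I*(θ₁:ℂ))) := by
    intro θ₁
    rw [innerA a θ₁, ← hP, ← hQ]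
    ring
  rw [integral_congr (g := fun θ₁ =>
      P * (((Real.cos θ₁ : ℝ):ℂ)^2 * Complex.exp (-2*Complex.I*(θ₁:ℂ))) +
      Q * (((Real.sin θ₁ : ℝ):ℂ) * ((Real.cos θ₁ : ℝ):ℂ) * Complex.exp (-2*Complex.I*(θ₁:ℂ))))
      (fun θ₁ _ => step θ₁),
    integral_add (contII (by fun_prop)) (contII (by fun_prop)),
    integral_const_mul, integral_const_mul, T1m, T2m]
  have hPQ := PQ_A a
  rw [← hP, ← hQ] at hPQ
  linear_combination ((Real.pi : ℂ)/2) * hPQ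

noncomputable def gB (b θ₂ θ₄ : ℝ) : ℂ :=
  Complex.exp (-(Complex.I/2) * ((b * Real.sin (θ₂ - θ₄) : ℝ) : ℂ)) *
    Complex.exp (2*Complex.I*(θ₄:ℂ)) * ((Real.cos θ₂ : ℝ):ℂ) * ((Real.cos θ₄ : ℝ):ℂ)

noncomputable def pB (b u : ℝ) : ℂ :=
  Complex.exp (-(Complex.I/2) * ((b * Real.sin u : ℝ):ℂ)) * Complex.exp (-2*Complex.I*(u:ℂ))
    * ((Real.cos u : ℝ):ℂ)

noncomputable def qB (b u : ℝ) : ℂ :=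
  Complex.exp (-(Complex.I/2) * ((b * Real.sin u : ℝ):ℂ)) * Complex.exp (-2*Complex.I*(u:ℂ))
    * ((Real.sin u : ℝ):ℂ)

lemma pB_cont (b : ℝ) : Continuous (pB b) := by unfold pB; fun_prop
lemma qB_cont (b : ℝ) : Continuous (qB b) := by unfold qB; fun_prop

lemma innerB (b θ₂ : ℝ) :
    ∫ θ₄ in (-Real.pi)..Real.pi, gB b θ₂ θ₄ =
      Complex.exp (2*Complex.I*(θ₂:ℂ)) * ((Real.cos θ₂ : ℝ):ℂ) *
        (((Real.cos θ₂ : ℝ):ℂ) * ∫ u in (-Real.pi)..Real.pi, pB b u)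
      + Complex.exp (2*Complex.I*(θ₂:ℂ)) * ((Real.cos θ₂ : ℝ):ℂ) *
        (((Real.sin θ₂ : ℝ):ℂ) * ∫ u in (-Real.pi)..Real.pi, qB b u) := by
  set w : ℝ → ℂ := fun u =>
    Complex.exp (-(Complex.I/2) * ((b * Real.sin u : ℝ):ℂ)) *
      Complex.exp (2*Complex.I*((θ₂:ℂ) - (u:ℂ))) * ((Real.cos θ₂ : ℝ):ℂ) *
      ((Real.cos (θ₂ - u) : ℝ):ℂ) with hw
  have step1 : ∀ θ₄ : ℝ, gB b θ₂ θ₄ = w (θ₂ - θ₄) := by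
    intro θ₄
    simp only [hw, gB, sub_sub_cancel]
    push_cast
    ring_nf
  have hper : Function.Periodic w (2*Real.pi) := by
    intro u
    simp only [hw]
    rw [Real.sin_add_two_pi,
      show θ₂ - (u + 2*Real.pi) = (θ₂ - u) - 2*Real.pi by ring, Real.cos_sub_two_pi,
      show 2*Complex.I*((θ₂:ℂ) - ((u + 2*Real.pi : ℝ):ℂ))
          = 2*Complex.I*((θ₂:ℂ) - (u:ℂ)) + ((-2 : ℤ) : ℂ) * (2*(Real.pi:ℂ)*Complex.I)
        by push_cast; ring,
      Complex.exp_add, Complex.exp_int_mul_two_pi_mul_I, mul_one]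
  have step2 : (∫ θ₄ in (-Real.pi)..Real.pi, gB b θ₂ θ₄) = ∫ u in (-Real.pi)..Real.pi, w u := by
    rw [integral_congr (g := fun θ₄ => w (θ₂ - θ₄)) (fun θ₄ _ => step1 θ₄),
      integral_comp_sub_left w θ₂]
    have := hper.intervalIntegral_add_eq (θ₂ - Real.pi) (-Real.pi)
    rw [show θ₂ - Real.pi + 2*Real.pi = θ₂ - -Real.pi by ring,
      show -Real.pi + 2*Real.pi = Real.pi by ring] at this
    exact this
  have step3 : ∀ u : ℝ, w u =
      Complex.exp (2*Complex.I*(θ₂:ℂ)) * ((Real.cos θ₂ : ℝ):ℂ) *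
        (((Real.cos θ₂ : ℝ):ℂ) * pB b u) +
      Complex.exp (2*Complex.I*(θ₂:ℂ)) * ((Real.cos θ₂ : ℝ):ℂ) *
        (((Real.sin θ₂ : ℝ):ℂ) * qB b u) := by
    intro u
    simp only [hw, pB, qB]
    rw [show 2*Complex.I*((θ₂:ℂ) - (u:ℂ)) = (2*Complex.I*(θ₂:ℂ)) + (-2)*Complex.I*(u:ℂ) by ring,
      Complex.exp_add, Real.cos_sub]
    push_cast
    ring
  rw [integral_congr (g := fun u =>
      Complex.exp (2*Complex.I*(θ₂:ℂ)) * ((Real.cos θ₂ : ℝ):ℂ) *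
        (((Real.cos θ₂ : ℝ):ℂ) * pB b u) +
      Complex.exp (2*Complex.I*(θ₂:ℂ)) * ((Real.cos θ₂ : ℝ):ℂ) *
        (((Real.sin θ₂ : ℝ):ℂ) * qB b u)) (fun u _ => step3 u)] at step2
  rw [step2, integral_add (contII (by have := pB_cont b; fun_prop))
      (contII (by have := qB_cont b; fun_prop))]
  simp only [integral_const_mul]

lemma PQ_B (b : ℝ) :
    (∫ u in (-Real.pi)..Real.pi, pB b u) + Complex.I * ∫ u in (-Real.pi)..Real.pi, qB b u
      = -(2 * Real.pi * besselJ 1 (b/2)) := by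
  set γ : ℝ → ℂ := fun v => Complex.exp (Complex.I * ((b/2 * Real.sin v - ((1:ℤ):ℝ) * v : ℝ) : ℂ))
    with hγ
  have hbJ : besselJ 1 (b/2) = (1 / (2 * Real.pi) : ℂ) * ∫ v in (-Real.pi)..Real.pi, γ v := rfl
  have hper : Function.Periodic γ (2*Real.pi) := by
    intro v
    simp only [hγ]
    rw [Real.sin_add_two_pi,
      show Complex.I * ((b/2 * Real.sin v - ((1:ℤ):ℝ) * (v + 2*Real.pi) : ℝ) : ℂ)
          = Complex.I * ((b/2 * Real.sin v - ((1:ℤ):ℝ) * v : ℝ) : ℂ)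
            + ((-1 : ℤ) : ℂ) * (2*(Real.pi:ℂ)*Complex.I) by push_cast; ring,
      Complex.exp_add, Complex.exp_int_mul_two_pi_mul_I, mul_one]
  have key : ∀ u : ℝ, pB b u + Complex.I * qB b u = -γ (u + Real.pi) := by
    intro u
    have h1 : pB b u + Complex.I * qB b u =
        Complex.exp (-(Complex.I/2) * ((b * Real.sin u : ℝ):ℂ) + -2*Complex.I*(u:ℂ)
          + (u:ℂ)*Complex.I) := by
      rw [Complex.exp_add, Complex.exp_add, Complex.exp_mul_I]
      simp only [pB, qB, ← Complex.ofReal_cos, ← Complex.ofReal_sin]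
      ring
    have h3 : γ (u + Real.pi) =
        Complex.exp (-(Complex.I/2) * ((b * Real.sin u : ℝ):ℂ) + -2*Complex.I*(u:ℂ)
            + (u:ℂ)*Complex.I) * Complex.exp (-((Real.pi:ℂ) * Complex.I)) := by
      simp only [hγ]
      rw [← Complex.exp_add]
      congr 1
      push_cast [Real.sin_add_pi]
      ring
    rw [h1, h3, Complex.exp_neg, Complex.exp_pi_mul_I, inv_neg, inv_one]
    ring
  have h2 : (∫ u in (-Real.pi)..Real.pi, (pB b u + Complex.I * qB b u))
      = -(∫ v in (-Real.pi)..Real.pi, γ v) := by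
    rw [integral_congr (g := fun u => -γ (u + Real.pi)) (fun u _ => key u), integral_neg,
      integral_comp_add_right γ Real.pi,
      show (-Real.pi + Real.pi : ℝ) = 0 by ring,
      show (Real.pi + Real.pi : ℝ) = 0 + 2*Real.pi by ring,
      hper.intervalIntegral_add_eq 0 (-Real.pi),
      show (-Real.pi + 2*Real.pi : ℝ) = Real.pi by ring]
  rw [show (∫ u in (-Real.pi)..Real.pi, pB b u)
        + Complex.I * ∫ u in (-Real.pi)..Real.pi, qB b u
      = ∫ u in (-Real.pi)..Real.pi, (pB b u + Complex.I * qB b u) by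
    rw [integral_add (contII (pB_cont b)) (contII (by have := qB_cont b; fun_prop)),
      integral_const_mul], h2, hbJ]
  have hπ : (Real.pi : ℂ) ≠ 0 := by simpa using Real.pi_ne_zero
  field_simp

lemma lemB (b : ℝ) :
    (∫ θ₂ in (-Real.pi)..Real.pi, ∫ θ₄ in (-Real.pi)..Real.pi, gB b θ₂ θ₄)
      = -((Real.pi : ℂ)^2 * besselJ 1 (b/2)) := by
  set P := ∫ u in (-Real.pi)..Real.pi, pB b u with hP
  set Q := ∫ u in (-Real.pi)..Real.pi, qB b u with hQ
  have step : ∀ θ₂ : ℝ, (∫ θ₄ in (-Real.pi)..Real.pi, gB b θ₂ θ₄) =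
      P * (((Real.cos θ₂ : ℝ):ℂ)^2 * Complex.exp (2*Complex.I*(θ₂:ℂ))) +
      Q * (((Real.sin θ₂ : ℝ):ℂ) * ((Real.cos θ₂ : ℝ):ℂ) * Complex.exp (2*Complex.I*(θ₂:ℂ))) := by
    intro θ₂
    rw [innerB b θ₂, ← hP, ← hQ]
    ring
  rw [integral_congr (g := fun θ₂ =>
      P * (((Real.cos θ₂ : ℝ):ℂ)^2 * Complex.exp (2*Complex.I*(θ₂:ℂ))) +
      Q * (((Real.sin θ₂ : ℝ):ℂ) * ((Real.cos θ₂ : ℝ):ℂ) * Complex.exp (2*Complex.I*(θ₂:ℂ))))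
      (fun θ₂ _ => step θ₂),
    integral_add (contII (by fun_prop)) (contII (by fun_prop)),
    integral_const_mul, integral_const_mul, T1p, T2p]
  have hPQ := PQ_B b
  rw [← hP, ← hQ] at hPQ
  linear_combination ((Real.pi : ℂ)/2) * hPQ

end ThreeBodyAux

open ThreeBodyAux

/-- the off-diagonal (Δn₁ = −2) angular integral `Θ⁽⁻²⁾` of the
three-body graviton-gap computation equals `−π⁴·J₁(a/2)·J₁(b/2)`. -/
theorem threebody_offdiagonal_angular_integral (a b : ℝ) :
    (∫ θ₁ in (-Real.pi)..Real.pi, ∫ θ₂ in (-Real.pi)..Real.pi,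
      ∫ θ₃ in (-Real.pi)..Real.pi, ∫ θ₄ in (-Real.pi)..Real.pi,
        Complex.exp (-(Complex.I / 2) *
            ((a * Real.sin (θ₁ - θ₃) + b * Real.sin (θ₂ - θ₄) : ℝ) : ℂ)) *
          Complex.exp (-2 * Complex.I * ((θ₃ - θ₄ : ℝ) : ℂ)) *
          ((Real.cos θ₁ * Real.cos θ₂ * Real.cos θ₃ * Real.cos θ₄ : ℝ) : ℂ))
      = -(Real.pi : ℂ) ^ 4 * besselJ 1 (a / 2) * besselJ 1 (b / 2) := by
  have key : ∀ θ₁ θ₂ θ₃ θ₄ : ℝ,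
      Complex.exp (-(Complex.I / 2) *
            ((a * Real.sin (θ₁ - θ₃) + b * Real.sin (θ₂ - θ₄) : ℝ) : ℂ)) *
          Complex.exp (-2 * Complex.I * ((θ₃ - θ₄ : ℝ) : ℂ)) *
          ((Real.cos θ₁ * Real.cos θ₂ * Real.cos θ₃ * Real.cos θ₄ : ℝ) : ℂ)
        = fA a θ₁ θ₃ * gB b θ₂ θ₄ := by
    intro θ₁ θ₂ θ₃ θ₄
    have hR : fA a θ₁ θ₃ * gB b θ₂ θ₄ =
        (Complex.exp (-(Complex.I/2) * ((a * Real.sin (θ₁ - θ₃) : ℝ) : ℂ)) *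
          Complex.exp (-(Complex.I/2) * ((b * Real.sin (θ₂ - θ₄) : ℝ) : ℂ))) *
        (Complex.exp (-2*Complex.I*(θ₃:ℂ)) * Complex.exp (2*Complex.I*(θ₄:ℂ))) *
        (((Real.cos θ₁ : ℝ):ℂ) * ((Real.cos θ₂ : ℝ):ℂ) * ((Real.cos θ₃ : ℝ):ℂ) *
          ((Real.cos θ₄ : ℝ):ℂ)) := by
      simp only [fA, gB]; ring
    rw [hR]
    simp only [← Complex.exp_add]
    congr 1
    · push_cast
      ring
    · push_cast
      ring
  simp_rw [key]
  simp_rw [integral_const_mul]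
  simp_rw [integral_mul_const]
  simp_rw [integral_const_mul]
  simp_rw [integral_mul_const]
  rw [lemA a, lemB b]
  ring
end

section
/- For all i, j ∈ ℕ, ∫₀^∞ x·e^{−x}·L_i(x)·L_j^{(1)}(x) dx = (i+1)·δ_{i,j} − i·δ_{i−1,j}. -/
/-!
Expanding `L_j^{(1)}` in monomials reduces the integral to the moments
`∫₀^∞ x^m e^{-x} L_i(x) dx = (-1)^i m! C(m,i)`. These follow from `∫₀^∞ x^n e^{-x} dx = n!`,
since the resulting alternating sum `∑_k (-1)^k C(i,k) C(m+k,m)` is, up to sign, the `i`-th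
forward difference of `x ↦ C(x,m)`. What remains, `∑_l (-1)^l C(j,l) C(l+1,i)`, is again such a
forward difference, and it vanishes unless `i = j` or `i = j + 1`.
-/

open MeasureTheory Finset

/-- Generalized Laguerre polynomial
`L_n^{(α)}(x) = ∑_{k=0}^{n} ((−1)^k/k!)·((α+k+1)⋯(α+n)/(n−k)!)·x^k`,
defined for any real `α`. -/
noncomputable def genLaguerre (n : ℕ) (α : ℝ) (x : ℝ) : ℝ :=
  ∑ k ∈ Finset.range (n + 1),
    ((-1 : ℝ) ^ k / k.factorial) *
      ((∏ j ∈ Finset.Icc (k + 1) n, (α + j)) / (n - k).factorial) * x ^ k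

open Nat Real Set

theorem fwdDiff_iter_choose_apply (n m y : ℕ) :
    (fwdDiff 1)^[n] (fun x ↦ x.choose m : ℕ → ℤ) y
      = if n ≤ m then (y.choose (m - n) : ℤ) else 0 := by
  split_ifs with h
  · obtain ⟨j, rfl⟩ := Nat.exists_eq_add_of_le h
    rw [fwdDiff_iter_choose, Nat.add_sub_cancel_left]
  · obtain ⟨r, rfl⟩ := Nat.exists_eq_add_of_lt (not_le.mp h)
    have hm := fwdDiff_iter_choose 0 m
    rw [add_zero] at hm
    rw [show m + r + 1 = r + 1 + m by ring, Function.iterate_add_apply, hm,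
      Function.iterate_succ_apply]
    simp [fwdDiff_iter_eq_sum_shift]

theorem sum_range_neg_one_pow_mul_choose_mul_choose_add (n m y : ℕ) :
    ∑ k ∈ range (n + 1), (-1 : ℤ) ^ k * n.choose k * (y + k).choose m
      = (-1) ^ n * if n ≤ m then (y.choose (m - n) : ℤ) else 0 := by
  rw [← fwdDiff_iter_choose_apply, fwdDiff_iter_eq_sum_shift, mul_sum]
  refine sum_congr rfl fun k hk ↦ ?_
  obtain ⟨r, rfl⟩ := Nat.exists_eq_add_of_le (Nat.lt_succ_iff.mp (mem_range.mp hk))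
  have hsq : ((-1 : ℤ) ^ r) ^ 2 = 1 := by rw [← pow_mul, Even.neg_one_pow ⟨r, by ring⟩]
  simp only [smul_eq_mul, Nat.add_sub_cancel_left, pow_add, mul_one]
  linear_combination -(-1) ^ k * ((k + r).choose k : ℤ) * ((y + k).choose m : ℤ) * hsq

theorem sum_range_neg_one_pow_mul_choose_mul_add_choose (i m : ℕ) :
    ∑ k ∈ range (i + 1), (-1 : ℤ) ^ k * i.choose k * (m + k).choose m
      = (-1) ^ i * m.choose i := by
  rw [sum_range_neg_one_pow_mul_choose_mul_choose_add]
  split_ifs with h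
  · rw [choose_symm h]
  · rw [choose_eq_zero_of_lt (not_le.mp h), Nat.cast_zero]

theorem neg_one_pow_mul_sum_range_neg_one_pow_mul_choose_mul_add_one_choose (i j : ℕ) :
    (-1 : ℤ) ^ i * ∑ l ∈ range (j + 1), (-1 : ℤ) ^ l * j.choose l * (l + 1).choose i
      = (if i = j then 1 else 0) - (if i = j + 1 then 1 else 0) := by
  have h := sum_range_neg_one_pow_mul_choose_mul_choose_add j i 1
  simp_rw [add_comm 1] at h
  rw [h]
  rcases lt_or_ge i j with hij | hji
  · simp [hij.ne, not_le.mpr hij]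
    omega
  · obtain ⟨d, rfl⟩ := Nat.exists_eq_add_of_le hji
    rcases d with _ | _ | d
    · simp [← pow_add, ← two_mul, pow_mul]
    · simp [← pow_add, ← two_mul, pow_mul, pow_succ]
    · simp [choose_eq_zero_of_lt]

theorem choose_add_one_add_one_div_factorial_mul_factorial_add_one (j l : ℕ) :
    ((j + 1).choose (l + 1) / l ! : ℝ) * (l + 1)! = (j + 1) * j.choose l := by
  have hc : ((j + 1 : ℕ) : ℝ) * j.choose l = (j + 1).choose (l + 1) * (l + 1 : ℕ) := by
    exact_mod_cast add_one_mul_choose_eq j l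
  rw [factorial_succ, Nat.cast_mul]
  push_cast at hc ⊢
  rw [hc]
  field_simp

theorem factorial_mul_prod_Icc_add (a k n : ℕ) (hkn : k ≤ n) :
    ((k + a)! : ℝ) * ∏ j ∈ Icc (k + 1) n, ((a : ℝ) + j) = (n + a)! := by
  induction n, hkn using Nat.le_induction with
  | base => simp
  | succ n hkn ih =>
    rw [prod_Icc_succ_top (by omega), ← mul_assoc, ih, show n + 1 + a = (n + a) + 1 by ring,
      factorial_succ]
    push_cast
    ring

theorem genLaguerre_natCast (n a : ℕ) (x : ℝ) :
    genLaguerre n a x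
      = ∑ k ∈ range (n + 1), (-1) ^ k * ((n + a).choose (k + a) / k ! : ℝ) * x ^ k := by
  refine sum_congr rfl fun k hk ↦ ?_
  have hkn : k ≤ n := Nat.lt_succ_iff.mp (mem_range.mp hk)
  rw [Nat.cast_choose ℝ (by omega : k + a ≤ n + a), Nat.add_sub_add_right,
    ← factorial_mul_prod_Icc_add a k n hkn]
  have : ((k + a)! : ℝ) ≠ 0 := by positivity
  field_simp

theorem integrableOn_pow_mul_exp_neg (n : ℕ) :
    IntegrableOn (fun x : ℝ ↦ x ^ n * exp (-x)) (Ioi 0) := by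
  have h := GammaIntegral_convergent (s := (n : ℝ) + 1) (by positivity)
  simp_rw [add_sub_cancel_right, rpow_natCast, mul_comm (exp _)] at h
  exact h

theorem integral_pow_mul_exp_neg (n : ℕ) :
    ∫ x in Ioi (0 : ℝ), x ^ n * exp (-x) = n ! := by
  rw [← Gamma_nat_eq_factorial, Gamma_eq_integral (by positivity)]
  simp_rw [add_sub_cancel_right, rpow_natCast, mul_comm (exp _)]

theorem pow_mul_exp_neg_mul_sum (m : ℕ) (s : Finset ℕ) (c : ℕ → ℝ) (x : ℝ) :
    x ^ m * exp (-x) * ∑ k ∈ s, c k * x ^ k = ∑ k ∈ s, c k * (x ^ (m + k) * exp (-x)) := by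
  rw [mul_sum]
  exact sum_congr rfl fun k _ ↦ by ring

theorem integrableOn_pow_mul_exp_neg_mul_sum (m : ℕ) (s : Finset ℕ) (c : ℕ → ℝ) :
    IntegrableOn (fun x ↦ x ^ m * exp (-x) * ∑ k ∈ s, c k * x ^ k) (Ioi 0) := by
  simp_rw [pow_mul_exp_neg_mul_sum]
  exact integrable_finsetSum _ fun k _ ↦ (integrableOn_pow_mul_exp_neg _).const_mul _

theorem integral_pow_mul_exp_neg_mul_sum (m : ℕ) (s : Finset ℕ) (c : ℕ → ℝ) :
    ∫ x in Ioi (0 : ℝ), x ^ m * exp (-x) * ∑ k ∈ s, c k * x ^ k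
      = ∑ k ∈ s, c k * (m + k)! := by
  simp_rw [pow_mul_exp_neg_mul_sum]
  rw [integral_finsetSum _ fun k _ ↦ (integrableOn_pow_mul_exp_neg _).const_mul _]
  simp_rw [integral_const_mul, integral_pow_mul_exp_neg]

theorem integrableOn_pow_mul_exp_neg_mul_genLaguerre (m n : ℕ) (α : ℝ) :
    IntegrableOn (fun x ↦ x ^ m * exp (-x) * genLaguerre n α x) (Ioi 0) :=
  integrableOn_pow_mul_exp_neg_mul_sum m _ _

theorem integral_pow_mul_exp_neg_mul_genLaguerre_zero (m i : ℕ) :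
    ∫ x in Ioi (0 : ℝ), x ^ m * exp (-x) * genLaguerre i 0 x = (-1) ^ i * m ! * m.choose i := by
  have hL (x : ℝ) :
      genLaguerre i 0 x = ∑ k ∈ range (i + 1), (-1) ^ k * (i.choose k / k ! : ℝ) * x ^ k := by
    simpa using genLaguerre_natCast i 0 x
  have hterm (k : ℕ) : (-1) ^ k * (i.choose k / k ! : ℝ) * (m + k)!
      = m ! * ((-1 : ℤ) ^ k * i.choose k * (m + k).choose m : ℤ) := by
    rw [choose_symm_add, ← add_choose_mul_factorial_mul_factorial]
    push_cast
    field_simp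
  simp_rw [hL, integral_pow_mul_exp_neg_mul_sum, hterm, ← mul_sum]
  rw [← Int.cast_sum, sum_range_neg_one_pow_mul_choose_mul_add_choose]
  push_cast
  ring

theorem integral_mul_exp_neg_mul_genLaguerre_zero_mul_sum (i : ℕ) (s : Finset ℕ) (c : ℕ → ℝ) :
    ∫ x in Ioi (0 : ℝ), x * exp (-x) * genLaguerre i 0 x * ∑ l ∈ s, c l * x ^ l
      = ∑ l ∈ s, c l * ((-1) ^ i * (l + 1)! * (l + 1).choose i) := by
  have hpt (x : ℝ) : x * exp (-x) * genLaguerre i 0 x * ∑ l ∈ s, c l * x ^ l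
      = ∑ l ∈ s, c l * (x ^ (l + 1) * exp (-x) * genLaguerre i 0 x) := by
    rw [mul_sum]
    exact sum_congr rfl fun l _ ↦ by ring
  simp_rw [hpt]
  rw [integral_finsetSum _ fun l _ ↦
    (integrableOn_pow_mul_exp_neg_mul_genLaguerre (l + 1) i 0).const_mul _]
  simp_rw [integral_const_mul, integral_pow_mul_exp_neg_mul_genLaguerre_zero]

/-- `∫₀^∞ x·e^{−x}·L_i(x)·L_j^{(1)}(x) dx = (i+1)·δ_{i,j} − i·δ_{i−1,j}`. -/
theorem laguerre_weighted_integral_one (i j : ℕ) :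
    (∫ x in Set.Ioi (0 : ℝ), x * Real.exp (-x) * genLaguerre i 0 x * genLaguerre j 1 x)
      = (i + 1) * (if i = j then 1 else 0) - i * (if (i : ℤ) - 1 = j then 1 else 0) := by
  have hL (x : ℝ) : genLaguerre j 1 x
      = ∑ l ∈ range (j + 1), (-1) ^ l * ((j + 1).choose (l + 1) / l ! : ℝ) * x ^ l := by
    simpa using genLaguerre_natCast j 1 x
  simp_rw [hL, integral_mul_exp_neg_mul_genLaguerre_zero_mul_sum]
  calc ∑ l ∈ range (j + 1), (-1) ^ l * ((j + 1).choose (l + 1) / l ! : ℝ)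
          * ((-1) ^ i * (l + 1)! * (l + 1).choose i)
      = (j + 1) * (((-1 : ℤ) ^ i * ∑ l ∈ range (j + 1),
          (-1 : ℤ) ^ l * j.choose l * (l + 1).choose i : ℤ) : ℝ) := by
        push_cast
        rw [mul_sum, mul_sum]
        refine sum_congr rfl fun l _ ↦ ?_
        linear_combination (-1) ^ l * (-1) ^ i * ((l + 1).choose i : ℝ) *
          choose_add_one_add_one_div_factorial_mul_factorial_add_one j l
    _ = _ := by
        rw [neg_one_pow_mul_sum_range_neg_one_pow_mul_choose_mul_add_one_choose]
        simp only [show (i : ℤ) - 1 = j ↔ i = j + 1 by omega]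
        split_ifs <;> first | (exfalso; omega) | (subst_vars; push_cast; ring)
end

section
/- For all i, j ∈ ℕ, ∫₀^∞ x·e^{−x}·L_i(x)·L_j(x) dx = (i+1)·δ_{i,j} − (i+1)·δ_{i,j−1} − i·δ_{i−1,j} + i·δ_{i−1,j−1}. -/
open MeasureTheory Finset

/-! ### Combinatorial lemmas -/

/-- Pascal step for the alternating sum `∑ l, (-1)^l C(j,l) C(m+l,r)`. -/
lemma lag_pascal_step (j m r : ℕ) :
    ∑ l ∈ range (j + 2), (-1:ℤ)^l * ((j+1).choose l) * ((m + l).choose r)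
      = (∑ l ∈ range (j + 1), (-1:ℤ)^l * (j.choose l) * ((m + l).choose r))
        - ∑ l ∈ range (j + 1), (-1:ℤ)^l * (j.choose l) * ((m + 1 + l).choose r) := by
  rw [Finset.sum_range_succ' (fun l => (-1:ℤ)^l * ((j+1).choose l) * ((m + l).choose r)) (j+1)]
  rw [Finset.sum_range_succ' (fun l => (-1:ℤ)^l * (j.choose l) * ((m + l).choose r)) j]
  have h1 : ∀ l, (-1:ℤ)^(l+1) * ((j+1).choose (l+1)) * ((m + (l+1)).choose r)
      = -((-1:ℤ)^l * (j.choose l) * ((m + 1 + l).choose r))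
        - ((-1:ℤ)^l * (j.choose (l+1)) * ((m + 1 + l).choose r)) := by
    intro l
    rw [Nat.choose_succ_succ]
    have : m + (l+1) = m + 1 + l := by omega
    rw [this]
    push_cast
    ring
  simp only [h1]
  rw [Finset.sum_sub_distrib, Finset.sum_neg_distrib]
  have h2 : ∀ l, (-1:ℤ)^(l+1) * (j.choose (l+1)) * ((m + (l+1)).choose r)
      = -((-1:ℤ)^l * (j.choose (l+1)) * ((m + 1 + l).choose r)) := by
    intro l
    have : m + (l+1) = m + 1 + l := by omega
    rw [this]; ring
  simp only [h2]
  have h3 : ∑ l ∈ range (j+1), ((-1:ℤ)^l * (j.choose (l+1)) * ((m + 1 + l).choose r))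
      = ∑ l ∈ range j, ((-1:ℤ)^l * (j.choose (l+1)) * ((m + 1 + l).choose r)) := by
    rw [Finset.sum_range_succ, Nat.choose_succ_self]
    push_cast; ring
  rw [h3, Finset.sum_neg_distrib]
  simp only [Nat.choose_zero_right, Nat.cast_one, add_zero]
  ring

lemma lag_alt_sum (j : ℕ) : ∀ m r : ℕ,
    ∑ l ∈ range (j + 1), (-1:ℤ)^l * (j.choose l) * ((m + l).choose r)
      = if j ≤ r then (-1:ℤ)^j * (m.choose (r - j)) else 0 := by
  induction j with
  | zero => intro m r; simp
  | succ j ih =>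
    intro m r
    rw [show j + 1 + 1 = j + 2 from rfl, lag_pascal_step, ih m, ih (m+1)]
    by_cases h1 : j + 1 ≤ r
    · have h0 : j ≤ r := by omega
      rw [if_pos h1, if_pos h0, if_pos h0]
      have h2 : r - j = (r - (j+1)) + 1 := by omega
      rw [h2, Nat.choose_succ_succ (m) (r - (j+1))]
      push_cast
      ring
    · rw [if_neg h1]
      by_cases h0 : j ≤ r
      · have hjr : j = r := by omega
        subst hjr
        simp
      · rw [if_neg h0, if_neg h0]
        ring

lemma lag_choose_choose_sum (i t : ℕ) :
    ∑ k ∈ range (i + 1), (-1:ℤ)^k * (i.choose k) * (k.choose t)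
      = if i = t then (-1:ℤ)^i else 0 := by
  by_cases h : t ≤ i
  · rw [Finset.range_eq_Ico, ← Finset.sum_Ico_consecutive _ (Nat.zero_le t) (by omega : t ≤ i + 1)]
    have h1 : ∑ k ∈ Ico 0 t, (-1:ℤ)^k * (i.choose k) * (k.choose t) = 0 := by
      apply Finset.sum_eq_zero
      intro k hk
      rw [Nat.choose_eq_zero_of_lt (Finset.mem_Ico.mp hk).2]
      push_cast; ring
    rw [h1, zero_add, Finset.sum_Ico_eq_sum_range]
    have h2 : i + 1 - t = (i - t) + 1 := by omega
    rw [h2]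
    have h3 : ∀ m ∈ range (i - t + 1), (-1:ℤ)^(t + m) * (i.choose (t + m)) * ((t + m).choose t)
        = ((-1:ℤ)^t * (i.choose t)) * ((-1:ℤ)^m * ((i - t).choose m)) := by
      intro m hm
      have hm' : t + m ≤ i := by
        have := Finset.mem_range.mp hm; omega
      have := Nat.choose_mul (n := i) (Nat.le_add_right t m)
      rw [Nat.add_sub_cancel_left] at this
      have hcast : ((i.choose (t + m) : ℤ)) * ((t + m).choose t)
          = (i.choose t : ℤ) * ((i - t).choose m) := by
        exact_mod_cast congrArg (Nat.cast : ℕ → ℤ) this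
      rw [pow_add]
      linear_combination ((-1:ℤ)^t * (-1:ℤ)^m) * hcast
    rw [Finset.sum_congr rfl h3, ← Finset.mul_sum, Int.alternating_sum_range_choose]
    by_cases hit : i = t
    · subst hit; simp
    · rw [if_neg (by omega : ¬ i - t = 0), if_neg hit, mul_zero]
  · rw [if_neg (by omega)]
    apply Finset.sum_eq_zero
    intro k hk
    have : k < t := by have := Finset.mem_range.mp hk; omega
    rw [Nat.choose_eq_zero_of_lt this]
    push_cast; ring

lemma lag_key_nat (k t : ℕ) :
    (k + 1) * ((k + 1).choose (t + 1))
      = (t + 2) * (k.choose (t + 2)) + (2 * t + 3) * (k.choose (t + 1)) + (t + 1) * (k.choose t) := by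
  have e1 : (k + 1) * k.choose t = (t + 1) * (k.choose t + k.choose (t + 1)) := by
    rw [← Nat.choose_succ_succ]
    have h := Nat.add_one_mul_choose_eq k t
    rw [h, mul_comm]
  have e2 : (k + 1) * k.choose (t + 1) = (t + 2) * (k.choose (t + 1) + k.choose (t + 2)) := by
    rw [← Nat.choose_succ_succ]
    have h := Nat.add_one_mul_choose_eq k (t + 1)
    rw [h, mul_comm]
  rw [Nat.choose_succ_succ, Nat.mul_add, e1, e2]
  ring

lemma lag_key (k j : ℕ) :
    ((k + 1) * ((k + 1).choose j) : ℤ)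
      = (j + 1) * (k.choose (j + 1)) + (2 * j + 1) * (k.choose j) + j * (k.choose (j - 1)) := by
  cases j with
  | zero => simp [Nat.choose_one_right]
  | succ t =>
    have h := lag_key_nat k t
    push_cast
    push_cast at h
    simp only [show t + 1 + 1 = t + 2 from rfl]
    linarith

lemma lag_Z (i j : ℕ) :
    ∑ k ∈ range (i + 1), (-1:ℤ)^k * (i.choose k) * ((k + 1) * ((k + 1).choose j))
      = (j + 1) * (if i = j + 1 then (-1:ℤ)^i else 0)
        + (2 * j + 1) * (if i = j then (-1:ℤ)^i else 0)
        + j * (if i = j - 1 then (-1:ℤ)^i else 0) := by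
  have h : ∀ k ∈ range (i + 1), (-1:ℤ)^k * (i.choose k) * ((k + 1) * ((k + 1).choose j))
      = (j + 1) * ((-1:ℤ)^k * (i.choose k) * (k.choose (j + 1)))
        + (2 * j + 1) * ((-1:ℤ)^k * (i.choose k) * (k.choose j))
        + j * ((-1:ℤ)^k * (i.choose k) * (k.choose (j - 1))) := by
    intro k _
    rw [lag_key]
    ring
  rw [Finset.sum_congr rfl h]
  rw [Finset.sum_add_distrib, Finset.sum_add_distrib, ← Finset.mul_sum, ← Finset.mul_sum,
    ← Finset.mul_sum, lag_choose_choose_sum, lag_choose_choose_sum, lag_choose_choose_sum]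

/-! ### Analytic lemmas -/

lemma lag_integrable_pow_mul_exp (n : ℕ) :
    IntegrableOn (fun x : ℝ => x ^ n * Real.exp (-x)) (Set.Ioi 0) := by
  have h := Real.GammaIntegral_convergent (s := (n : ℝ) + 1) (by positivity)
  apply h.congr_fun ?_ measurableSet_Ioi
  intro x hx
  simp only
  rw [add_sub_cancel_right, Real.rpow_natCast, mul_comm]

lemma lag_integral_pow_mul_exp (n : ℕ) :
    (∫ x in Set.Ioi (0:ℝ), x ^ n * Real.exp (-x)) = n.factorial := by
  have h := Real.Gamma_eq_integral (s := (n : ℝ) + 1) (by positivity)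
  rw [Real.Gamma_nat_eq_factorial] at h
  rw [h]
  apply setIntegral_congr_fun measurableSet_Ioi
  intro x hx
  simp only
  rw [add_sub_cancel_right, Real.rpow_natCast, mul_comm]

lemma lag_prod_Ioc (m : ℕ) : (∏ x ∈ Ioc 0 m, x) = m.factorial := by
  induction m with
  | zero => simp
  | succ m ih =>
    rw [Finset.prod_Ioc_succ_top (Nat.zero_le _), ih, Nat.factorial_succ, mul_comm]

lemma genLaguerre_zero_eq (n : ℕ) (x : ℝ) :
    genLaguerre n 0 x
      = ∑ k ∈ range (n + 1), ((-1:ℝ)^k * n.choose k / k.factorial) * x ^ k := by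
  unfold genLaguerre
  apply Finset.sum_congr rfl
  intro k hk
  have hk' : k ≤ n := by have := Finset.mem_range.mp hk; omega
  congr 1
  have hprod : (∏ j ∈ Icc (k + 1) n, ((0:ℝ) + j)) = ((n.factorial / k.factorial : ℕ) : ℝ) := by
    have h1 : (∏ j ∈ Icc (k + 1) n, j) = n.factorial / k.factorial := by
      rw [Finset.Icc_add_one_left_eq_Ioc]
      have h2 := Finset.prod_Ioc_consecutive (fun t : ℕ => t) (Nat.zero_le k) hk'
      rw [lag_prod_Ioc, lag_prod_Ioc] at h2
      exact (Nat.div_eq_of_eq_mul_left (Nat.factorial_pos k) (by rw [← h2, mul_comm])).symm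
    rw [← h1]
    push_cast
    apply Finset.prod_congr rfl
    intros; rw [zero_add]
  rw [hprod]
  have hdvd : k.factorial ∣ n.factorial := Nat.factorial_dvd_factorial hk'
  have h3 : ((n.factorial / k.factorial : ℕ) : ℝ) = (n.factorial : ℝ) / (k.factorial : ℝ) := by
    rw [Nat.cast_div hdvd (by exact_mod_cast (Nat.factorial_pos k).ne')]
  rw [h3, Nat.cast_choose ℝ hk']
  have h4 : (k.factorial : ℝ) ≠ 0 := by exact_mod_cast (Nat.factorial_pos k).ne'
  have h5 : ((n - k).factorial : ℝ) ≠ 0 := by exact_mod_cast (Nat.factorial_pos (n - k)).ne'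
  field_simp

/-- `∫₀^∞ x·e^{−x}·L_i(x)·L_j(x) dx
= (i+1)·δ_{i,j} − (i+1)·δ_{i,j−1} − i·δ_{i−1,j} + i·δ_{i−1,j−1}`. -/
theorem laguerre_weighted_integral_zero (i j : ℕ) :
    (∫ x in Set.Ioi (0 : ℝ), x * Real.exp (-x) * genLaguerre i 0 x * genLaguerre j 0 x)
      = (i + 1) * (if i = j then 1 else 0) - (i + 1) * (if (i : ℤ) = (j : ℤ) - 1 then 1 else 0)
        - i * (if (i : ℤ) - 1 = j then 1 else 0)
        + i * (if (i : ℤ) - 1 = (j : ℤ) - 1 then 1 else 0) := by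
  -- Step 1: expand the integrand as a double sum
  have hexp : ∀ x : ℝ, x * Real.exp (-x) * genLaguerre i 0 x * genLaguerre j 0 x
      = ∑ k ∈ range (i+1), ∑ l ∈ range (j+1),
          (((-1:ℝ)^k * i.choose k / k.factorial) * ((-1:ℝ)^l * j.choose l / l.factorial))
            * (x^(k+l+1) * Real.exp (-x)) := by
    intro x
    rw [genLaguerre_zero_eq, genLaguerre_zero_eq, Finset.mul_sum]
    have hstep : ∀ l ∈ range (j+1),
        (x * Real.exp (-x) * ∑ k ∈ range (i+1), ((-1:ℝ)^k * i.choose k / k.factorial) * x ^ k)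
          * (((-1:ℝ)^l * j.choose l / l.factorial) * x ^ l)
        = ∑ k ∈ range (i+1),
            (((-1:ℝ)^k * i.choose k / k.factorial) * ((-1:ℝ)^l * j.choose l / l.factorial))
              * (x^(k+l+1) * Real.exp (-x)) := by
      intro l _
      rw [Finset.mul_sum, Finset.sum_mul]
      apply Finset.sum_congr rfl
      intro k _
      ring
    rw [Finset.sum_congr rfl hstep, Finset.sum_comm]
  simp only [hexp]
  -- Step 2: integrate term by term
  have hint : ∀ (k l : ℕ), Integrable
      (fun x : ℝ => (((-1:ℝ)^k * i.choose k / k.factorial) * ((-1:ℝ)^l * j.choose l / l.factorial))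
        * (x^(k+l+1) * Real.exp (-x))) (volume.restrict (Set.Ioi 0)) :=
    fun k l => (lag_integrable_pow_mul_exp (k+l+1)).const_mul _
  rw [MeasureTheory.integral_finset_sum _
    (fun k _ => integrable_finset_sum _ (fun l _ => hint k l))]
  have hval : ∀ k ∈ range (i+1),
      (∫ x in Set.Ioi (0:ℝ), ∑ l ∈ range (j+1),
          (((-1:ℝ)^k * i.choose k / k.factorial) * ((-1:ℝ)^l * j.choose l / l.factorial))
            * (x^(k+l+1) * Real.exp (-x)))
      = ∑ l ∈ range (j+1),
          (((-1:ℝ)^k * i.choose k / k.factorial) * ((-1:ℝ)^l * j.choose l / l.factorial))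
            * ((k+l+1).factorial : ℝ) := by
    intro k _
    rw [MeasureTheory.integral_finset_sum _ (fun l _ => hint k l)]
    apply Finset.sum_congr rfl
    intro l _
    rw [MeasureTheory.integral_const_mul, lag_integral_pow_mul_exp (k+l+1)]
  rw [Finset.sum_congr rfl hval]
  -- Step 3: evaluate the inner sum
  have hA : ∀ k : ℕ, ∑ l ∈ range (j+1), ((-1:ℝ)^l * (j.choose l) * ((k+1+l).choose (k+1)))
      = (-1:ℝ)^j * ((k+1).choose j) := by
    intro k
    have h := lag_alt_sum j (k+1) (k+1)
    have h2 : (if j ≤ k+1 then (-1:ℤ)^j * ((k+1).choose (k+1-j)) else 0)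
        = (-1:ℤ)^j * ((k+1).choose j) := by
      split_ifs with hj
      · rw [Nat.choose_symm hj]
      · rw [Nat.choose_eq_zero_of_lt (by omega)]; simp
    rw [h2] at h
    have h' := congrArg (fun z : ℤ => (z : ℝ)) h
    push_cast at h'
    exact h'
  have hinner : ∀ k ∈ range (i+1),
      (∑ l ∈ range (j+1),
        (((-1:ℝ)^k * i.choose k / k.factorial) * ((-1:ℝ)^l * j.choose l / l.factorial))
          * ((k+l+1).factorial : ℝ))
      = ((-1:ℝ)^k * i.choose k * (k+1)) * ((-1:ℝ)^j * ((k+1).choose j)) := by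
    intro k _
    have hterm : ∀ l ∈ range (j+1),
        (((-1:ℝ)^k * i.choose k / k.factorial) * ((-1:ℝ)^l * j.choose l / l.factorial))
          * ((k+l+1).factorial : ℝ)
        = ((-1:ℝ)^k * i.choose k * (k+1))
            * ((-1:ℝ)^l * (j.choose l) * ((k+1+l).choose (k+1))) := by
      intro l _
      have hfac : ((k+1+l).choose (k+1) : ℝ) * ((k+1).factorial : ℝ) * (l.factorial : ℝ)
          = ((k+l+1).factorial : ℝ) := by
        have h0 := Nat.choose_mul_factorial_mul_factorial (show k+1 ≤ k+1+l by omega)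
        rw [Nat.add_sub_cancel_left] at h0
        have h0' : (k+1+l).choose (k+1) * (k+1).factorial * l.factorial
            = (k+l+1).factorial := by
          rw [show k+l+1 = k+1+l from by omega]; exact h0
        exact_mod_cast congrArg (Nat.cast : ℕ → ℝ) h0'
      have hsucc : ((k+1).factorial : ℝ) = (k+1) * (k.factorial : ℝ) := by
        exact_mod_cast congrArg (Nat.cast : ℕ → ℝ) (Nat.factorial_succ k)
      have h4 : (k.factorial : ℝ) ≠ 0 := by exact_mod_cast (Nat.factorial_pos k).ne'
      have h5 : (l.factorial : ℝ) ≠ 0 := by exact_mod_cast (Nat.factorial_pos l).ne'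
      rw [← hfac, hsucc]
      field_simp
    rw [Finset.sum_congr rfl hterm, ← Finset.mul_sum, hA k]
  rw [Finset.sum_congr rfl hinner]
  -- Step 4: evaluate the outer sum
  have htot : (∑ k ∈ range (i+1),
      ((-1:ℝ)^k * i.choose k * (k+1)) * ((-1:ℝ)^j * ((k+1).choose j)))
      = (-1:ℝ)^j * ((((j:ℤ) + 1) * (if i = j + 1 then (-1:ℤ)^i else 0)
          + (2*(j:ℤ)+1) * (if i = j then (-1:ℤ)^i else 0)
          + (j:ℤ) * (if i = j - 1 then (-1:ℤ)^i else 0) : ℤ) : ℝ) := by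
    rw [← lag_Z i j]
    push_cast
    rw [Finset.mul_sum]
    apply Finset.sum_congr rfl
    intro k _
    ring
  rw [htot]
  -- Step 5: case analysis
  by_cases h1 : i = j
  · subst h1
    rcases Nat.eq_zero_or_pos i with h0 | h0
    · subst h0; norm_num
    · have c1 : i ≠ i + 1 := by omega
      have c2 : i ≠ i - 1 := by omega
      have c3 : ¬((i:ℤ) = (i:ℤ) - 1) := by omega
      have c4 : ¬((i:ℤ) - 1 = (i:ℤ)) := by omega
      rw [if_neg c1, if_pos rfl, if_neg c2, if_pos rfl, if_neg c3, if_neg c4, if_pos rfl]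
      push_cast
      have hs : (-1:ℝ)^i * (-1:ℝ)^i = 1 := by rw [← mul_pow]; norm_num
      linear_combination (2*(i:ℝ)+1) * hs
  · by_cases h2 : i = j + 1
    · have c2 : i ≠ j - 1 := by omega
      have c3 : ¬((i:ℤ) = (j:ℤ) - 1) := by omega
      have c4 : ((i:ℤ) - 1 = (j:ℤ)) := by omega
      have c5 : ¬((i:ℤ) - 1 = (j:ℤ) - 1) := by omega
      rw [if_pos h2, if_neg h1, if_neg c2, if_neg h1, if_neg c3, if_pos c4, if_neg c5]
      subst h2
      push_cast
      have hs : (-1:ℝ)^j * (-1:ℝ)^(j+1) = -1 := by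
        rw [pow_succ, ← mul_assoc, ← mul_pow]; norm_num
      linear_combination ((j:ℝ)+1) * hs
    · by_cases h3 : j = i + 1
      · have c2 : i = j - 1 := by omega
        have c3 : ((i:ℤ) = (j:ℤ) - 1) := by omega
        have c4 : ¬((i:ℤ) - 1 = (j:ℤ)) := by omega
        have c5 : ¬((i:ℤ) - 1 = (j:ℤ) - 1) := by omega
        rw [if_neg h2, if_neg h1, if_pos c2, if_neg h1, if_pos c3, if_neg c4, if_neg c5]
        subst h3
        push_cast
        have hs : (-1:ℝ)^(i+1) * (-1:ℝ)^i = -1 := by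
          rw [pow_succ, mul_comm ((-1:ℝ)^i) (-1), mul_assoc, ← mul_pow]; norm_num
        linear_combination ((i:ℝ)+1) * hs
      · have c2 : i ≠ j - 1 := by omega
        have c3 : ¬((i:ℤ) = (j:ℤ) - 1) := by omega
        have c4 : ¬((i:ℤ) - 1 = (j:ℤ)) := by omega
        have c5 : ¬((i:ℤ) - 1 = (j:ℤ) - 1) := by omega
        rw [if_neg h2, if_neg h1, if_neg c2, if_neg h1, if_neg c3, if_neg c4, if_neg c5]
        push_cast
        ring
end

section
/- For all b, n ∈ ℕ, ∫₀^∞ x²·e^{−x}·L_b^{(1)}(x)·L_n^{(2)}(x) dx = (n+1)(n+2)·(δ_{n,b} − δ_{n+1,b}). -/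
open MeasureTheory Finset

open Function fwdDiff

lemma integrableOn_pow_exp (m : ℕ) :
    IntegrableOn (fun x : ℝ => x ^ m * Real.exp (-x)) (Set.Ioi 0) := by
  have h := Real.GammaIntegral_convergent (s := m + 1) (by positivity)
  refine h.congr_fun (fun x hx => ?_) measurableSet_Ioi
  rw [add_sub_cancel_right]; simp only [Real.rpow_natCast]; ring

lemma integral_pow_exp (m : ℕ) :
    ∫ x in Set.Ioi (0:ℝ), x ^ m * Real.exp (-x) = m.factorial := by
  rw [show ((m.factorial : ℝ)) = Real.Gamma (m+1) from (Real.Gamma_nat_eq_factorial m).symm,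
    Real.Gamma_eq_integral (by positivity)]
  refine setIntegral_congr_fun measurableSet_Ioi fun x hx => ?_
  rw [add_sub_cancel_right, Real.rpow_natCast]; ring

lemma fwdDiff_iter_shift {G : Type*} [AddCommGroup G] (f : ℕ → G) (s N x : ℕ) :
    (fwdDiff 1)^[N] (fun k => f (k + s)) x = (fwdDiff 1)^[N] f (x + s) := by
  induction N generalizing f with
  | zero => simp
  | succ N IH =>
      rw [Function.iterate_succ_apply, Function.iterate_succ_apply]
      rw [show (fwdDiff 1) (fun k => f (k + s)) = (fun k => (fwdDiff 1) f (k + s)) from ?_]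
      · exact IH _
      · funext y; simp [fwdDiff, add_right_comm]

lemma fwdDiff_iter_zero_fun (N x : ℕ) :
    (fwdDiff 1)^[N] (fun _ : ℕ => (0:ℤ)) x = 0 := by
  induction N generalizing x with
  | zero => simp
  | succ N IH => rw [Function.iterate_succ_apply]; simpa [fwdDiff] using IH x

lemma fwdDiff_iter_choose_val (N d s : ℕ) :
    (fwdDiff 1)^[N] (fun x : ℕ => (x.choose d : ℤ)) s
      = if N ≤ d then (s.choose (d-N) : ℤ) else 0 := by
  rcases le_or_gt N d with h | h
  · rw [if_pos h]
    have := fwdDiff_iter_choose (d - N) N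
    rw [Nat.add_sub_cancel' h] at this
    rw [this]
  · rw [if_neg (not_le.mpr h)]
    have hN : N = (N - d - 1) + 1 + d := by omega
    rw [hN, Function.iterate_add_apply]
    have h0 : (fwdDiff 1)^[d] (fun x : ℕ => (x.choose d : ℤ)) = fun _ => 1 := by
      have := fwdDiff_iter_choose 0 d
      simpa using this
    rw [h0, Function.iterate_add_apply]
    have h1 : (fwdDiff 1)^[1] (fun _ : ℕ => (1:ℤ)) = fun _ => 0 := by
      funext y; simp [fwdDiff]
    rw [h1]
    exact fwdDiff_iter_zero_fun _ _

lemma sum_main (N s d : ℕ) :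
    ∑ k ∈ range (N+1), (-1:ℤ)^k * N.choose k * (s+k).choose d
      = (-1)^N * (if N ≤ d then (s.choose (d-N) : ℤ) else 0) := by
  have key := fwdDiff_iter_eq_sum_shift (h := 1) (fun k : ℕ => ((k + s).choose d : ℤ)) N 0
  simp only [smul_eq_mul, zero_add, Nat.smul_one_eq_cast, Nat.cast_id, mul_one] at key
  rw [fwdDiff_iter_shift (fun x : ℕ => (x.choose d : ℤ)) s N 0, zero_add,
    fwdDiff_iter_choose_val] at key
  rw [key, mul_sum]
  refine Finset.sum_congr rfl fun k hk => ?_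
  have hk' : k ≤ N := Nat.lt_succ_iff.mp (Finset.mem_range.mp hk)
  have h2 : (-1:ℤ)^(N-k) * (-1)^k = (-1)^N := by rw [← pow_add, Nat.sub_add_cancel hk']
  have h3 : (-1:ℤ)^(N-k) * (-1)^(N-k) = 1 := by
    rw [← pow_add, ← two_mul, pow_mul]; norm_num
  rw [Nat.add_comm s k]
  linear_combination ((-1:ℤ)^(N-k) * ((N.choose k : ℤ) * ((k+s).choose d))) * h2 - ((-1:ℤ)^k * ((N.choose k : ℤ) * ((k+s).choose d))) * h3

lemma prod_Icc_fact (a k N : ℕ) (hk : k ≤ N) :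
    (a + k).factorial * ∏ j ∈ Icc (k+1) N, (a + j) = (a + N).factorial := by
  induction N, hk using Nat.le_induction with
  | base => simp
  | succ N hk IH =>
      rw [Finset.prod_Icc_succ_top (by omega : k + 1 ≤ N + 1), ← mul_assoc, IH,
        ← Nat.add_assoc, Nat.factorial_succ, Nat.mul_comm]

lemma prod_Icc_fact_real (a k N : ℕ) (hk : k ≤ N) :
    ∏ j ∈ Icc (k+1) N, ((a : ℝ) + j) = (a + N).factorial / (a + k).factorial := by
  have h := prod_Icc_fact a k N hk
  have h2 : ((a+k).factorial : ℝ) * ∏ j ∈ Icc (k+1) N, ((a : ℝ) + j) = (a+N).factorial := by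
    rw [← h]; push_cast; ring
  field_simp at h2 ⊢
  linarith [h2]

lemma J_eval (a N s : ℕ) (has : a ≤ s) :
    ∑ k ∈ range (N+1), ((-1:ℝ)^k / k.factorial)
        * ((∏ j ∈ Icc (k+1) N, ((a:ℝ) + j)) / (N-k).factorial) * (s+k).factorial
      = (-1:ℝ)^N * (((a+N).factorial : ℝ) * (s-a).factorial / N.factorial)
          * (if N ≤ s-a then ((s.choose (s-a-N)) : ℝ) else 0) := by
  set d := s - a with hd
  have hs : s = a + d := by omega
  have key : ∀ k ∈ range (N+1),
      ((-1:ℝ)^k / k.factorial)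
        * ((∏ j ∈ Icc (k+1) N, ((a:ℝ) + j)) / (N-k).factorial) * (s+k).factorial
      = (((a+N).factorial : ℝ) * d.factorial / N.factorial)
          * (((-1:ℤ)^k * N.choose k * (s+k).choose d : ℤ) : ℝ) := by
    intro k hk
    have hk' : k ≤ N := Nat.lt_succ_iff.mp (Finset.mem_range.mp hk)
    rw [prod_Icc_fact_real a k N hk']
    have hc1 : (N.choose k : ℝ) = N.factorial / (k.factorial * (N-k).factorial) := by
      rw [eq_div_iff (by positivity)]
      rw [← Nat.cast_mul, ← Nat.cast_mul]
      exact Nat.cast_inj.mpr (by rw [← mul_assoc]; exact Nat.choose_mul_factorial_mul_factorial hk')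
    have hc2 : ((s+k).choose d : ℝ) = (s+k).factorial / (d.factorial * (a+k).factorial) := by
      rw [eq_div_iff (by positivity)]
      have h1 := Nat.choose_mul_factorial_mul_factorial (show d ≤ s + k by omega)
      rw [show s + k - d = a + k by omega] at h1
      rw [← Nat.cast_mul, ← Nat.cast_mul]
      exact Nat.cast_inj.mpr (by rw [← mul_assoc]; exact h1)
    push_cast
    rw [hc1, hc2]
    field_simp
  rw [Finset.sum_congr rfl key, ← Finset.mul_sum, ← Int.cast_sum, sum_main N s d]
  push_cast [apply_ite (fun z : ℤ => (z : ℝ))]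
  ring

lemma integral_eq_sum (b n : ℕ) :
    (∫ x in Set.Ioi (0 : ℝ), x ^ 2 * Real.exp (-x) * genLaguerre b 1 x * genLaguerre n 2 x)
      = ∑ k ∈ range (b+1), ∑ l ∈ range (n+1),
          (((-1:ℝ)^k / k.factorial) * ((∏ j ∈ Icc (k+1) b, ((1:ℝ)+j)) / (b-k).factorial))
          * (((-1:ℝ)^l / l.factorial) * ((∏ j ∈ Icc (l+1) n, ((2:ℝ)+j)) / (n-l).factorial))
          * ((k+l+2).factorial : ℝ) := by
  have hfun : (fun x : ℝ => x ^ 2 * Real.exp (-x) * genLaguerre b 1 x * genLaguerre n 2 x)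
      = fun x => ∑ k ∈ range (b+1), ∑ l ∈ range (n+1),
          ((((-1:ℝ)^k / k.factorial) * ((∏ j ∈ Icc (k+1) b, ((1:ℝ)+j)) / (b-k).factorial))
          * (((-1:ℝ)^l / l.factorial) * ((∏ j ∈ Icc (l+1) n, ((2:ℝ)+j)) / (n-l).factorial)))
          * (x^(k+l+2) * Real.exp (-x)) := by
    funext x
    simp only [genLaguerre, Finset.mul_sum, Finset.sum_mul]
    rw [Finset.sum_comm]
    refine Finset.sum_congr rfl fun k _ => Finset.sum_congr rfl fun l _ => ?_
    ring
  rw [hfun, integral_finset_sum]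
  · refine Finset.sum_congr rfl fun k _ => ?_
    rw [integral_finset_sum]
    · refine Finset.sum_congr rfl fun l _ => ?_
      rw [integral_const_mul, integral_pow_exp]
    · exact fun l _ => ((integrableOn_pow_exp (k+l+2)).const_mul _)
  · exact fun k _ => integrable_finset_sum _
      (fun l _ => ((integrableOn_pow_exp (k+l+2)).const_mul _))

/-- `∫₀^∞ x²·e^{−x}·L_b^{(1)}(x)·L_n^{(2)}(x) dx
= (n+1)(n+2)·(δ_{n,b} − δ_{n+1,b})`. -/
theorem laguerre_weighted_integral_two (b n : ℕ) :
    (∫ x in Set.Ioi (0 : ℝ), x ^ 2 * Real.exp (-x) * genLaguerre b 1 x * genLaguerre n 2 x)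
      = (n + 1) * (n + 2) * ((if n = b then 1 else 0) - (if n + 1 = b then 1 else 0)) := by
  rw [integral_eq_sum]
  have e1 : (-1:ℝ)^n * (-1)^n = 1 := by
    rw [← pow_add, ← two_mul, pow_mul]; norm_num
  have J2 : ∀ k : ℕ, ∑ l ∈ range (n+1),
      ((-1:ℝ)^l / l.factorial) * ((∏ j ∈ Icc (l+1) n, ((2:ℝ)+j)) / (n-l).factorial)
        * ((k+2+l).factorial : ℝ)
      = (-1:ℝ)^n * (((2+n).factorial : ℝ) * k.factorial / n.factorial)
          * (if n ≤ k then (((k+2).choose (k-n)) : ℝ) else 0) := by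
    intro k
    have h := J_eval 2 n (k+2) (by omega)
    simp only [Nat.add_sub_cancel, Nat.cast_ofNat] at h
    exact h
  rcases lt_trichotomy b n with hbn | rfl | hbn
  · -- b < n : everything vanishes
    rw [if_neg (by omega), if_neg (by omega)]
    have hz : ∀ k ∈ range (b+1), (∑ l ∈ range (n+1),
        (((-1:ℝ)^k / k.factorial) * ((∏ j ∈ Icc (k+1) b, ((1:ℝ)+j)) / (b-k).factorial))
        * (((-1:ℝ)^l / l.factorial) * ((∏ j ∈ Icc (l+1) n, ((2:ℝ)+j)) / (n-l).factorial))
        * ((k+l+2).factorial : ℝ)) = 0 := by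
      intro k hk
      have hk' : k ≤ b := Nat.lt_succ_iff.mp (Finset.mem_range.mp hk)
      have : (∑ l ∈ range (n+1),
          (((-1:ℝ)^k / k.factorial) * ((∏ j ∈ Icc (k+1) b, ((1:ℝ)+j)) / (b-k).factorial))
          * (((-1:ℝ)^l / l.factorial) * ((∏ j ∈ Icc (l+1) n, ((2:ℝ)+j)) / (n-l).factorial))
          * ((k+l+2).factorial : ℝ))
          = (((-1:ℝ)^k / k.factorial) * ((∏ j ∈ Icc (k+1) b, ((1:ℝ)+j)) / (b-k).factorial))
            * ∑ l ∈ range (n+1),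
              ((-1:ℝ)^l / l.factorial) * ((∏ j ∈ Icc (l+1) n, ((2:ℝ)+j)) / (n-l).factorial)
              * ((k+2+l).factorial : ℝ) := by
        rw [Finset.mul_sum]
        refine Finset.sum_congr rfl fun l _ => ?_
        rw [show k+l+2 = k+2+l by ring]; ring
      rw [this, J2 k, if_neg (by omega)]
      ring
    rw [Finset.sum_congr rfl hz, Finset.sum_const_zero]
    ring
  · -- b = n
    rw [if_pos rfl, if_neg (by omega)]
    have hz : ∀ k ∈ range (b+1), k ≠ b → (∑ l ∈ range (b+1),
        (((-1:ℝ)^k / k.factorial) * ((∏ j ∈ Icc (k+1) b, ((1:ℝ)+j)) / (b-k).factorial))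
        * (((-1:ℝ)^l / l.factorial) * ((∏ j ∈ Icc (l+1) b, ((2:ℝ)+j)) / (b-l).factorial))
        * ((k+l+2).factorial : ℝ)) = 0 := by
      intro k hk hkb
      have hk' : k < b := by
        have := Nat.lt_succ_iff.mp (Finset.mem_range.mp hk); omega
      have : (∑ l ∈ range (b+1),
          (((-1:ℝ)^k / k.factorial) * ((∏ j ∈ Icc (k+1) b, ((1:ℝ)+j)) / (b-k).factorial))
          * (((-1:ℝ)^l / l.factorial) * ((∏ j ∈ Icc (l+1) b, ((2:ℝ)+j)) / (b-l).factorial))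
          * ((k+l+2).factorial : ℝ))
          = (((-1:ℝ)^k / k.factorial) * ((∏ j ∈ Icc (k+1) b, ((1:ℝ)+j)) / (b-k).factorial))
            * ∑ l ∈ range (b+1),
              ((-1:ℝ)^l / l.factorial) * ((∏ j ∈ Icc (l+1) b, ((2:ℝ)+j)) / (b-l).factorial)
              * ((k+2+l).factorial : ℝ) := by
        rw [Finset.mul_sum]
        refine Finset.sum_congr rfl fun l _ => ?_
        rw [show k+l+2 = k+2+l by ring]; ring
      rw [this, J2 k, if_neg (by omega)]
      ring
    rw [Finset.sum_eq_single_of_mem b (Finset.self_mem_range_succ b) hz]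
    have : (∑ l ∈ range (b+1),
        (((-1:ℝ)^b / b.factorial) * ((∏ j ∈ Icc (b+1) b, ((1:ℝ)+j)) / (b-b).factorial))
        * (((-1:ℝ)^l / l.factorial) * ((∏ j ∈ Icc (l+1) b, ((2:ℝ)+j)) / (b-l).factorial))
        * ((b+l+2).factorial : ℝ))
        = (((-1:ℝ)^b / b.factorial) * ((∏ j ∈ Icc (b+1) b, ((1:ℝ)+j)) / (b-b).factorial))
          * ∑ l ∈ range (b+1),
            ((-1:ℝ)^l / l.factorial) * ((∏ j ∈ Icc (l+1) b, ((2:ℝ)+j)) / (b-l).factorial)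
            * ((b+2+l).factorial : ℝ) := by
      rw [Finset.mul_sum]
      refine Finset.sum_congr rfl fun l _ => ?_
      rw [show b+l+2 = b+2+l by ring]; ring
    rw [this, J2 b, if_pos le_rfl, Nat.sub_self, Nat.choose_zero_right,
      Finset.Icc_eq_empty (by omega), Finset.prod_empty]
    have hf : ((2+b).factorial : ℝ) = (b+2)*(b+1)*b.factorial := by
      rw [show 2+b = (b+1)+1 by ring]
      push_cast [Nat.factorial_succ]
      ring
    have hb0 : (b.factorial : ℝ) ≠ 0 := by positivity
    rw [hf]
    norm_num
    field_simp
    linear_combination e1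
  · -- n < b
    rw [if_neg (by omega), Finset.sum_comm]
    have e1b : (-1:ℝ)^b * (-1)^b = 1 := by
      rw [← pow_add, ← two_mul, pow_mul]; norm_num
    have J1 : ∀ l : ℕ, ∑ k ∈ range (b+1),
        ((-1:ℝ)^k / k.factorial) * ((∏ j ∈ Icc (k+1) b, ((1:ℝ)+j)) / (b-k).factorial)
          * ((l+2+k).factorial : ℝ)
        = (-1:ℝ)^b * (((1+b).factorial : ℝ) * (l+1).factorial / b.factorial)
            * (if b ≤ l+1 then (((l+2).choose (l+1-b)) : ℝ) else 0) := by
      intro l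
      have h := J_eval 1 b (l+2) (by omega)
      rw [show l+2-1 = l+1 by omega] at h
      simp only [Nat.cast_one] at h
      exact h
    have hinner : ∀ l ∈ range (n+1), (∑ k ∈ range (b+1),
        (((-1:ℝ)^k / k.factorial) * ((∏ j ∈ Icc (k+1) b, ((1:ℝ)+j)) / (b-k).factorial))
        * (((-1:ℝ)^l / l.factorial) * ((∏ j ∈ Icc (l+1) n, ((2:ℝ)+j)) / (n-l).factorial))
        * ((k+l+2).factorial : ℝ))
        = (((-1:ℝ)^l / l.factorial) * ((∏ j ∈ Icc (l+1) n, ((2:ℝ)+j)) / (n-l).factorial))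
          * ((-1:ℝ)^b * (((1+b).factorial : ℝ) * (l+1).factorial / b.factorial)
            * (if b ≤ l+1 then (((l+2).choose (l+1-b)) : ℝ) else 0)) := by
      intro l _
      rw [← J1 l, Finset.mul_sum]
      refine Finset.sum_congr rfl fun k _ => ?_
      rw [show k+l+2 = l+2+k by ring]; ring
    rw [Finset.sum_congr rfl hinner]
    rcases eq_or_lt_of_le (by omega : n + 1 ≤ b) with hb | hb
    · -- b = n + 1
      rw [if_pos hb]
      subst hb
      have hz : ∀ l ∈ range (n+1), l ≠ n →
          (((-1:ℝ)^l / l.factorial) * ((∏ j ∈ Icc (l+1) n, ((2:ℝ)+j)) / (n-l).factorial))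
          * ((-1:ℝ)^(n+1) * (((1+(n+1)).factorial : ℝ) * (l+1).factorial / (n+1).factorial)
            * (if n+1 ≤ l+1 then (((l+2).choose (l+1-(n+1))) : ℝ) else 0)) = 0 := by
        intro l hl hln
        have : l < n := by
          have := Nat.lt_succ_iff.mp (Finset.mem_range.mp hl); omega
        rw [if_neg (by omega)]
        ring
      rw [Finset.sum_eq_single_of_mem n (Finset.self_mem_range_succ n) hz,
        if_pos (by omega), show n+1-(n+1) = 0 by omega, Nat.choose_zero_right,
        Finset.Icc_eq_empty (by omega), Finset.prod_empty, Nat.sub_self]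
      have hf : ((1+(n+1)).factorial : ℝ) = (n+2)*(n+1)*n.factorial := by
        rw [show 1+(n+1) = (n+1)+1 by ring]
        push_cast [Nat.factorial_succ]
        ring
      have hf2 : ((n+1).factorial : ℝ) = (n+1)*n.factorial := by
        push_cast [Nat.factorial_succ]; ring
      have hn0 : (n.factorial : ℝ) ≠ 0 := by positivity
      rw [hf, hf2]
      have e1b' : (-1:ℝ)^(n+1) * (-1)^n = -1 := by
        rw [pow_succ]
        nlinarith [e1]
      norm_num
      field_simp
      nlinarith [e1b', sq_nonneg ((n.factorial : ℝ))]
    · -- n + 1 < b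
      rw [if_neg (by omega : ¬ n + 1 = b)]
      have hz : ∀ l ∈ range (n+1),
          (((-1:ℝ)^l / l.factorial) * ((∏ j ∈ Icc (l+1) n, ((2:ℝ)+j)) / (n-l).factorial))
          * ((-1:ℝ)^b * (((1+b).factorial : ℝ) * (l+1).factorial / b.factorial)
            * (if b ≤ l+1 then (((l+2).choose (l+1-b)) : ℝ) else 0)) = 0 := by
        intro l hl
        have : l ≤ n := Nat.lt_succ_iff.mp (Finset.mem_range.mp hl)
        rw [if_neg (by omega)]
        ring
      rw [Finset.sum_congr rfl hz, Finset.sum_const_zero]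
      ring
end

section
/- For i, k ∈ ℕ define Δ_{i,k} := (i+1)·δ_{i,k} − i·δ_{i−1,k} and Δ*_{i,k} := (i+1)·δ_{i,k} − (i+1)·δ_{i,k−1} − i·δ_{i−1,k} + i·δ_{i−1,k−1}. Then for all m₁, m₂, n₁, n₂ ∈ ℕ, the sum ∑_{a,b=0}^∞ (−1)^{m₁+m₂+a+b}·[(2/(a+1))·Δ_{n₁,a}·Δ_{m₁,a}·δ_{n₂,b}·δ_{m₂,b} + Δ*_{n₁,a}·Δ*_{m₁,a}·δ_{n₂,b}·δ_{m₂,b} + (2/(b+1))·Δ_{n₂,b}·Δ_{m₂,b}·δ_{n₁,a}·δ_{m₁,a} + Δ*_{n₂,b}·Δ*_{m₂,b}·δ_{n₁,a}·δ_{m₁,a}] (which has only finitely many nonzero terms) equals 2(n₁²+n₂²+n₁+n₂+2)·δ_{n₁,m₁}·δ_{n₂,m₂} − n₁(n₁−1)·δ_{n₁,m₁+2}·δ_{n₂,m₂} − (n₁+1)(n₁+2)·δ_{n₁,m₁−2}·δ_{n₂,m₂} − n₂(n₂−1)·δ_{n₁,m₁}·δ_{n₂,m₂+2} − (n₂+1)(n₂+2)·δ_{n₁,m₁}·δ_{n₂,m₂−2}.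 (This is the closed-form evaluation of the diagonal part Γ⁰_{m₁m₂n₁n₂} of the three-body characteristic tensor.) -/
/-- `Δ_{i,k} = (i+1)·δ_{i,k} − i·δ_{i−1,k}` (Kronecker deltas taken in ℤ). -/
noncomputable def deltaFun (i k : ℕ) : ℝ :=
  (i + 1) * (if i = k then 1 else 0) - i * (if (i : ℤ) - 1 = k then 1 else 0)

/-- `Δ*_{i,k} = (i+1)·δ_{i,k} − (i+1)·δ_{i,k−1} − i·δ_{i−1,k} + i·δ_{i−1,k−1}`
(Kronecker deltas taken in ℤ). -/
noncomputable def deltaStarFun (i k : ℕ) : ℝ :=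
  (i + 1) * (if i = k then 1 else 0) - (i + 1) * (if (i : ℤ) = (k : ℤ) - 1 then 1 else 0)
    - i * (if (i : ℤ) - 1 = k then 1 else 0)
    + i * (if (i : ℤ) - 1 = (k : ℤ) - 1 then 1 else 0)

lemma dF0 {i k : ℕ} (h1 : i ≠ k) (h2 : i ≠ k + 1) : deltaFun i k = 0 := by
  rw [deltaFun, if_neg h1, if_neg (by omega)]; ring

lemma dF1 (n : ℕ) : deltaFun n n = (n : ℝ) + 1 := by
  rw [deltaFun, if_pos rfl, if_neg (by omega)]; ring

lemma dF2 (k : ℕ) : deltaFun (k + 1) k = -((k : ℝ) + 1) := by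
  rw [deltaFun, if_neg (by omega), if_pos (by push_cast; ring)]; push_cast; ring

lemma dS0 {i k : ℕ} (h1 : i ≠ k) (h2 : i ≠ k + 1) (h3 : i + 1 ≠ k) : deltaStarFun i k = 0 := by
  rw [deltaStarFun, if_neg h1, if_neg (by omega), if_neg (by omega), if_neg (by omega)]; ring

lemma dS1 (n : ℕ) : deltaStarFun n n = 2 * (n : ℝ) + 1 := by
  rw [deltaStarFun, if_pos rfl, if_neg (by omega), if_neg (by omega), if_pos (by omega)]; ring

lemma dS2 (n : ℕ) : deltaStarFun n (n + 1) = -((n : ℝ) + 1) := by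
  rw [deltaStarFun, if_neg (by omega), if_pos (by push_cast; ring), if_neg (by omega),
    if_neg (by omega)]; push_cast; ring

lemma dS3 (k : ℕ) : deltaStarFun (k + 1) k = -((k : ℝ) + 1) := by
  rw [deltaStarFun, if_neg (by omega), if_neg (by omega), if_pos (by push_cast; ring),
    if_neg (by omega)]; push_cast; ring

noncomputable def G (n m a : ℕ) : ℝ :=
  2 / ((a : ℝ) + 1) * (deltaFun n a * deltaFun m a) + deltaStarFun n a * deltaStarFun m a

lemma G0 {n m a : ℕ} (h1 : n ≠ a) (h2 : n ≠ a + 1) (h3 : n + 1 ≠ a) : G n m a = 0 := by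
  rw [G, dF0 h1 h2, dS0 h1 h2 h3]; ring

lemma sign_delta (p q : ℕ) :
    (-1 : ℝ) ^ (p + q) * (if p = q then 1 else 0) = (if p = q then 1 else 0) := by
  rcases eq_or_ne p q with h | h
  · subst h; rw [Even.neg_one_pow ⟨p, rfl⟩]; ring
  · simp [h]

noncomputable def S1 (n m : ℕ) : ℝ :=
  (2 * (n : ℝ) ^ 2 + 2 * n + 2) * (if n = m then 1 else 0)
    - n * ((n : ℝ) - 1) * (if n = m + 2 then 1 else 0)
    - ((n : ℝ) + 1) * (n + 2) * (if (n : ℤ) = (m : ℤ) - 2 then 1 else 0)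

lemma lemA (n m : ℕ) : ∑' a : ℕ, (-1 : ℝ) ^ (m + a) * G n m a = S1 n m := by
  rcases n with _ | k
  · rw [tsum_eq_sum (s := ({0, 1} : Finset ℕ))
      (by intro a ha; simp only [Finset.mem_insert, Finset.mem_singleton] at ha
          push_neg at ha
          rw [G0 (by omega) (by omega) (by omega), mul_zero])]
    rw [Finset.sum_pair (by norm_num)]
    have h3 : m + 3 ≤ 0 ∨ m + 2 = 0 ∨ m + 1 = 0 ∨ m = 0 ∨ m = 1 ∨ m = 2 ∨ 3 ≤ m := by omega
    rcases h3 with h | h | h | h | h | h | h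
    · omega
    · omega
    · omega
    · subst h
      rw [S1, if_pos rfl, if_neg (by omega), if_neg (by omega)]
      rw [G, G, dF1, dS1, dF0 (by omega) (by omega), dS2]
      norm_num
    · subst h
      rw [S1, if_neg (by omega), if_neg (by omega), if_neg (by omega)]
      rw [G, G, dF1 0, dF2 0, dS1 0, dS3 0, dF0 (i := 0) (by omega) (by omega),
        dS2 0, dS1 1]
      norm_num
    · subst h
      rw [S1, if_neg (by omega), if_neg (by omega), if_pos (by omega)]
      rw [G, G, dF1 0, dF0 (i := 2) (k := 0) (by omega) (by omega),
        dS1 0, dS0 (i := 2) (k := 0) (by omega) (by omega) (by omega),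
        dF0 (i := 0) (k := 1) (by omega) (by omega), dF2 1, dS2 0, dS3 1]
      norm_num
    · rw [S1, if_neg (by omega), if_neg (by omega), if_neg (by omega)]
      rw [G, G, dF0 (i := m) (k := 0) (by omega) (by omega),
        dS0 (i := m) (k := 0) (by omega) (by omega) (by omega),
        dF0 (i := m) (k := 1) (by omega) (by omega),
        dS0 (i := m) (k := 1) (by omega) (by omega) (by omega)]
      ring
  · rw [tsum_eq_sum (s := ({k, k + 1, k + 2} : Finset ℕ))
      (by intro a ha; simp only [Finset.mem_insert, Finset.mem_singleton] at ha
          push_neg at ha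
          rw [G0 (by omega) (by omega) (by omega), mul_zero])]
    rw [Finset.sum_insert (by simp), Finset.sum_insert (by simp),
      Finset.sum_singleton]
    have hk : (k : ℝ) + 1 ≠ 0 := by positivity
    have hk2 : (k : ℝ) + 2 ≠ 0 := by positivity
    have h7 : m + 3 ≤ k + 1 ∨ k = m + 1 ∨ k = m ∨ m = k + 1 ∨ m = k + 2 ∨ m = k + 3 ∨
        k + 4 ≤ m := by omega
    rcases h7 with h | h | h | h | h | h | h
    · -- m far below
      rw [S1, if_neg (by omega), if_neg (by omega), if_neg (by omega)]
      rw [G, G, G, dF0 (i := m) (k := k) (by omega) (by omega),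
        dS0 (i := m) (k := k) (by omega) (by omega) (by omega),
        dF0 (i := m) (k := k + 1) (by omega) (by omega),
        dS0 (i := m) (k := k + 1) (by omega) (by omega) (by omega),
        dF0 (i := m) (k := k + 2) (by omega) (by omega),
        dS0 (i := m) (k := k + 2) (by omega) (by omega) (by omega)]
      ring
    · -- n = m + 2
      subst h
      rw [S1, if_neg (by omega), if_pos rfl, if_neg (by omega)]
      rw [G, G, G]
      rw [show deltaFun (m + 1 + 1) (m + 1) = -((m : ℝ) + 1 + 1) by rw [dF2 (m + 1)]; push_cast; ring,
        show deltaStarFun (m + 1 + 1) (m + 1) = -((m : ℝ) + 1 + 1) by rw [dS3 (m + 1)]; push_cast; ring,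
        dF0 (i := m) (k := m + 1) (by omega) (by omega),
        dS2 m,
        dF1 (m + 1 + 1), dS1 (m + 1 + 1),
        dF0 (i := m) (k := m + 1 + 1) (by omega) (by omega),
        dS0 (i := m) (k := m + 1 + 1) (by omega) (by omega) (by omega),
        dF0 (i := m + 1 + 1) (k := m + 1 + 2) (by omega) (by omega),
        dS2 (m + 1 + 1),
        dF0 (i := m) (k := m + 1 + 2) (by omega) (by omega),
        dS0 (i := m) (k := m + 1 + 2) (by omega) (by omega) (by omega)]
      have e1 : (-1 : ℝ) ^ (m + (m + 1)) = -1 := Odd.neg_one_pow ⟨m, by ring⟩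
      have e2 : (-1 : ℝ) ^ (m + (m + 1 + 1)) = 1 := Even.neg_one_pow ⟨m + 1, by ring⟩
      have e3 : (-1 : ℝ) ^ (m + (m + 1 + 2)) = -1 := Odd.neg_one_pow ⟨m + 1, by ring⟩
      rw [e1, e2, e3]
      push_cast
      field_simp
      ring
    · -- n = m + 1
      subst h
      rw [S1, if_neg (by omega), if_neg (by omega), if_neg (by omega)]
      rw [G, G, G, dF2 k, dS3 k, dF1 k, dS1 k,
        dF1 (k + 1), dS1 (k + 1),
        dF0 (i := k) (k := k + 1) (by omega) (by omega), dS2 k,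
        dF0 (i := k + 1) (k := k + 2) (by omega) (by omega), dS2 (k + 1),
        dF0 (i := k) (k := k + 2) (by omega) (by omega),
        dS0 (i := k) (k := k + 2) (by omega) (by omega) (by omega)]
      have e1 : (-1 : ℝ) ^ (k + k) = 1 := Even.neg_one_pow ⟨k, rfl⟩
      have e2 : (-1 : ℝ) ^ (k + (k + 1)) = -1 := Odd.neg_one_pow ⟨k, by ring⟩
      have e3 : (-1 : ℝ) ^ (k + (k + 2)) = 1 := Even.neg_one_pow ⟨k + 1, by ring⟩
      rw [e1, e2, e3]
      push_cast
      field_simp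
      ring
    · -- m = n
      subst h
      rw [S1, if_pos rfl, if_neg (by omega), if_neg (by omega)]
      rw [G, G, G, dF2 k, dS3 k, dF1 (k + 1), dS1 (k + 1),
        dF0 (i := k + 1) (k := k + 2) (by omega) (by omega), dS2 (k + 1)]
      have e1 : (-1 : ℝ) ^ (k + 1 + k) = -1 := Odd.neg_one_pow ⟨k, by ring⟩
      have e2 : (-1 : ℝ) ^ (k + 1 + (k + 1)) = 1 := Even.neg_one_pow ⟨k + 1, by ring⟩
      have e3 : (-1 : ℝ) ^ (k + 1 + (k + 2)) = -1 := Odd.neg_one_pow ⟨k + 1, by ring⟩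
      rw [e1, e2, e3]
      push_cast
      field_simp
      ring
    · -- m = n + 1
      subst h
      rw [S1, if_neg (by omega), if_neg (by omega), if_neg (by omega)]
      rw [G, G, G, dF2 k, dS3 k,
        dF0 (i := k + 2) (k := k) (by omega) (by omega),
        dS0 (i := k + 2) (k := k) (by omega) (by omega) (by omega),
        dF1 (k + 1), dS1 (k + 1),
        show deltaFun (k + 2) (k + 1) = -((k : ℝ) + 1 + 1) by rw [show k + 2 = k + 1 + 1 from rfl, dF2 (k + 1)]; push_cast; ring,
        show deltaStarFun (k + 2) (k + 1) = -((k : ℝ) + 1 + 1) by rw [show k + 2 = k + 1 + 1 from rfl, dS3 (k + 1)]; push_cast; ring,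
        dF0 (i := k + 1) (k := k + 2) (by omega) (by omega), dS2 (k + 1),
        show deltaFun (k + 2) (k + 2) = ((k : ℝ) + 2) + 1 by
          rw [dF1 (k + 2)]; push_cast; ring,
        show deltaStarFun (k + 2) (k + 2) = 2 * ((k : ℝ) + 2) + 1 by
          rw [dS1 (k + 2)]; push_cast; ring]
      have e1 : (-1 : ℝ) ^ (k + 2 + k) = 1 := Even.neg_one_pow ⟨k + 1, by ring⟩
      have e2 : (-1 : ℝ) ^ (k + 2 + (k + 1)) = -1 := Odd.neg_one_pow ⟨k + 1, by ring⟩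
      have e3 : (-1 : ℝ) ^ (k + 2 + (k + 2)) = 1 := Even.neg_one_pow ⟨k + 2, by ring⟩
      rw [e1, e2, e3]
      push_cast
      field_simp
      ring
    · -- m = n + 2
      subst h
      rw [S1, if_neg (by omega), if_neg (by omega), if_pos (by omega)]
      rw [G, G, G,
        dF0 (i := k + 3) (k := k) (by omega) (by omega),
        dS0 (i := k + 3) (k := k) (by omega) (by omega) (by omega),
        dF0 (i := k + 3) (k := k + 1) (by omega) (by omega),
        dS0 (i := k + 3) (k := k + 1) (by omega) (by omega) (by omega),
        dF0 (i := k + 1) (k := k + 2) (by omega) (by omega), dS2 (k + 1),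
        show deltaStarFun (k + 3) (k + 2) = -((k : ℝ) + 2 + 1) by
          rw [show k + 3 = (k + 2) + 1 from rfl, dS3 (k + 2)]; push_cast; ring,
        show deltaFun (k + 3) (k + 2) = -((k : ℝ) + 2 + 1) by
          rw [show k + 3 = (k + 2) + 1 from rfl, dF2 (k + 2)]; push_cast; ring,
        dF2 k, dS3 k, dF1 (k + 1), dS1 (k + 1)]
      have e1 : (-1 : ℝ) ^ (k + 3 + k) = -1 := Odd.neg_one_pow ⟨k + 1, by ring⟩
      have e2 : (-1 : ℝ) ^ (k + 3 + (k + 1)) = 1 := Even.neg_one_pow ⟨k + 2, by ring⟩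
      have e3 : (-1 : ℝ) ^ (k + 3 + (k + 2)) = -1 := Odd.neg_one_pow ⟨k + 2, by ring⟩
      rw [e1, e2, e3]
      push_cast
      field_simp
      ring
    · -- m far above
      rw [S1, if_neg (by omega), if_neg (by omega), if_neg (by omega)]
      rw [G, G, G, dF0 (i := m) (k := k) (by omega) (by omega),
        dS0 (i := m) (k := k) (by omega) (by omega) (by omega),
        dF0 (i := m) (k := k + 1) (by omega) (by omega),
        dS0 (i := m) (k := k + 1) (by omega) (by omega) (by omega),
        dF0 (i := m) (k := k + 2) (by omega) (by omega),
        dS0 (i := m) (k := k + 2) (by omega) (by omega) (by omega)]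
      ring

set_option maxHeartbeats 1000000 in
lemma final_step (m₁ m₂ n₁ n₂ : ℕ) :
    (if m₂ = n₂ then (1 : ℝ) else 0) * S1 n₁ m₁ + (if m₁ = n₁ then (1 : ℝ) else 0) * S1 n₂ m₂
      = 2 * (n₁ ^ 2 + n₂ ^ 2 + n₁ + n₂ + 2) *
            (if n₁ = m₁ then 1 else 0) * (if n₂ = m₂ then 1 else 0)
        - n₁ * (n₁ - 1) * (if n₁ = m₁ + 2 then 1 else 0) * (if n₂ = m₂ then 1 else 0)
        - (n₁ + 1) * (n₁ + 2) * (if (n₁ : ℤ) = (m₁ : ℤ) - 2 then 1 else 0) *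
            (if n₂ = m₂ then 1 else 0)
        - n₂ * (n₂ - 1) * (if n₂ = m₂ + 2 then 1 else 0) * (if n₁ = m₁ then 1 else 0)
        - (n₂ + 1) * (n₂ + 2) * (if (n₂ : ℤ) = (m₂ : ℤ) - 2 then 1 else 0) *
            (if n₁ = m₁ then 1 else 0) := by
  rw [S1, S1]
  split_ifs <;> first | (exfalso; omega) | ring

set_option maxHeartbeats 1000000 in
/-- closed-form evaluation of the diagonal part `Γ⁰_{m₁m₂n₁n₂}` of the
three-body characteristic tensor from its Kronecker-delta expansion. -/
theorem threebody_characteristic_tensor_diagonal (m₁ m₂ n₁ n₂ : ℕ) :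
    (∑' a : ℕ, ∑' b : ℕ, (-1 : ℝ) ^ (m₁ + m₂ + a + b) *
        (2 / (a + 1) * (deltaFun n₁ a * deltaFun m₁ a) *
            (if n₂ = b then 1 else 0) * (if m₂ = b then 1 else 0)
          + deltaStarFun n₁ a * deltaStarFun m₁ a *
            (if n₂ = b then 1 else 0) * (if m₂ = b then 1 else 0)
          + 2 / (b + 1) * (deltaFun n₂ b * deltaFun m₂ b) *
            (if n₁ = a then 1 else 0) * (if m₁ = a then 1 else 0)
          + deltaStarFun n₂ b * deltaStarFun m₂ b *
            (if n₁ = a then 1 else 0) * (if m₁ = a then 1 else 0)))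
      = 2 * (n₁ ^ 2 + n₂ ^ 2 + n₁ + n₂ + 2) *
            (if n₁ = m₁ then 1 else 0) * (if n₂ = m₂ then 1 else 0)
        - n₁ * (n₁ - 1) * (if n₁ = m₁ + 2 then 1 else 0) * (if n₂ = m₂ then 1 else 0)
        - (n₁ + 1) * (n₁ + 2) * (if (n₁ : ℤ) = (m₁ : ℤ) - 2 then 1 else 0) *
            (if n₂ = m₂ then 1 else 0)
        - n₂ * (n₂ - 1) * (if n₂ = m₂ + 2 then 1 else 0) * (if n₁ = m₁ then 1 else 0)
        - (n₂ + 1) * (n₂ + 2) * (if (n₂ : ℤ) = (m₂ : ℤ) - 2 then 1 else 0) *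
            (if n₁ = m₁ then 1 else 0) := by
  have hsgn : ∀ a b : ℕ, (-1 : ℝ) ^ (m₁ + m₂ + a + b) = (-1) ^ (m₁ + a) * (-1) ^ (m₂ + b) := by
    intro a b
    rw [show m₁ + m₂ + a + b = (m₁ + a) + (m₂ + b) by ring, pow_add]
  have hsum1 : Summable (fun b : ℕ => (-1 : ℝ) ^ (m₂ + b) *
      ((if n₂ = b then (1 : ℝ) else 0) * (if m₂ = b then 1 else 0))) := by
    apply summable_of_ne_finset_zero (s := ({n₂} : Finset ℕ))
    intro b hb
    simp only [Finset.mem_singleton] at hb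
    rw [if_neg (fun h => hb h.symm)]
    ring
  have hsum2 : Summable (fun b : ℕ => (-1 : ℝ) ^ (m₂ + b) * G n₂ m₂ b) := by
    apply summable_of_ne_finset_zero (s := Finset.range (n₂ + 2))
    intro b hb
    simp only [Finset.mem_range, not_lt] at hb
    rw [G0 (by omega) (by omega) (by omega)]
    ring
  have step1 : ∀ a : ℕ, (∑' b : ℕ, (-1 : ℝ) ^ (m₁ + m₂ + a + b) *
        (2 / (a + 1) * (deltaFun n₁ a * deltaFun m₁ a) *
            (if n₂ = b then 1 else 0) * (if m₂ = b then 1 else 0)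
          + deltaStarFun n₁ a * deltaStarFun m₁ a *
            (if n₂ = b then 1 else 0) * (if m₂ = b then 1 else 0)
          + 2 / (b + 1) * (deltaFun n₂ b * deltaFun m₂ b) *
            (if n₁ = a then 1 else 0) * (if m₁ = a then 1 else 0)
          + deltaStarFun n₂ b * deltaStarFun m₂ b *
            (if n₁ = a then 1 else 0) * (if m₁ = a then 1 else 0)))
      = (if m₂ = n₂ then (1 : ℝ) else 0) * ((-1) ^ (m₁ + a) * G n₁ m₁ a)
        + ((if n₁ = a then (1 : ℝ) else 0) * (if m₁ = a then 1 else 0) * (-1) ^ (m₁ + a))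
            * S1 n₂ m₂ := by
    intro a
    have hre : ∀ b : ℕ, (-1 : ℝ) ^ (m₁ + m₂ + a + b) *
        (2 / (a + 1) * (deltaFun n₁ a * deltaFun m₁ a) *
            (if n₂ = b then 1 else 0) * (if m₂ = b then 1 else 0)
          + deltaStarFun n₁ a * deltaStarFun m₁ a *
            (if n₂ = b then 1 else 0) * (if m₂ = b then 1 else 0)
          + 2 / (b + 1) * (deltaFun n₂ b * deltaFun m₂ b) *
            (if n₁ = a then 1 else 0) * (if m₁ = a then 1 else 0)
          + deltaStarFun n₂ b * deltaStarFun m₂ b *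
            (if n₁ = a then 1 else 0) * (if m₁ = a then 1 else 0))
        = ((-1 : ℝ) ^ (m₁ + a) * G n₁ m₁ a) *
            ((-1 : ℝ) ^ (m₂ + b) *
              ((if n₂ = b then (1 : ℝ) else 0) * (if m₂ = b then 1 else 0)))
          + ((if n₁ = a then (1 : ℝ) else 0) * (if m₁ = a then 1 else 0) * (-1) ^ (m₁ + a))
              * ((-1 : ℝ) ^ (m₂ + b) * G n₂ m₂ b) := by
      intro b
      rw [hsgn a b, G, G]
      ring
    rw [tsum_congr hre,
      Summable.tsum_add (Summable.mul_left _ hsum1) (Summable.mul_left _ hsum2),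
      tsum_mul_left, tsum_mul_left, lemA]
    congr 1
    rw [tsum_eq_single n₂ (by
      intro b hb
      rw [if_neg (fun h => hb h.symm)]
      ring)]
    rw [if_pos rfl, one_mul, sign_delta m₂ n₂]
    ring
  rw [tsum_congr step1]
  have hsumA : Summable (fun a : ℕ => (if m₂ = n₂ then (1 : ℝ) else 0) *
      ((-1 : ℝ) ^ (m₁ + a) * G n₁ m₁ a)) := by
    apply Summable.mul_left
    apply summable_of_ne_finset_zero (s := Finset.range (n₁ + 2))
    intro a ha
    simp only [Finset.mem_range, not_lt] at ha
    rw [G0 (by omega) (by omega) (by omega)]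
    ring
  have hsumB : Summable (fun a : ℕ =>
      ((if n₁ = a then (1 : ℝ) else 0) * (if m₁ = a then 1 else 0) * (-1) ^ (m₁ + a))
        * S1 n₂ m₂) := by
    apply summable_of_ne_finset_zero (s := ({n₁} : Finset ℕ))
    intro a ha
    simp only [Finset.mem_singleton] at ha
    rw [if_neg (fun h => ha h.symm)]
    ring
  rw [Summable.tsum_add hsumA hsumB, tsum_mul_left, lemA,
    tsum_eq_single n₁ (by
      intro a ha
      rw [if_neg (fun h => ha h.symm)]
      ring)]
  rw [if_pos rfl, one_mul]
  rw [show (if m₁ = n₁ then (1 : ℝ) else 0) * (-1) ^ (m₁ + n₁)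
      = (if m₁ = n₁ then (1 : ℝ) else 0) by rw [mul_comm, sign_delta m₁ n₁]]
  exact final_step m₁ m₂ n₁ n₂
end
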